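/- arXiv:2102.09500 — 9 statements merged into one kernel-verified Lean document; each statement's English description precedes it below -/
import Mathlib

section
/- Let α_1, α_2, … be a nonnegative summable sequence of reals and let σ_k denote the k-th elementary symmetric function of the α_j (defined as the sum over all k-element subsets of the products, which converges since Σα_j < ∞). Then the sequence (k! · σ_k)_{k≥0} is log-concave: (k! σ_k)^2 ≥ (k-1)! σ_{k-1} · (k+1)! σ_{k+1} for all k ≥ 1. -/
/-! Multiplying a polynomial with nonnegative coefficients `e_k` by `1 + a X`, `a ≥ 0`, preserves
the inequalities `(k + 2) e_k e_{k+2} ≤ (k + 1) e_{k+1}²`, i.e. the log-concavity of `k! e_k`,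
provided the `e_k` have no internal zeros: the constant, linear and quadratic parts in `a` of the new
inequality are the old inequality at `k + 1`, an inequality between `e_k e_{k+3}` and
`e_{k+1} e_{k+2}` obtained by multiplying two old ones, and a weakening of the old one at `k`.
Starting from the empty product, this gives the inequalities for the elementary symmetric functions
of every finite family of nonnegative numbers, and they pass to the limit over the finite subsets
of `ℕ`. -/

open Filter Topology

namespace Multiset

section CommSemiring

variable {R : Type*} [CommSemiring R]

theorem esymm_zero_right (s : Multiset R) : s.esymm 0 = 1 := by
  simp [esymm]

theorem esymm_zero_left_succ (n : ℕ) : (0 : Multiset R).esymm (n + 1) = 0 := by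
  simp [esymm, powersetCard_zero_right]

theorem esymm_cons_succ (a : R) (s : Multiset R) (n : ℕ) :
    (a ::ₘ s).esymm (n + 1) = s.esymm (n + 1) + a * s.esymm n := by
  simp [esymm, map_map, sum_map_mul_left]

variable [PartialOrder R] [IsOrderedRing R]

theorem esymm_nonneg {s : Multiset R} (hs : ∀ x ∈ s, 0 ≤ x) (n : ℕ) : 0 ≤ s.esymm n :=
  sum_nonneg fun _ hy => by
    obtain ⟨t, ht, rfl⟩ := mem_map.1 hy
    exact prod_nonneg fun x hx => hs x (mem_of_le (mem_powersetCard.1 ht).1 hx)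

theorem esymm_succ_eq_zero {s : Multiset R} (hs : ∀ x ∈ s, 0 ≤ x) {n : ℕ}
    (h : s.esymm n = 0) : s.esymm (n + 1) = 0 := by
  induction s using Multiset.induction_on generalizing n with
  | empty => exact esymm_zero_left_succ n
  | cons a s ih =>
    have hs' : ∀ x ∈ s, 0 ≤ x := fun x hx => hs x (mem_cons_of_mem hx)
    cases n with
    | zero => rw [esymm_zero_right] at h; exact eq_zero_of_zero_eq_one h.symm _
    | succ m =>
      rw [esymm_cons_succ] at h ⊢
      obtain ⟨h₁, -⟩ := (add_eq_zero_iff_of_nonneg (esymm_nonneg hs' _)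
        (mul_nonneg (hs a (mem_cons_self a s)) (esymm_nonneg hs' _))).1 h
      rw [ih hs' h₁, h₁, mul_zero, add_zero]

end CommSemiring

section OrderedRing

variable {R : Type*} [CommRing R] [LinearOrder R] [IsStrictOrderedRing R]

theorem newton_outer_le_inner {r a b c d : R} (hr : 0 ≤ r) (hb : 0 ≤ b) (hc : 0 ≤ c)
    (hd : 0 ≤ d) (hbcd : b * c = 0 → d = 0)
    (h₁ : (r + 2) * a * c ≤ (r + 1) * b ^ 2) (h₂ : (r + 3) * b * d ≤ (r + 2) * c ^ 2) :
    (r + 3) * a * d ≤ (r + 1) * (b * c) := by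
  rcases (mul_nonneg hb hc).eq_or_lt' with hbc | hbc
  · rw [hbcd hbc, hbc]; simp
  refine le_of_mul_le_mul_right ?_ (mul_pos (by positivity : (0 : R) < r + 2) hbc)
  linear_combination mul_le_mul h₁ h₂ (by positivity) (by positivity)

theorem esymm_newton {s : Multiset R} (hs : ∀ x ∈ s, 0 ≤ x) (k : ℕ) :
    ((k : R) + 2) * s.esymm k * s.esymm (k + 2) ≤ ((k : R) + 1) * s.esymm (k + 1) ^ 2 := by
  induction s using Multiset.induction_on generalizing k with
  | empty =>
    rw [esymm_zero_left_succ, mul_zero]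
    positivity
  | cons a s ih =>
    have hs' : ∀ x ∈ s, 0 ≤ x := fun x hx => hs x (mem_cons_of_mem hx)
    have ha : 0 ≤ a := hs a (mem_cons_self a s)
    have he := esymm_nonneg hs'
    cases k with
    | zero =>
      have h₀ := ih hs' 0
      simp only [esymm_cons_succ, esymm_zero_right, Nat.cast_zero] at h₀ ⊢
      linear_combination h₀ + sq_nonneg a
    | succ m =>
      have h₁ := ih hs' m
      have h₂ := ih hs' (m + 1)
      push_cast at h₁ h₂ ⊢
      have hzero : s.esymm (m + 1) * s.esymm (m + 2) = 0 → s.esymm (m + 3) = 0 := fun h =>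
        esymm_succ_eq_zero hs' ((mul_eq_zero.1 h).elim (esymm_succ_eq_zero hs') id)
      have hcross : ((m : R) + 3) * s.esymm m * s.esymm (m + 3) ≤
          (m + 1) * (s.esymm (m + 1) * s.esymm (m + 2)) :=
        newton_outer_le_inner m.cast_nonneg (he _) (he _) (he _) hzero h₁
          (by linear_combination h₂)
      have hsq : ((m : R) + 3) * s.esymm m * s.esymm (m + 2) ≤
          (m + 2) * s.esymm (m + 1) ^ 2 := by
        nlinarith [sq_nonneg (s.esymm (m + 1))]
      rw [esymm_cons_succ, esymm_cons_succ, esymm_cons_succ]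
      linear_combination h₂ + mul_le_mul_of_nonneg_left hcross ha +
        mul_le_mul_of_nonneg_left hsq (sq_nonneg a)

end OrderedRing

end Multiset

theorem tendsto_esymm_map_val_atTop {ι R : Type*} [CommSemiring R] [TopologicalSpace R]
    {f : ι → R} {k : ℕ} {a : R}
    (h : HasSum (fun t : {t : Finset ι // t.card = k} => ∏ i ∈ t.1, f i) a) :
    Tendsto (fun s : Finset ι => (s.val.map f).esymm k) atTop (𝓝 a) := by
  have hsub : Tendsto (fun s : Finset ι => (s.powersetCard k).subtype (·.card = k))
      atTop atTop :=
    tendsto_atTop_finset_of_monotone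
      (fun _ _ hst => Finset.subtype_mono (Finset.powersetCard_mono hst))
      fun t => ⟨t.1, by simp [t.2]⟩
  refine (h.comp hsub).congr fun s => ?_
  rw [Function.comp_apply, Finset.esymm_map_val]
  exact Finset.sum_subtype_of_mem (fun t => ∏ i ∈ t, f i)
    fun t ht => (Finset.mem_powersetCard.1 ht).2

open Nat in
theorem factorial_mul_sq_le_of_newton {R : Type*} [CommRing R] [LinearOrder R]
    [IsStrictOrderedRing R] {a b c : R} {m : ℕ} (h : ((m : R) + 2) * a * c ≤ (m + 1) * b ^ 2) :
    (m ! : R) * a * ((m + 2)! * c) ≤ ((m + 1)! * b) ^ 2 :=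
  calc (m ! : R) * a * ((m + 2)! * c) = ((m + 1) * (m ! : R) ^ 2) * ((m + 2) * a * c) := by
        push_cast [Nat.factorial_succ]; ring
    _ ≤ ((m + 1) * (m ! : R) ^ 2) * ((m + 1) * b ^ 2) := by gcongr
    _ = ((m + 1)! * b) ^ 2 := by push_cast [Nat.factorial_succ]; ring

theorem stmt1_general (α : ℕ → ℝ) (hnonneg : ∀ j, 0 ≤ α j)
    (σ : ℕ → ℝ)
    (hσsum : ∀ k : ℕ, Summable (fun s : {s : Finset ℕ // s.card = k} => ∏ i ∈ s.1, α i))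
    (hσ : ∀ k : ℕ, σ k = ∑' s : {s : Finset ℕ // s.card = k}, ∏ i ∈ s.1, α i) :
    ∀ k : ℕ, 1 ≤ k →
      ((k - 1).factorial : ℝ) * σ (k - 1) * (((k + 1).factorial : ℝ) * σ (k + 1)) ≤
        ((k.factorial : ℝ) * σ k) ^ 2 := by
  have hlim (k : ℕ) : Tendsto (fun s : Finset ℕ => (s.val.map α).esymm k) atTop (𝓝 (σ k)) :=
    hσ k ▸ tendsto_esymm_map_val_atTop (hσsum k).hasSum
  have hnewton (m : ℕ) : ((m : ℝ) + 2) * σ m * σ (m + 2) ≤ ((m : ℝ) + 1) * σ (m + 1) ^ 2 :=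
    le_of_tendsto_of_tendsto' ((tendsto_const_nhds.mul (hlim m)).mul (hlim (m + 2)))
      (tendsto_const_nhds.mul ((hlim (m + 1)).pow 2))
      fun s => Multiset.esymm_newton (Multiset.forall_mem_map_iff.2 fun i _ => hnonneg i) m
  rintro (_ | m) hm
  · omega
  · simpa only [Nat.add_sub_cancel] using factorial_mul_sq_le_of_newton (hnewton m)

/-- For a nonnegative summable sequence `α`, with `σ k` the `k`-th elementary symmetric
function (sum over all `k`-element finite subsets of `ℕ` of the products, assumed
summable), the sequence `(k! * σ k)` is log-concave. -/
theorem stmt1 (α : ℕ → ℝ) (hnonneg : ∀ j, 0 ≤ α j) (hsum : Summable α)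
    (σ : ℕ → ℝ)
    (hσsum : ∀ k : ℕ, Summable (fun s : {s : Finset ℕ // s.card = k} => ∏ i ∈ s.1, α i))
    (hσ : ∀ k : ℕ, σ k = ∑' s : {s : Finset ℕ // s.card = k}, ∏ i ∈ s.1, α i) :
    ∀ k : ℕ, 1 ≤ k →
      ((k - 1).factorial : ℝ) * σ (k - 1) * (((k + 1).factorial : ℝ) * σ (k + 1)) ≤
        ((k.factorial : ℝ) * σ k) ^ 2 :=
  stmt1_general α hnonneg σ hσsum hσ
end

section
/- Walkup's theorem: if (a_n)_{n≥0} and (b_n)_{n≥0} are log-concave sequences of nonnegative reals, then their binomial convolution c_n = Σ_{k=0}^n C(n,k) a_k b_{n-k} is also log-concave. -/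
open scoped BigOperators
open Finset


noncomputable def extSeq (a : ℕ → ℝ) : ℤ → ℝ := fun i => if 0 ≤ i then a i.toNat else 0

noncomputable def chz (n : ℕ) : ℤ → ℝ := fun i => if 0 ≤ i then (n.choose i.toNat : ℝ) else 0

theorem chz_nonneg (n : ℕ) (i : ℤ) : 0 ≤ chz n i := by
  unfold chz; split <;> positivity

theorem chz_neg (n : ℕ) (i : ℤ) (h : i < 0) : chz n i = 0 := by
  unfold chz; rw [if_neg (by omega)]

theorem chz_big (n : ℕ) (i : ℤ) (h : (n:ℤ) < i) : chz n i = 0 := by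
  unfold chz; split
  · norm_cast; rw [Nat.choose_eq_zero_iff]; omega
  · rfl

theorem chz_ofNat (n k : ℕ) : chz n (k:ℤ) = (n.choose k : ℝ) := by
  unfold chz; rw [if_pos (by omega)]; norm_num

theorem chz_pascal (n : ℕ) (i : ℤ) : chz (n+1) i = chz n i + chz n (i-1) := by
  rcases lt_trichotomy i 0 with h | h | h
  · rw [chz_neg _ _ h, chz_neg _ _ h, chz_neg _ _ (by omega)]; ring
  · subst h; simp [chz, chz_neg]
  · obtain ⟨k, rfl⟩ : ∃ k : ℕ, i = (k:ℤ) + 1 := ⟨(i-1).toNat, by omega⟩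
    rw [show (k:ℤ) + 1 - 1 = (k:ℤ) by ring, chz_ofNat,
      show ((k:ℤ)+1) = ((k+1:ℕ):ℤ) by push_cast; ring, chz_ofNat, chz_ofNat,
      Nat.choose_succ_succ (n) k]
    push_cast; ring

theorem extSeq_nonneg (a : ℕ → ℝ) (ha0 : ∀ n, 0 ≤ a n) (i : ℤ) : 0 ≤ extSeq a i := by
  unfold extSeq; split
  · exact ha0 _
  · exact le_refl 0

theorem extSeq_zero (a : ℕ → ℝ) (i : ℤ) (h : i < 0) : extSeq a i = 0 := by
  unfold extSeq; rw [if_neg (by omega)]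

theorem extSeq_ofNat (a : ℕ → ℝ) (k : ℕ) : extSeq a (k:ℤ) = a k := by
  unfold extSeq; rw [if_pos (by omega)]; norm_num

-- one-step rearrangement in ℕ
theorem stepNat (a : ℕ → ℝ)
    (hasupp : ∀ m n k : ℕ, m ≤ n → n ≤ k → 0 < a m → 0 < a k → 0 < a n)
    (halc : ∀ n : ℕ, 1 ≤ n → a (n - 1) * a (n + 1) ≤ a n ^ 2)
    (k : ℕ) : ∀ l : ℕ, k ≤ l → 0 < a k → 0 < a (l+1) → a k * a (l+1) ≤ a (k+1) * a l := by
  intro l hl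
  induction l, hl using Nat.le_induction with
  | base => intro h1 h2; rw [mul_comm]
  | succ l hl ih =>
      intro hk hl2
      have hal1 : 0 < a (l+1) := hasupp k (l+1) (l+2) (by omega) (by omega) hk hl2
      have hal : 0 < a l := hasupp k l (l+2) hl (by omega) hk hl2
      have hlc := halc (l+1) (by omega)
      simp only [Nat.add_sub_cancel] at hlc
      have ih' := ih hk hal1
      -- a k * a (l+2) ≤ a (k+1) * a (l+1)
      have key : (a k * a (l+2)) * (a l * a (l+1)) ≤ (a (k+1) * a (l+1)) * (a l * a (l+1)) := by
        calc (a k * a (l+2)) * (a l * a (l+1)) = (a k * a (l+1)) * (a l * a (l+2)) := by ring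
        _ ≤ (a (k+1) * a l) * (a (l+1) ^ 2) := by
            have hk1 : 0 < a (k+1) := hasupp k (k+1) (l+2) (by omega) (by omega) hk hl2
            exact mul_le_mul ih' hlc (mul_nonneg hal.le hl2.le) (mul_nonneg hk1.le hal.le)
        _ = (a (k+1) * a (l+1)) * (a l * a (l+1)) := by ring
      exact le_of_mul_le_mul_right key (by positivity)

theorem rearrNat (a : ℕ → ℝ) (ha0 : ∀ n, 0 ≤ a n)
    (hasupp : ∀ m n k : ℕ, m ≤ n → n ≤ k → 0 < a m → 0 < a k → 0 < a n)
    (halc : ∀ n : ℕ, 1 ≤ n → a (n - 1) * a (n + 1) ≤ a n ^ 2) :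
    ∀ (d i i' j' j : ℕ), i' - i = d → i ≤ i' → i' ≤ j' → j' ≤ j → i + j = i' + j' →
      a i * a j ≤ a i' * a j' := by
  intro d
  induction d with
  | zero =>
      intro i i' j' j hd h1 h2 h3 hs
      have : i = i' := by omega
      subst this
      have : j = j' := by omega
      subst this
      exact le_refl _
  | succ d ih =>
      intro i i' j' j hd h1 h2 h3 hs
      have hij : i < i' := by omega
      have hjj : j' < j := by omega
      rcases eq_or_lt_of_le (ha0 i) with hz | hp
      · rw [← hz, zero_mul]; exact mul_nonneg (ha0 _) (ha0 _)
      rcases eq_or_lt_of_le (ha0 j) with hz | hp2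
      · rw [← hz, mul_zero]; exact mul_nonneg (ha0 _) (ha0 _)
      have hij2 : i + 1 ≤ j - 1 := by omega
      have hstep : a i * a j ≤ a (i+1) * a (j-1) := by
        have := stepNat a hasupp halc i (j-1) (by omega) hp (by rwa [Nat.sub_add_cancel (by omega)])
        rwa [Nat.sub_add_cancel (by omega)] at this
      refine le_trans hstep (ih (i+1) i' j' (j-1) (by omega) (by omega) h2 (by omega) (by omega))

theorem rearrZ (a : ℕ → ℝ) (ha0 : ∀ n, 0 ≤ a n)
    (hasupp : ∀ m n k : ℕ, m ≤ n → n ≤ k → 0 < a m → 0 < a k → 0 < a n)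
    (halc : ∀ n : ℕ, 1 ≤ n → a (n - 1) * a (n + 1) ≤ a n ^ 2)
    (i i' j' j : ℤ) (h1 : i ≤ i') (h2 : i' ≤ j') (h3 : j' ≤ j) (hs : i + j = i' + j') :
    extSeq a i * extSeq a j ≤ extSeq a i' * extSeq a j' := by
  have hnn : 0 ≤ extSeq a i' * extSeq a j' :=
    mul_nonneg (extSeq_nonneg a ha0 _) (extSeq_nonneg a ha0 _)
  rcases lt_or_ge i 0 with hi | hi
  · rw [extSeq_zero a i hi, zero_mul]; exact hnn
  rcases lt_or_ge j 0 with hj | hj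
  · rw [extSeq_zero a j hj, mul_zero]; exact hnn
  have hi' : 0 ≤ i' := le_trans hi h1
  have hj' : 0 ≤ j' := le_trans hi' h2
  obtain ⟨ni, rfl⟩ : ∃ k : ℕ, i = (k:ℤ) := ⟨i.toNat, by omega⟩
  obtain ⟨nj, rfl⟩ : ∃ k : ℕ, j = (k:ℤ) := ⟨j.toNat, by omega⟩
  obtain ⟨ni', rfl⟩ : ∃ k : ℕ, i' = (k:ℤ) := ⟨i'.toNat, by omega⟩
  obtain ⟨nj', rfl⟩ : ∃ k : ℕ, j' = (k:ℤ) := ⟨j'.toNat, by omega⟩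
  rw [extSeq_ofNat, extSeq_ofNat, extSeq_ofNat, extSeq_ofNat]
  exact rearrNat a ha0 hasupp halc (ni' - ni) ni ni' nj' nj rfl (by omega) (by omega) (by omega) (by omega)

theorem myIdA (m c : ℕ) : (m+1) * m.choose c = (m+1).choose c * (m + 1 - c) := by
  have h1 := Nat.add_one_mul_choose_eq m c
  have h2 := Nat.choose_succ_right_eq (m+1) c
  omega
theorem natMinorA (m j k : ℕ) (hjk : j ≤ k) :
    (m+1).choose j * m.choose k ≤ m.choose j * (m+1).choose k := by
  have h : (m+1) * ((m+1).choose j * m.choose k) ≤ (m+1) * (m.choose j * (m+1).choose k) := by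
    calc (m+1) * ((m+1).choose j * m.choose k) = (m+1).choose j * ((m+1) * m.choose k) := by ring
    _ = (m+1).choose j * ((m+1).choose k * (m+1-k)) := by rw [myIdA]
    _ ≤ (m+1).choose j * ((m+1).choose k * (m+1-j)) := by
        exact Nat.mul_le_mul_left _ (Nat.mul_le_mul_left _ (by omega))
    _ = m.choose j * ((m+1) * (m+1).choose k) := by rw [Nat.mul_comm ((m+1).choose k) (m+1-j), ← Nat.mul_assoc, ← myIdA]; ring
    _ = (m+1) * (m.choose j * (m+1).choose k) := by ring
  exact Nat.le_of_mul_le_mul_left h (by omega)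
theorem myIdB (m y' : ℕ) : (m+1) * m.choose y' = (m+1).choose (y'+1) * (y'+1) := by
  have := Nat.add_one_mul_choose_eq m y'
  simpa [Nat.succ_eq_add_one] using this
theorem natMinorB (m x y' : ℕ) (h : y' ≤ x) :
    m.choose y' * (m+1).choose (x+1) ≤ m.choose x * (m+1).choose (y'+1) := by
  have h : (m+1) * (m.choose y' * (m+1).choose (x+1)) ≤ (m+1) * (m.choose x * (m+1).choose (y'+1)) := by
    calc (m+1) * (m.choose y' * (m+1).choose (x+1)) = ((m+1) * m.choose y') * (m+1).choose (x+1) := by ring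
    _ = (m+1).choose (y'+1) * (y'+1) * (m+1).choose (x+1) := by rw [myIdB]
    _ ≤ (m+1).choose (y'+1) * (x+1) * (m+1).choose (x+1) := by
        exact Nat.mul_le_mul_right _ (Nat.mul_le_mul_left _ (by omega))
    _ = ((m+1) * m.choose x) * (m+1).choose (y'+1) := by rw [myIdB]; ring
    _ = (m+1) * (m.choose x * (m+1).choose (y'+1)) := by ring
  exact Nat.le_of_mul_le_mul_left h (by omega)

theorem minorAZ (n : ℕ) (hn : 1 ≤ n) (p s : ℤ) (hp : 0 ≤ p) (h2 : 2*p ≤ s + 1) :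
    chz (n-1) (s-p) * chz n (p-1) ≤ chz (n-1) (p-1) * chz n (s-p) := by
  rcases eq_or_lt_of_le hp with hp0 | hp1
  · rw [chz_neg n (p-1) (by omega), mul_zero]
    exact mul_nonneg (chz_nonneg _ _) (chz_nonneg _ _)
  · have hj : (0:ℤ) ≤ p - 1 := by omega
    have hk : p - 1 ≤ s - p := by omega
    obtain ⟨j, hjj⟩ : ∃ j : ℕ, p - 1 = (j:ℤ) := ⟨(p-1).toNat, by omega⟩
    obtain ⟨k, hkk⟩ : ∃ k : ℕ, s - p = (k:ℤ) := ⟨(s-p).toNat, by omega⟩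
    rw [hjj, hkk, chz_ofNat, chz_ofNat, chz_ofNat, chz_ofNat]
    rw [mul_comm (((n-1).choose k : ℝ)) _, mul_comm (((n-1).choose j : ℝ)) _]
    have := natMinorA (n-1) j k (by omega)
    rw [show n - 1 + 1 = n from by omega] at this
    calc (n.choose j : ℝ) * ((n-1).choose k) = ((n.choose j * (n-1).choose k : ℕ) : ℝ) := by push_cast; ring
    _ ≤ (((n-1).choose j * n.choose k : ℕ) : ℝ) := by exact_mod_cast this
    _ = (n.choose k : ℝ) * ((n-1).choose j) := by push_cast; ring

theorem minorBZ (n : ℕ) (hn : 1 ≤ n) (q s : ℤ) (hq : 1 ≤ q) (h2 : 2*q ≤ s + 1) :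
    chz (n-1) (q-1) * chz n (s-q+1) ≤ chz (n-1) (s-q) * chz n q := by
  obtain ⟨y, hy⟩ : ∃ y : ℕ, q - 1 = (y:ℤ) := ⟨(q-1).toNat, by omega⟩
  obtain ⟨x, hx⟩ : ∃ x : ℕ, s - q = (x:ℤ) := ⟨(s-q).toNat, by omega⟩
  have hyx : y ≤ x := by omega
  have h3 : s - q + 1 = ((x+1:ℕ):ℤ) := by push_cast; omega
  have h4 : q = ((y+1:ℕ):ℤ) := by push_cast; omega
  rw [h3, hx, hy, h4, chz_ofNat, chz_ofNat, chz_ofNat, chz_ofNat]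
  have := natMinorB (n-1) x y hyx
  rw [show n - 1 + 1 = n from by omega] at this
  calc ((n-1).choose y : ℝ) * (n.choose (x+1)) = (((n-1).choose y * n.choose (x+1) : ℕ) : ℝ) := by push_cast; ring
  _ ≤ (((n-1).choose x * n.choose (y+1) : ℕ) : ℝ) := by exact_mod_cast this
  _ = ((n-1).choose x : ℝ) * (n.choose (y+1)) := by push_cast; ring


theorem myIccTop (g : ℤ → ℝ) (lo hi : ℤ) (h : lo ≤ hi + 1) :
    ∑ i ∈ Icc lo (hi + 1), g i = (∑ i ∈ Icc lo hi, g i) + g (hi + 1) := by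
  have : Icc lo (hi+1) = insert (hi+1) (Icc lo hi) := by ext x; simp [mem_Icc]; omega
  rw [this, Finset.sum_insert (by simp)]
  ring

theorem myIccBot (g : ℤ → ℝ) (lo hi : ℤ) (h : lo ≤ hi + 1) :
    ∑ i ∈ Icc lo (hi + 1), g i = g lo + ∑ i ∈ Icc (lo + 1) (hi + 1), g i := by
  have : Icc lo (hi+1) = insert lo (Icc (lo+1) (hi+1)) := by ext x; simp [mem_Icc]; omega
  rw [this, Finset.sum_insert (by simp [mem_Icc])]

theorem myIccTel (g : ℤ → ℝ) (lo : ℤ) : ∀ (hi : ℤ), lo - 1 ≤ hi →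
    ∑ i ∈ Icc lo hi, (g i - g (i-1)) = g hi - g (lo - 1) := by
  refine Int.le_induction ?_ ?_
  · rw [show Icc lo (lo-1) = ∅ by rw [Finset.Icc_eq_empty_iff]; omega]; simp
  · intro hi h ih
    rw [myIccTop _ _ _ (by omega), ih]; ring


theorem castSum (s : ℕ) (F : ℤ → ℝ) :
    ∑ i ∈ range (s+1), F (i:ℤ) = ∑ i ∈ Icc (0:ℤ) (s:ℤ), F i := by
  refine Finset.sum_nbij' (fun i => (i:ℤ)) (fun j => j.toNat) ?_ ?_ ?_ ?_ ?_
  · intro i hi; simp only [mem_range] at hi; simp only [mem_Icc]; omega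
  · intro j hj; simp only [mem_Icc] at hj; simp only [mem_range]; omega
  · intro i _; simp
  · intro j hj; simp only [mem_Icc] at hj; simp; omega
  · intro i _; rfl

-- indicator-restricted sum over Icc
theorem indSum (a b c d : ℤ) (F : ℤ → ℝ) :
    ∑ i ∈ Icc a b, (if c ≤ i ∧ i ≤ d then (1:ℝ) else 0) * F i
      = ∑ i ∈ Icc (max a c) (min b d), F i := by
  have : ∀ i : ℤ, (if c ≤ i ∧ i ≤ d then (1:ℝ) else 0) * F i
      = (if c ≤ i ∧ i ≤ d then F i else 0) := by
    intro i; split <;> simp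
  simp only [this]
  rw [Finset.sum_ite, Finset.sum_const_zero, add_zero]
  congr 1
  ext x
  simp only [mem_filter, mem_Icc]
  constructor
  · rintro ⟨⟨h1, h2⟩, h3, h4⟩; omega
  · rintro ⟨h1, h2⟩; omega


theorem layer (w : ℤ → ℝ) (s lo m : ℤ)
    (hsm : s ≤ 2*m + 1) (hsym : ∀ j, w (s - j) = w j)
    (hzero : ∀ j, j < lo → w j = 0) (j : ℤ) :
    w j = ∑ q ∈ Icc lo m, (w q - w (q-1)) * (if q ≤ j ∧ j ≤ s - q then 1 else 0) := by
  have hind : ∀ q : ℤ, (if q ≤ j ∧ j ≤ s - q then (1:ℝ) else 0)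
      = (if q ≤ min j (s - j) then 1 else 0) := by
    intro q
    congr 1
    simp only [eq_iff_iff, le_min_iff]
    omega
  simp only [hind]
  have hsplit : ∀ q : ℤ, (w q - w (q-1)) * (if q ≤ min j (s-j) then (1:ℝ) else 0)
      = (if q ≤ min j (s-j) then (w q - w (q-1)) else 0) := by
    intro q; split <;> simp
  simp only [hsplit]
  rw [Finset.sum_ite, Finset.sum_const_zero, add_zero]
  have hfil : Finset.filter (fun q => q ≤ min j (s-j)) (Icc lo m) = Icc lo (min m (min j (s-j))) := by
    ext x; simp only [mem_filter, mem_Icc, le_min_iff]; omega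
  rw [hfil]
  set c := min j (s - j) with hc
  rcases le_or_gt lo c with hlo | hlo
  · have hcm : c ≤ m := by omega
    rw [show min m c = c by omega]
    rw [myIccTel w lo c (by omega), hzero (lo-1) (by omega), sub_zero]
    rcases le_or_gt j (s - j) with h | h
    · rw [show c = j by omega]
    · rw [show c = s - j by omega, hsym]
  · rw [show Icc lo (min m c) = ∅ by rw [Finset.Icc_eq_empty_iff]; omega, Finset.sum_empty]
    rcases le_or_gt j (s - j) with h | h
    · exact hzero j (by omega)
    · rw [← hsym j]; exact hzero (s-j) (by omega)

theorem indSum2 (a b c d e f : ℤ) (F : ℤ → ℝ) :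
    ∑ i ∈ Icc a b, (if c ≤ i ∧ i ≤ d then (1:ℝ) else 0) *
      ((if e ≤ i ∧ i ≤ f then (1:ℝ) else 0) * F i)
      = ∑ i ∈ Icc (max (max a c) e) (min (min b d) f), F i := by
  have hx : ∀ i : ℤ, (if c ≤ i ∧ i ≤ d then (1:ℝ) else 0) *
      ((if e ≤ i ∧ i ≤ f then (1:ℝ) else 0) * F i)
      = (if (c ≤ i ∧ i ≤ d) ∧ (e ≤ i ∧ i ≤ f) then F i else 0) := by
    intro i
    by_cases h1 : c ≤ i ∧ i ≤ d <;> by_cases h2 : e ≤ i ∧ i ≤ f <;>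
      simp [h1, h2]
  simp only [hx]
  rw [Finset.sum_ite, Finset.sum_const_zero, add_zero]
  congr 1
  ext x
  simp only [mem_filter, mem_Icc, max_le_iff, le_max_iff, le_min_iff, min_le_iff]
  omega

-- pointwise Pascal identity
theorem pointId (n s : ℕ) (hn : 1 ≤ n) (i : ℤ) :
    chz n i * chz n ((s:ℤ)-i) - chz (n-1) i * chz (n+1) ((s:ℤ)-i)
      = chz (n-1) (i-1) * chz n ((s:ℤ)-1-(i-1)) - chz (n-1) i * chz n ((s:ℤ)-1-i) := by
  have e1 : chz n i = chz (n-1) i + chz (n-1) (i-1) := by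
    have := chz_pascal (n-1) i
    rwa [show n - 1 + 1 = n from by omega] at this
  have e2 : chz (n+1) ((s:ℤ)-i) = chz n ((s:ℤ)-i) + chz n ((s:ℤ)-i-1) := chz_pascal n _
  rw [e1, e2, show (s:ℤ)-1-(i-1) = (s:ℤ)-i by ring, show (s:ℤ)-1-i = (s:ℤ)-i-1 by ring]
  ring

theorem coreK (n s : ℕ) (hn : 1 ≤ n) (p q : ℤ) (hp0 : 0 ≤ p) (hpm : 2*p ≤ (s:ℤ))
    (hqm : 2*q ≤ (s:ℤ)) :
    ∑ i ∈ Icc (0:ℤ) (s:ℤ), (if p ≤ i ∧ i ≤ (s:ℤ) - p then (1:ℝ) else 0) *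
        ((if q ≤ i+1 ∧ i+1 ≤ (s:ℤ) - q then (1:ℝ) else 0) *
          (chz (n-1) i * chz (n+1) ((s:ℤ)-i)))
      ≤ ∑ i ∈ Icc (0:ℤ) (s:ℤ), (if p ≤ i ∧ i ≤ (s:ℤ) - p then (1:ℝ) else 0) *
        ((if q ≤ i ∧ i ≤ (s:ℤ) - q then (1:ℝ) else 0) *
          (chz n i * chz n ((s:ℤ)-i))) := by
  have hshift : ∀ i : ℤ, (if q ≤ i+1 ∧ i+1 ≤ (s:ℤ) - q then (1:ℝ) else 0)
      = (if q-1 ≤ i ∧ i ≤ (s:ℤ) - q - 1 then (1:ℝ) else 0) := by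
    intro i; congr 1; simp only [eq_iff_iff]; omega
  simp only [hshift]
  rw [indSum2, indSum2]
  rw [show max (max 0 p) (q-1) = max p (q-1) by omega,
      show min (min (s:ℤ) ((s:ℤ)-p)) ((s:ℤ)-q-1) = min ((s:ℤ)-p) ((s:ℤ)-q-1) by omega,
      show max (max 0 p) q = max p q by omega,
      show min (min (s:ℤ) ((s:ℤ)-p)) ((s:ℤ)-q) = (s:ℤ) - max p q by omega]
  set S : ℤ := (s:ℤ) with hS
  have hQnn : ∀ i : ℤ, 0 ≤ chz (n-1) i * chz (n+1) (S-i) :=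
    fun i => mul_nonneg (chz_nonneg _ _) (chz_nonneg _ _)
  -- telescoping sum identity over any Icc lo (S - lo) with lo ≤ S - lo + 1
  have tel : ∀ lo : ℤ, 2*lo ≤ S + 1 →
      ∑ i ∈ Icc lo (S - lo), (chz n i * chz n (S-i) - chz (n-1) i * chz (n+1) (S-i))
        = chz (n-1) (lo-1) * chz n (S-1-(lo-1)) - chz (n-1) (S-lo) * chz n (S-1-(S-lo)) := by
    intro lo hlo
    have := myIccTel (fun x => chz (n-1) x * chz n (S-1-x)) lo (S - lo) (by omega)
    calc ∑ i ∈ Icc lo (S - lo), (chz n i * chz n (S-i) - chz (n-1) i * chz (n+1) (S-i))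
        = ∑ i ∈ Icc lo (S - lo), (0 - ((fun x => chz (n-1) x * chz n (S-1-x)) i
            - (fun x => chz (n-1) x * chz n (S-1-x)) (i-1))) := by
          apply Finset.sum_congr rfl
          intro i _
          have := pointId n s hn i
          rw [← hS] at this
          simp only
          linarith [this]
    _ = 0 - ((chz (n-1) (S-lo) * chz n (S-1-(S-lo))) - chz (n-1) (lo-1) * chz n (S-1-(lo-1))) := by
          rw [Finset.sum_sub_distrib, Finset.sum_const_zero, this]
    _ = _ := by ring
  rcases le_or_gt q p with hqp | hpq
  · -- case q ≤ p
    rw [show max p (q-1) = p by omega, show max p q = p by omega]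
    have hsub : Icc p (min (S-p) (S-q-1)) ⊆ Icc p (S-p) := by
      apply Finset.Icc_subset_Icc (le_refl _) (by omega)
    have step1 : ∑ i ∈ Icc p (min (S-p) (S-q-1)), chz (n-1) i * chz (n+1) (S-i)
        ≤ ∑ i ∈ Icc p (S-p), chz (n-1) i * chz (n+1) (S-i) :=
      Finset.sum_le_sum_of_subset_of_nonneg hsub (fun i _ _ => hQnn i)
    refine le_trans step1 ?_
    have htel := tel p (by omega)
    have hA := minorAZ n hn p S hp0 (by omega)
    have expand : ∑ i ∈ Icc p (S-p), chz n i * chz n (S-i)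
        - ∑ i ∈ Icc p (S-p), chz (n-1) i * chz (n+1) (S-i)
        = chz (n-1) (p-1) * chz n (S-p) - chz (n-1) (S-p) * chz n (p-1) := by
      rw [← Finset.sum_sub_distrib, htel]
      congr 1 <;> congr 1 <;> ring_nf
    linarith [expand, hA]
  · -- case p < q : q ≥ 1
    have hq1 : 1 ≤ q := by omega
    rw [show max p (q-1) = q-1 by omega, show max p q = q by omega,
        show min (S-p) (S-q-1) = S-q-1 by omega]
    have hbot := myIccBot (fun i => chz (n-1) i * chz (n+1) (S-i)) (q-1) (S-q-2) (by omega)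
    rw [show S-q-2+1 = S-q-1 by ring, show q-1+1 = q by ring] at hbot
    have htop := myIccTop (fun i => chz (n-1) i * chz (n+1) (S-i)) q (S-q-1) (by omega)
    rw [show S-q-1+1 = S-q by ring] at htop
    have htel := tel q (by omega)
    have hB := minorBZ n hn q S hq1 (by omega)
    -- assemble
    have e1 : chz (n-1) (q-1) * chz n (S-1-(q-1)) - chz (n-1) (q-1) * chz (n+1) (S-(q-1))
        = - (chz (n-1) (q-1) * chz n (S-q+1)) := by
      have := chz_pascal n (S-(q-1))
      rw [show S-(q-1)-1 = S-1-(q-1) by ring] at this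
      rw [this, show S-(q-1) = S-q+1 by ring]
      ring
    have e2 : chz (n-1) (S-q) * chz (n+1) (S-(S-q)) - chz (n-1) (S-q) * chz n (S-1-(S-q))
        = chz (n-1) (S-q) * chz n q := by
      have := chz_pascal n (S-(S-q))
      rw [show S-(S-q)-1 = S-1-(S-q) by ring, show S-(S-q) = q by ring] at this
      rw [show S-(S-q) = q by ring, this]
      ring
    have hsum : ∑ i ∈ Icc q (S-q), chz n i * chz n (S-i)
        - ∑ i ∈ Icc (q-1) (S-q-1), chz (n-1) i * chz (n+1) (S-i)
        = chz (n-1) (S-q) * chz n q - chz (n-1) (q-1) * chz n (S-q+1) := by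
      have split1 : ∑ i ∈ Icc (q-1) (S-q-1), chz (n-1) i * chz (n+1) (S-i)
          = chz (n-1) (q-1) * chz (n+1) (S-(q-1))
            + ∑ i ∈ Icc q (S-q-1), chz (n-1) i * chz (n+1) (S-i) := hbot
      have split2 : ∑ i ∈ Icc q (S-q), chz (n-1) i * chz (n+1) (S-i)
          = (∑ i ∈ Icc q (S-q-1), chz (n-1) i * chz (n+1) (S-i))
            + chz (n-1) (S-q) * chz (n+1) (S-(S-q)) := htop
      have tel2 : ∑ i ∈ Icc q (S-q), chz n i * chz n (S-i)
          - ∑ i ∈ Icc q (S-q), chz (n-1) i * chz (n+1) (S-i)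
          = chz (n-1) (q-1) * chz n (S-1-(q-1)) - chz (n-1) (S-q) * chz n (S-1-(S-q)) := by
        rw [← Finset.sum_sub_distrib, htel]
      linarith [split1, split2, tel2, e1, e2]
    linarith [hsum, hB]


theorem cauchyProd (f g : ℕ → ℝ) (N : ℕ) (hf : ∀ k, N ≤ k → f k = 0) (hg : ∀ k, N ≤ k → g k = 0) :
    (∑ k ∈ range N, f k) * (∑ l ∈ range N, g l)
      = ∑ s ∈ range (2*N), ∑ i ∈ range (s+1), f i * g (s-i) := by
  rw [Finset.sum_mul_sum, ← Finset.sum_product']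
  rw [← Finset.sum_sigma (range (2*N)) (fun s => range (s+1)) (fun p => f p.2 * g (p.1 - p.2))]
  rw [show (range N ×ˢ range N) = (range N ×ˢ range N) from rfl]
  have hsub : (range N ×ˢ range N) ⊆ (range (2*N) ×ˢ range (2*N)).filter (fun p => p.1 + p.2 < 2*N) := by
    intro p hp
    simp only [mem_product, mem_range, mem_filter] at *
    omega
  rw [Finset.sum_subset hsub (by
    intro p hp hnp
    simp only [mem_product, mem_range, mem_filter] at *
    rcases le_or_gt N p.1 with h | h
    · rw [hf _ h, zero_mul]
    rcases le_or_gt N p.2 with h2 | h2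
    · rw [hg _ h2, mul_zero]
    omega)]
  refine Finset.sum_nbij' (fun p => ⟨p.1 + p.2, p.1⟩)
    (fun q => (q.2, q.1 - q.2)) ?_ ?_ ?_ ?_ ?_
  · intro p hp
    simp only [mem_product, mem_range, mem_filter, Finset.mem_sigma] at *
    omega
  · intro q hq
    simp only [mem_product, mem_range, mem_filter, Finset.mem_sigma] at *
    omega
  · intro p hp; simp
  · intro q hq
    simp only [Finset.mem_sigma, mem_range] at hq
    show (⟨q.snd + (q.fst - q.snd), q.snd⟩ : (_ : ℕ) × ℕ) = q
    have h1 : q.snd + (q.fst - q.snd) = q.fst := by omega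
    rw [h1]
  · intro p hp; simp

theorem perS (a b : ℕ → ℝ)
    (ha0 : ∀ n, 0 ≤ a n) (hb0 : ∀ n, 0 ≤ b n)
    (hasupp : ∀ m n k : ℕ, m ≤ n → n ≤ k → 0 < a m → 0 < a k → 0 < a n)
    (hbsupp : ∀ m n k : ℕ, m ≤ n → n ≤ k → 0 < b m → 0 < b k → 0 < b n)
    (halc : ∀ n : ℕ, 1 ≤ n → a (n - 1) * a (n + 1) ≤ a n ^ 2)
    (hblc : ∀ n : ℕ, 1 ≤ n → b (n - 1) * b (n + 1) ≤ b n ^ 2)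
    (n s : ℕ) (hn : 1 ≤ n) :
    ∑ i ∈ Icc (0:ℤ) (s:ℤ), chz (n-1) i * chz (n+1) ((s:ℤ)-i) *
        (extSeq a i * extSeq a ((s:ℤ)-i)) *
        (extSeq b ((n:ℤ)-(i+1)) * extSeq b ((n:ℤ)-(s:ℤ)+(i+1)))
      ≤ ∑ i ∈ Icc (0:ℤ) (s:ℤ), chz n i * chz n ((s:ℤ)-i) *
        (extSeq a i * extSeq a ((s:ℤ)-i)) *
        (extSeq b ((n:ℤ)-i) * extSeq b ((n:ℤ)-(s:ℤ)+i)) := by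
  set S : ℤ := (s:ℤ) with hS
  set A : ℤ → ℝ := extSeq a with hA
  set B : ℤ → ℝ := extSeq b with hB
  set u : ℤ → ℝ := fun i => A i * A (S - i) with hu
  set v : ℤ → ℝ := fun i => B ((n:ℤ) - i) * B ((n:ℤ) - S + i) with hv
  have hBnn : ∀ i, 0 ≤ B i := fun i => by
    rw [hB]; unfold extSeq; split; exacts [hb0 _, le_refl 0]
  have hAnn : ∀ i, 0 ≤ A i := fun i => by
    rw [hA]; unfold extSeq; split; exacts [ha0 _, le_refl 0]
  have hBzero : ∀ i : ℤ, i < 0 → B i = 0 := fun i hi => by rw [hB]; exact extSeq_zero b i hi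
  have hAzero : ∀ i : ℤ, i < 0 → A i = 0 := fun i hi => by rw [hA]; exact extSeq_zero a i hi
  rcases lt_or_ge (2*n) s with hbig | hsmall
  · -- all v values vanish
    have hvz : ∀ j : ℤ, v j = 0 := by
      intro j
      rcases lt_or_ge ((n:ℤ) - j) 0 with h | h
      · rw [hv]; simp only; rw [hBzero _ h, zero_mul]
      · rw [hv]; simp only; rw [hBzero ((n:ℤ) - S + j) (by omega), mul_zero]
    calc ∑ i ∈ Icc (0:ℤ) S, chz (n-1) i * chz (n+1) (S-i) * (A i * A (S-i)) *
          (B ((n:ℤ)-(i+1)) * B ((n:ℤ)-S+(i+1)))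
        = 0 := by
          apply Finset.sum_eq_zero
          intro i _
          have := hvz (i+1)
          rw [hv] at this
          simp only at this
          rw [this]
          ring
    _ ≤ _ := by
          apply Finset.sum_nonneg
          intro i _
          have h1 : 0 ≤ chz n i := by unfold chz; split <;> positivity
          have h2 : 0 ≤ chz n (S-i) := by unfold chz; split <;> positivity
          have := hAnn i; have := hAnn (S-i); have := hBnn ((n:ℤ)-i); have := hBnn ((n:ℤ)-S+i)
          positivity
  · -- s ≤ 2n
    set m : ℕ := s / 2 with hm
    have husym : ∀ j, u (S - j) = u j := by
      intro j; rw [hu]; simp only; rw [show S - (S - j) = j by ring]; ring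
    have huzero : ∀ j : ℤ, j < 0 → u j = 0 := by
      intro j hj; rw [hu]; simp only; rw [hAzero j hj, zero_mul]
    have hvsym : ∀ j, v (S - j) = v j := by
      intro j; rw [hv]; simp only
      rw [show (n:ℤ) - (S - j) = (n:ℤ) - S + j by ring, show (n:ℤ) - S + (S - j) = (n:ℤ) - j by ring]
      ring
    have hvzero : ∀ j : ℤ, j < S - n → v j = 0 := by
      intro j hj; rw [hv]; simp only
      rw [hBzero ((n:ℤ) - S + j) (by omega), mul_zero]
    have hSm : S ≤ 2*(m:ℤ) + 1 := by omega
    have hulayer := layer u S 0 (m:ℤ) hSm husym huzero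
    have hvlayer := layer v S (S - (n:ℤ)) (m:ℤ) hSm hvsym hvzero
    have heu : ∀ p ∈ Icc (0:ℤ) (m:ℤ), 0 ≤ u p - u (p-1) := by
      intro p hp
      simp only [mem_Icc] at hp
      have := rearrZ a ha0 hasupp halc (p-1) p (S-p) (S-p+1) (by omega) (by omega) (by omega) (by ring)
      rw [hu]; simp only
      rw [show S - (p-1) = S - p + 1 by ring]
      linarith [this]
    have hev : ∀ q ∈ Icc (S - (n:ℤ)) (m:ℤ), 0 ≤ v q - v (q-1) := by
      intro q hq
      simp only [mem_Icc] at hq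
      have := rearrZ b hb0 hbsupp hblc ((n:ℤ)-S+q-1) ((n:ℤ)-S+q) ((n:ℤ)-q) ((n:ℤ)-q+1)
        (by omega) (by omega) (by omega) (by ring)
      rw [hv]; simp only
      rw [show (n:ℤ) - (q-1) = (n:ℤ) - q + 1 by ring, show (n:ℤ) - S + (q-1) = (n:ℤ)-S+q-1 by ring]
      nlinarith [this]
    -- expansion lemma
    have expand : ∀ (G : ℤ → ℝ) (sh : ℤ → ℤ),
        ∑ i ∈ Icc (0:ℤ) S, G i * u i * v (sh i)
          = ∑ p ∈ Icc (0:ℤ) (m:ℤ), ∑ q ∈ Icc (S - (n:ℤ)) (m:ℤ),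
              ((u p - u (p-1)) * (v q - v (q-1))) *
              (∑ i ∈ Icc (0:ℤ) S, (if p ≤ i ∧ i ≤ S - p then (1:ℝ) else 0) *
                ((if q ≤ sh i ∧ sh i ≤ S - q then (1:ℝ) else 0) * G i)) := by
      intro G sh
      have point : ∀ i : ℤ, G i * u i * v (sh i)
          = ∑ p ∈ Icc (0:ℤ) (m:ℤ), ∑ q ∈ Icc (S - (n:ℤ)) (m:ℤ),
              ((u p - u (p-1)) * (v q - v (q-1))) *
              ((if p ≤ i ∧ i ≤ S - p then (1:ℝ) else 0) *
                ((if q ≤ sh i ∧ sh i ≤ S - q then (1:ℝ) else 0) * G i)) := by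
        intro i
        rw [hulayer i, hvlayer (sh i), mul_assoc, Finset.sum_mul_sum, Finset.mul_sum]
        apply Finset.sum_congr rfl
        intro p _
        rw [Finset.mul_sum]
        apply Finset.sum_congr rfl
        intro q _
        ring
      rw [Finset.sum_congr rfl (fun i _ => point i)]
      rw [Finset.sum_comm]
      apply Finset.sum_congr rfl
      intro p _
      rw [Finset.sum_comm]
      apply Finset.sum_congr rfl
      intro q _
      rw [← Finset.mul_sum]
    have eL := expand (fun i => chz (n-1) i * chz (n+1) (S-i)) (fun i => i+1)
    have eR := expand (fun i => chz n i * chz n (S-i)) (fun i => i)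
    calc ∑ i ∈ Icc (0:ℤ) S, chz (n-1) i * chz (n+1) (S-i) * (A i * A (S-i)) *
          (B ((n:ℤ)-(i+1)) * B ((n:ℤ)-S+(i+1)))
        = ∑ i ∈ Icc (0:ℤ) S, (fun i => chz (n-1) i * chz (n+1) (S-i)) i * u i * v (i+1) := by
          apply Finset.sum_congr rfl; intro i _; rw [hu, hv]
    _ = _ := eL
    _ ≤ ∑ p ∈ Icc (0:ℤ) (m:ℤ), ∑ q ∈ Icc (S - (n:ℤ)) (m:ℤ),
          ((u p - u (p-1)) * (v q - v (q-1))) *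
          (∑ i ∈ Icc (0:ℤ) S, (if p ≤ i ∧ i ≤ S - p then (1:ℝ) else 0) *
            ((if q ≤ i ∧ i ≤ S - q then (1:ℝ) else 0) * (chz n i * chz n (S-i)))) := by
          apply Finset.sum_le_sum
          intro p hp
          apply Finset.sum_le_sum
          intro q hq
          simp only [mem_Icc] at hp hq
          have hcoeff : 0 ≤ (u p - u (p-1)) * (v q - v (q-1)) :=
            mul_nonneg (heu p (by simp [mem_Icc]; omega)) (hev q (by simp [mem_Icc]; omega))
          apply mul_le_mul_of_nonneg_left _ hcoeff
          exact coreK n s hn p q (by omega) (by omega) (by omega)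
    _ = ∑ i ∈ Icc (0:ℤ) S, (fun i => chz n i * chz n (S-i)) i * u i * v i := eR.symm
    _ = _ := by
          apply Finset.sum_congr rfl; intro i _; rw [hu, hv]

theorem convP (a b : ℕ → ℝ) (n s i : ℕ) (hi : i ≤ s) :
    ((n.choose i : ℝ) * a i * b (n - i)) * ((n.choose (s-i) : ℝ) * a (s-i) * b (n - (s-i)))
      = chz n (i:ℤ) * chz n ((s:ℤ)-(i:ℤ)) * (extSeq a (i:ℤ) * extSeq a ((s:ℤ)-(i:ℤ))) *
        (extSeq b ((n:ℤ)-(i:ℤ)) * extSeq b ((n:ℤ)-(s:ℤ)+(i:ℤ))) := by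
  by_cases h1 : i ≤ n
  · by_cases h2 : s - i ≤ n
    · have e1 : (s:ℤ) - (i:ℤ) = ((s-i:ℕ):ℤ) := by omega
      have e2 : (n:ℤ) - (i:ℤ) = ((n-i:ℕ):ℤ) := by omega
      have e3 : (n:ℤ) - (s:ℤ) + (i:ℤ) = ((n-(s-i):ℕ):ℤ) := by omega
      rw [e1, e2, e3, chz_ofNat, chz_ofNat, extSeq_ofNat, extSeq_ofNat, extSeq_ofNat, extSeq_ofNat]
      ring
    · have z1 : n.choose (s-i) = 0 := Nat.choose_eq_zero_of_lt (by omega)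
      have z2 : chz n ((s:ℤ)-(i:ℤ)) = 0 := chz_big n _ (by omega)
      rw [z1, z2]; push_cast; ring
  · have z1 : n.choose i = 0 := Nat.choose_eq_zero_of_lt (by omega)
    have z2 : chz n (i:ℤ) = 0 := chz_big n _ (by omega)
    rw [z1, z2]; push_cast; ring

theorem convQ (a b : ℕ → ℝ) (n s i : ℕ) (hn : 1 ≤ n) (hi : i ≤ s) :
    (((n-1).choose i : ℝ) * a i * b (n - 1 - i)) * (((n+1).choose (s-i) : ℝ) * a (s-i) * b (n + 1 - (s-i)))
      = chz (n-1) (i:ℤ) * chz (n+1) ((s:ℤ)-(i:ℤ)) * (extSeq a (i:ℤ) * extSeq a ((s:ℤ)-(i:ℤ))) *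
        (extSeq b ((n:ℤ)-((i:ℤ)+1)) * extSeq b ((n:ℤ)-(s:ℤ)+((i:ℤ)+1))) := by
  by_cases h1 : i ≤ n - 1
  · by_cases h2 : s - i ≤ n + 1
    · have e1 : (s:ℤ) - (i:ℤ) = ((s-i:ℕ):ℤ) := by omega
      have e2 : (n:ℤ) - ((i:ℤ)+1) = ((n-1-i:ℕ):ℤ) := by omega
      have e3 : (n:ℤ) - (s:ℤ) + ((i:ℤ)+1) = ((n+1-(s-i):ℕ):ℤ) := by omega
      rw [e1, e2, e3, chz_ofNat, chz_ofNat, extSeq_ofNat, extSeq_ofNat, extSeq_ofNat, extSeq_ofNat]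
      ring
    · have z1 : (n+1).choose (s-i) = 0 := Nat.choose_eq_zero_of_lt (by omega)
      have z2 : chz (n+1) ((s:ℤ)-(i:ℤ)) = 0 := chz_big (n+1) _ (by omega)
      rw [z1, z2]; push_cast; ring
  · have z1 : (n-1).choose i = 0 := Nat.choose_eq_zero_of_lt (by omega)
    have z2 : chz (n-1) (i:ℤ) = 0 := chz_big (n-1) _ (by omega)
    rw [z1, z2]; push_cast; ring

/-- Walkup's theorem: the binomial convolution of two log-concave nonnegative sequences
is log-concave. -/
theorem stmt3 (a b : ℕ → ℝ)
    (ha0 : ∀ n, 0 ≤ a n) (hb0 : ∀ n, 0 ≤ b n)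
    (hasupp : ∀ m n k : ℕ, m ≤ n → n ≤ k → 0 < a m → 0 < a k → 0 < a n)
    (hbsupp : ∀ m n k : ℕ, m ≤ n → n ≤ k → 0 < b m → 0 < b k → 0 < b n)
    (halc : ∀ n : ℕ, 1 ≤ n → a (n - 1) * a (n + 1) ≤ a n ^ 2)
    (hblc : ∀ n : ℕ, 1 ≤ n → b (n - 1) * b (n + 1) ≤ b n ^ 2)
    (c : ℕ → ℝ)
    (hc : ∀ n : ℕ, c n = ∑ k ∈ Finset.range (n + 1), (n.choose k : ℝ) * a k * b (n - k)) :
    (∀ m n k : ℕ, m ≤ n → n ≤ k → 0 < c m → 0 < c k → 0 < c n) ∧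
      (∀ n : ℕ, 1 ≤ n → c (n - 1) * c (n + 1) ≤ c n ^ 2) := by
  constructor
  · -- support part
    intro m n k hmn hnk hcm hck
    have hterm : ∀ (t : ℕ), 0 < c t → ∃ i, i ≤ t ∧ 0 < a i ∧ 0 < b (t - i) := by
      intro t hct
      rw [hc t] at hct
      have : ∃ i ∈ Finset.range (t+1), (t.choose i : ℝ) * a i * b (t - i) ≠ 0 := by
        by_contra hcon
        push_neg at hcon
        rw [Finset.sum_eq_zero hcon] at hct
        exact lt_irrefl 0 hct
      obtain ⟨i, hi, hne⟩ := this
      simp only [Finset.mem_range] at hi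
      refine ⟨i, by omega, ?_, ?_⟩
      · rcases eq_or_lt_of_le (ha0 i) with h | h
        · exfalso; apply hne; rw [← h]; ring
        · exact h
      · rcases eq_or_lt_of_le (hb0 (t-i)) with h | h
        · exfalso; apply hne; rw [← h]; ring
        · exact h
    obtain ⟨i1, hi1, ha1, hb1⟩ := hterm m hcm
    obtain ⟨i2, hi2, ha2, hb2⟩ := hterm k hck
    set iLo := min i1 i2 with hiLo
    set iHi := max i1 i2 with hiHi
    set jLo := min (m - i1) (k - i2) with hjLo
    set jHi := max (m - i1) (k - i2) with hjHi
    have haLo : 0 < a iLo := by rcases le_total i1 i2 with h | h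
                                · rw [hiLo, min_eq_left h]; exact ha1
                                · rw [hiLo, min_eq_right h]; exact ha2
    have haHi : 0 < a iHi := by rcases le_total i1 i2 with h | h
                                · rw [hiHi, max_eq_right h]; exact ha2
                                · rw [hiHi, max_eq_left h]; exact ha1
    have hbLo : 0 < b jLo := by rcases le_total (m - i1) (k - i2) with h | h
                                · rw [hjLo, min_eq_left h]; exact hb1
                                · rw [hjLo, min_eq_right h]; exact hb2
    have hbHi : 0 < b jHi := by rcases le_total (m - i1) (k - i2) with h | h
                                · rw [hjHi, max_eq_right h]; exact hb2
                                · rw [hjHi, max_eq_left h]; exact hb1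
    set x := max iLo (n - jHi) with hx
    have hm1 : iLo ≤ i1 := min_le_left _ _
    have hm2 : iLo ≤ i2 := min_le_right _ _
    have hm3 : i1 ≤ iHi := le_max_left _ _
    have hm4 : i2 ≤ iHi := le_max_right _ _
    have hm5 : jLo ≤ m - i1 := min_le_left _ _
    have hm6 : jLo ≤ k - i2 := min_le_right _ _
    have hm7 : m - i1 ≤ jHi := le_max_left _ _
    have hm8 : k - i2 ≤ jHi := le_max_right _ _
    have hx1 : iLo ≤ x := le_max_left _ _
    have hx2 : n - jHi ≤ x := le_max_right _ _
    have hx3 : x = iLo ∨ x = n - jHi := max_choice _ _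
    have hax : 0 < a x := hasupp iLo x iHi hx1 (by omega) haLo haHi
    have hbnx : 0 < b (n - x) := hbsupp jLo (n - x) jHi (by omega) (by omega) hbLo hbHi
    have hxn : x ≤ n := by omega
    rw [hc n]
    have hterm : 0 < (n.choose x : ℝ) * a x * b (n - x) := by
      have := Nat.choose_pos hxn
      positivity
    refine lt_of_lt_of_le hterm (Finset.single_le_sum (f := fun t => (n.choose t : ℝ) * a t * b (n - t)) ?_ ?_)
    · intro t _
      have := ha0 t
      have := hb0 (n - t)
      positivity
    · simp only [Finset.mem_range]; omega
  · -- log-concavity part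
    intro n hn
    have hfz : ∀ t, n + 1 ≤ t → (n.choose t : ℝ) * a t * b (n - t) = 0 := by
      intro t ht
      rw [Nat.choose_eq_zero_of_lt (by omega)]
      push_cast; ring
    have hgz : ∀ t, n ≤ t → ((n-1).choose t : ℝ) * a t * b (n - 1 - t) = 0 := by
      intro t ht
      rw [Nat.choose_eq_zero_of_lt (by omega)]
      push_cast; ring
    have hhz : ∀ t, n + 2 ≤ t → ((n+1).choose t : ℝ) * a t * b (n + 1 - t) = 0 := by
      intro t ht
      rw [Nat.choose_eq_zero_of_lt (by omega)]
      push_cast; ring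
    have hcn : c n = ∑ t ∈ range (n+2), (n.choose t : ℝ) * a t * b (n - t) := by
      rw [hc n]
      apply Finset.sum_subset (Finset.range_subset_range.2 (by omega))
      intro t _ ht
      simp only [Finset.mem_range] at ht
      exact hfz t (by omega)
    have hcn1 : c (n+1) = ∑ t ∈ range (n+2), ((n+1).choose t : ℝ) * a t * b (n + 1 - t) := by
      rw [hc (n+1)]
    have hcm1 : c (n-1) = ∑ t ∈ range (n+2), ((n-1).choose t : ℝ) * a t * b (n - 1 - t) := by
      rw [hc (n-1), show n - 1 + 1 = n from by omega]
      apply Finset.sum_subset (Finset.range_subset_range.2 (by omega))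
      intro t _ ht
      simp only [Finset.mem_range] at ht
      exact hgz t (by omega)
    rw [hcn, hcn1, hcm1, sq]
    rw [cauchyProd _ _ (n+2) (fun t ht => hfz t (by omega)) (fun t ht => hfz t (by omega)), cauchyProd _ _ (n+2) (fun t ht => hgz t (by omega)) hhz]
    apply Finset.sum_le_sum
    intro s _
    have hQ : ∑ i ∈ range (s+1), (((n-1).choose i : ℝ) * a i * b (n - 1 - i)) *
          (((n+1).choose (s-i) : ℝ) * a (s-i) * b (n + 1 - (s-i)))
        = ∑ i ∈ Icc (0:ℤ) (s:ℤ), chz (n-1) i * chz (n+1) ((s:ℤ)-i) *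
            (extSeq a i * extSeq a ((s:ℤ)-i)) *
            (extSeq b ((n:ℤ)-(i+1)) * extSeq b ((n:ℤ)-(s:ℤ)+(i+1))) := by
      rw [← castSum s (fun i => chz (n-1) i * chz (n+1) ((s:ℤ)-i) *
            (extSeq a i * extSeq a ((s:ℤ)-i)) *
            (extSeq b ((n:ℤ)-(i+1)) * extSeq b ((n:ℤ)-(s:ℤ)+(i+1))))]
      apply Finset.sum_congr rfl
      intro i hi
      simp only [Finset.mem_range] at hi
      exact convQ a b n s i hn (by omega)
    have hP : ∑ i ∈ range (s+1), ((n.choose i : ℝ) * a i * b (n - i)) *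
          ((n.choose (s-i) : ℝ) * a (s-i) * b (n - (s-i)))
        = ∑ i ∈ Icc (0:ℤ) (s:ℤ), chz n i * chz n ((s:ℤ)-i) *
            (extSeq a i * extSeq a ((s:ℤ)-i)) *
            (extSeq b ((n:ℤ)-i) * extSeq b ((n:ℤ)-(s:ℤ)+i)) := by
      rw [← castSum s (fun i => chz n i * chz n ((s:ℤ)-i) *
            (extSeq a i * extSeq a ((s:ℤ)-i)) *
            (extSeq b ((n:ℤ)-i) * extSeq b ((n:ℤ)-(s:ℤ)+i)))]
      apply Finset.sum_congr rfl
      intro i hi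
      simp only [Finset.mem_range] at hi
      exact convP a b n s i (by omega)
    rw [hQ, hP]
    exact perS a b ha0 hb0 hasupp hbsupp halc hblc n s hn
end

section
/- Gurvits' theorem: if (a_n)_{n≥0} is a log-concave sequence of nonnegative reals, then the power series f(t) = Σ_{n≥0} (a_n/n!) t^n has infinite radius of convergence and f is log-concave on [0,∞), i.e., f'(t)^2 ≥ f(t) f''(t) for all t ≥ 0. -/
open scoped BigOperators

open Finset

/-- Key consequence of log-concavity with contiguous support. -/
lemma gur_key (a : ℕ → ℝ) (hnonneg : ∀ n, 0 ≤ a n)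
    (hsupp : ∀ m n k : ℕ, m ≤ n → n ≤ k → 0 < a m → 0 < a k → 0 < a n)
    (hlc : ∀ n : ℕ, 1 ≤ n → a (n - 1) * a (n + 1) ≤ a n ^ 2) :
    ∀ p q : ℕ, p ≤ q → a p * a (q + 1) ≤ a (p + 1) * a q := by
  intro p q hpq
  induction q, hpq using Nat.le_induction with
  | base => exact le_of_eq (mul_comm _ _)
  | succ q hpq ih =>
    rcases eq_or_lt_of_le (hnonneg p) with hp | hp
    · rw [← hp, zero_mul]; exact mul_nonneg (hnonneg _) (hnonneg _)
    rcases eq_or_lt_of_le (hnonneg (q + 2)) with hq2 | hq2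
    · have : a p * a (q + 1 + 1) = 0 := by rw [← hq2]; ring
      rw [this]; exact mul_nonneg (hnonneg _) (hnonneg _)
    have h1 : 0 < a (q + 1) := hsupp p (q + 1) (q + 2) (by omega) (by omega) hp hq2
    have hq : 0 < a q := hsupp p q (q + 2) hpq (by omega) hp hq2
    have hlc' := hlc (q + 1) (by omega)
    simp only [Nat.add_sub_cancel] at hlc'
    have h2 : a p * a (q + 1 + 1) * a q ≤ a (p + 1) * a (q + 1) * a q := by
      have e1 : a p * (a q * a (q + 2)) ≤ a p * a (q + 1) ^ 2 :=
        mul_le_mul_of_nonneg_left hlc' (hnonneg p)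
      have e2 : a p * a (q + 1) * a (q + 1) ≤ a (p + 1) * a q * a (q + 1) :=
        mul_le_mul_of_nonneg_right ih (hnonneg (q + 1))
      nlinarith [e1, e2]
    exact le_of_mul_le_mul_right h2 hq

/-- Geometric growth bound for a log-concave sequence. -/
lemma gur_bound (a : ℕ → ℝ) (hnonneg : ∀ n, 0 ≤ a n)
    (key : ∀ p q : ℕ, p ≤ q → a p * a (q + 1) ≤ a (p + 1) * a q) :
    ∃ C r : ℝ, 0 ≤ C ∧ 0 ≤ r ∧ ∀ n, a n ≤ C * r ^ n := by
  by_cases h : ∃ N, 0 < a N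
  · classical
    let N := Nat.find h
    have hN : 0 < a N := Nat.find_spec h
    have hmin : ∀ n < N, a n = 0 := fun n hn =>
      le_antisymm (not_lt.1 (Nat.find_min h hn)) (hnonneg n)
    set s : ℝ := a (N + 1) / a N with hs
    have hs0 : 0 ≤ s := div_nonneg (hnonneg _) hN.le
    set r : ℝ := max s 1 with hr
    have hr1 : (1 : ℝ) ≤ r := le_max_right _ _
    have hr0 : (0 : ℝ) ≤ r := le_trans zero_le_one hr1
    refine ⟨a N, r, hnonneg N, hr0, fun n => ?_⟩
    rcases lt_or_ge n N with hn | hn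
    · rw [hmin n hn]; positivity
    · have main : a n ≤ a N * s ^ (n - N) := by
        obtain ⟨k, rfl⟩ := Nat.exists_eq_add_of_le hn
        induction k with
        | zero => simp
        | succ k ihk =>
          have hNk : N ≤ N + k := Nat.le_add_right _ _
          have h1 : a (N + k + 1) ≤ a (N + 1) * a (N + k) / a N := by
            rw [le_div_iff₀ hN]
            have := key N (N + k) hNk
            linarith
          have h2 : a (N + 1) * a (N + k) / a N = s * a (N + k) := by
            rw [hs]; ring
          have h3 : a (N + k) ≤ a N * s ^ (N + k - N) := ihk (Nat.le_add_right _ _)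
          have h4 : s * a (N + k) ≤ s * (a N * s ^ k) := by
            have : a (N + k) ≤ a N * s ^ k := by
              simpa [Nat.add_sub_cancel_left] using h3
            exact mul_le_mul_of_nonneg_left this hs0
          calc a (N + (k + 1)) = a (N + k + 1) := by ring_nf
            _ ≤ s * a (N + k) := by rw [← h2]; exact h1
            _ ≤ s * (a N * s ^ k) := h4
            _ = a N * s ^ (N + (k + 1) - N) := by
                simp [Nat.add_sub_cancel_left, pow_succ]; ring
      have h5 : s ^ (n - N) ≤ r ^ (n - N) := pow_le_pow_left₀ hs0 (le_max_left _ _) _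
      have h6 : r ^ (n - N) ≤ r ^ n := pow_le_pow_right₀ hr1 (Nat.sub_le _ _)
      calc a n ≤ a N * s ^ (n - N) := main
        _ ≤ a N * r ^ n := mul_le_mul_of_nonneg_left (h5.trans h6) (hnonneg N)
  · push_neg at h
    exact ⟨0, 0, le_rfl, le_rfl, fun n => by simpa using h n⟩

/-- Absolute summability of the exponential-type series. -/
lemma gur_summable_norm (c : ℕ → ℝ) (h0 : ∀ n, 0 ≤ c n) (C r : ℝ) (hC : 0 ≤ C) (hr : 0 ≤ r)
    (hb : ∀ n, c n ≤ C * r ^ n) (t : ℝ) :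
    Summable (fun n : ℕ => ‖c n / (n.factorial : ℝ) * t ^ n‖) := by
  refine Summable.of_nonneg_of_le (fun n => norm_nonneg _) (fun n => ?_)
    ((Real.summable_pow_div_factorial (r * |t|)).mul_left C)
  have hfact : (0 : ℝ) < (n.factorial : ℝ) := by positivity
  have : ‖c n / (n.factorial : ℝ) * t ^ n‖ = c n / (n.factorial : ℝ) * |t| ^ n := by
    rw [norm_mul, norm_div, norm_pow, Real.norm_eq_abs, Real.norm_eq_abs, Real.norm_eq_abs,
      abs_of_nonneg (h0 n), abs_of_nonneg (Nat.cast_nonneg _)]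
  rw [this]
  calc c n / (n.factorial : ℝ) * |t| ^ n ≤ (C * r ^ n) / (n.factorial : ℝ) * |t| ^ n := by
        gcongr
        exact hb n
    _ = C * ((r * |t|) ^ n / (n.factorial : ℝ)) := by rw [mul_pow]; ring

/-- Differentiating the exponential-type series term by term. -/
lemma gur_deriv (c : ℕ → ℝ) (h0 : ∀ n, 0 ≤ c n) (C r : ℝ) (hC : 0 ≤ C) (hr : 0 ≤ r)
    (hb : ∀ n, c n ≤ C * r ^ n) (t : ℝ) :
    HasDerivAt (fun x : ℝ => ∑' n : ℕ, c n / (n.factorial : ℝ) * x ^ n)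
      (∑' n : ℕ, c (n + 1) / (n.factorial : ℝ) * t ^ n) t := by
  set R : ℝ := |t| + 1 with hR
  have hR0 : (0 : ℝ) ≤ R := by positivity
  set u : ℕ → ℝ := fun n => c n / (n.factorial : ℝ) * (n * R ^ (n - 1)) with hu
  have hu_succ : ∀ n : ℕ, u (n + 1) = c (n + 1) * R ^ n / (n.factorial : ℝ) := by
    intro n
    have hfact : ((n + 1).factorial : ℝ) = (n + 1) * (n.factorial : ℝ) := by
      exact_mod_cast Nat.factorial_succ n
    have hne : (n.factorial : ℝ) ≠ 0 := by positivity
    have hne1 : ((n : ℝ) + 1) ≠ 0 := by positivity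
    rw [hu]
    simp only [Nat.add_sub_cancel, Nat.cast_add, Nat.cast_one, hfact]
    field_simp
  have husum : Summable u := by
    rw [← summable_nat_add_iff 1]
    refine Summable.of_nonneg_of_le (fun n => ?_) (fun n => ?_)
      ((Real.summable_pow_div_factorial (r * R)).mul_left (C * r))
    · rw [hu_succ]
      exact div_nonneg (mul_nonneg (h0 _) (pow_nonneg hR0 _)) (Nat.cast_nonneg _)
    · rw [hu_succ]
      calc c (n + 1) * R ^ n / (n.factorial : ℝ)
          ≤ (C * r ^ (n + 1)) * R ^ n / (n.factorial : ℝ) := by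
            gcongr
            exact hb (n + 1)
        _ = C * r * ((r * R) ^ n / (n.factorial : ℝ)) := by rw [mul_pow, pow_succ]; ring
  have hball : t ∈ Metric.ball (0 : ℝ) R := by
    simp only [Metric.mem_ball, Real.dist_eq, sub_zero, hR]
    linarith
  have hg : ∀ (n : ℕ) (y : ℝ), y ∈ Metric.ball (0 : ℝ) R →
      HasDerivAt (fun x : ℝ => c n / (n.factorial : ℝ) * x ^ n)
        (c n / (n.factorial : ℝ) * ((n : ℝ) * y ^ (n - 1))) y := by
    intro n y _
    exact (hasDerivAt_pow n y).const_mul _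
  have hg' : ∀ (n : ℕ) (y : ℝ), y ∈ Metric.ball (0 : ℝ) R →
      ‖c n / (n.factorial : ℝ) * ((n : ℝ) * y ^ (n - 1))‖ ≤ u n := by
    intro n y hy
    have hyR : |y| ≤ R := by
      simp only [Metric.mem_ball, Real.dist_eq, sub_zero] at hy
      exact hy.le
    have : ‖c n / (n.factorial : ℝ) * ((n : ℝ) * y ^ (n - 1))‖
        = c n / (n.factorial : ℝ) * ((n : ℝ) * |y| ^ (n - 1)) := by
      rw [norm_mul, norm_mul, norm_pow, Real.norm_eq_abs, Real.norm_eq_abs, Real.norm_eq_abs,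
        abs_of_nonneg (Nat.cast_nonneg (α := ℝ) n),
        abs_of_nonneg (div_nonneg (h0 n) (Nat.cast_nonneg _))]
    rw [this, hu]
    have h1 : |y| ^ (n - 1) ≤ R ^ (n - 1) := pow_le_pow_left₀ (abs_nonneg y) hyR _
    have h2 : (0 : ℝ) ≤ c n / (n.factorial : ℝ) := div_nonneg (h0 n) (Nat.cast_nonneg _)
    exact mul_le_mul_of_nonneg_left
      (mul_le_mul_of_nonneg_left h1 (Nat.cast_nonneg n)) h2
  have hsum0 : Summable fun n : ℕ => c n / (n.factorial : ℝ) * t ^ n :=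
    (gur_summable_norm c h0 C r hC hr hb t).of_norm
  have H := hasDerivAt_tsum_of_isPreconnected husum Metric.isOpen_ball
    (convex_ball (0 : ℝ) R).isPreconnected hg hg' hball hsum0 hball
  have hsumd : Summable fun n : ℕ => c n / (n.factorial : ℝ) * ((n : ℝ) * t ^ (n - 1)) :=
    Summable.of_norm_bounded husum (fun n => hg' n t hball)
  have hval : ∑' n : ℕ, c n / (n.factorial : ℝ) * ((n : ℝ) * t ^ (n - 1))
      = ∑' n : ℕ, c (n + 1) / (n.factorial : ℝ) * t ^ n := by
    rw [Summable.tsum_eq_zero_add hsumd]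
    have h00 : c 0 / ((Nat.factorial 0 : ℕ) : ℝ) * ((0 : ℕ) * t ^ (0 - 1)) = 0 := by
      simp
    rw [h00, zero_add]
    refine tsum_congr fun n => ?_
    have hfact : ((n + 1).factorial : ℝ) = (n + 1) * (n.factorial : ℝ) := by
      exact_mod_cast Nat.factorial_succ n
    have hne : (n.factorial : ℝ) ≠ 0 := by positivity
    have hne1 : ((n : ℝ) + 1) ≠ 0 := by positivity
    simp only [Nat.add_sub_cancel, Nat.cast_add, Nat.cast_one, hfact]
    field_simp
  rw [← hval]
  exact H

/-- The key finite combinatorial inequality. -/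
lemma gur_core (a : ℕ → ℝ) (hnonneg : ∀ n, 0 ≤ a n)
    (key : ∀ p q : ℕ, p ≤ q → a p * a (q + 1) ≤ a (p + 1) * a q) (n : ℕ) :
    ∑ i ∈ Finset.range (n + 1),
        a i * a (n + 2 - i) / ((i.factorial : ℝ) * ((n - i).factorial : ℝ)) ≤
      ∑ i ∈ Finset.range (n + 1),
        a (i + 1) * a (n + 1 - i) / ((i.factorial : ℝ) * ((n - i).factorial : ℝ)) := by
  classical
  set W : ℕ → ℝ := fun i =>
    if i ≤ n then ((i.factorial : ℝ) * ((n - i).factorial : ℝ))⁻¹ else 0 with hW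
  set c : ℕ → ℝ := fun j => a j * a (n + 2 - j) with hc
  set d : ℕ → ℝ := fun i => c (i + 1) - c i with hd
  have hWnn : ∀ i, 0 ≤ W i := by
    intro i; rw [hW]; dsimp only
    split
    · positivity
    · exact le_rfl
  have hWmono : ∀ p q : ℕ, p + q = n + 1 → p ≤ q → W q ≤ W p := by
    intro p q hpq hle
    rcases Nat.eq_zero_or_pos p with hp0 | hp0
    · subst hp0
      have hq : q = n + 1 := by omega
      subst hq
      have : ¬ (n + 1 ≤ n) := by omega
      rw [hW]; dsimp only
      rw [if_neg this]
      split
      · positivity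
      · exact le_rfl
    · have hq0 : 1 ≤ q := le_trans hp0 hle
      have hpn : p ≤ n := by omega
      have hqn : q ≤ n := by omega
      have hnp : n - p = q - 1 := by omega
      have hnq : n - q = p - 1 := by omega
      rw [hW]; dsimp only
      rw [if_pos hpn, if_pos hqn, hnp, hnq]
      have hnatineq : p.factorial * (q - 1).factorial ≤ q.factorial * (p - 1).factorial := by
        obtain ⟨p', rfl⟩ : ∃ p', p = p' + 1 := ⟨p - 1, by omega⟩
        obtain ⟨q', rfl⟩ : ∃ q', q = q' + 1 := ⟨q - 1, by omega⟩
        simp only [Nat.add_sub_cancel, Nat.factorial_succ]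
        calc (p' + 1) * p'.factorial * q'.factorial
            ≤ (q' + 1) * p'.factorial * q'.factorial := by
              have : p' + 1 ≤ q' + 1 := hle
              exact Nat.mul_le_mul_right _ (Nat.mul_le_mul_right _ this)
          _ = (q' + 1) * q'.factorial * p'.factorial := by ring
      have hcast : ((p.factorial : ℝ) * ((q - 1).factorial : ℝ))
          ≤ (q.factorial : ℝ) * ((p - 1).factorial : ℝ) := by
        exact_mod_cast hnatineq
      have hpos : (0 : ℝ) < (p.factorial : ℝ) * ((q - 1).factorial : ℝ) := by positivity
      exact inv_anti₀ hpos hcast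
  have hdrefl : ∀ i ≤ n + 1, d (n + 1 - i) = -d i := by
    intro i hi
    have e1 : n + 1 - i + 1 = n + 2 - i := by omega
    have e2 : n + 2 - (n + 2 - i) = i := by omega
    have e3 : n + 2 - (n + 1 - i) = i + 1 := by omega
    have e4 : n + 2 - (i + 1) = n + 1 - i := by omega
    rw [hd]; dsimp only
    rw [hc]; dsimp only
    rw [e1, e2, e3, e4]
    ring
  have htermwise : ∀ i ∈ Finset.range (n + 2), 0 ≤ (W i - W (n + 1 - i)) * d i := by
    intro i hi
    rw [Finset.mem_range] at hi
    have hin : i ≤ n + 1 := by omega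
    rcases Nat.lt_trichotomy (2 * i) (n + 1) with h2 | h2 | h2
    · -- d i ≥ 0, W i ≥ W (n+1-i)
      have hdnn : 0 ≤ d i := by
        have hpq : i ≤ n + 1 - i := by omega
        have hk := key i (n + 1 - i) hpq
        have e1 : n + 1 - i + 1 = n + 2 - i := by omega
        rw [e1] at hk
        have e4 : n + 2 - (i + 1) = n + 1 - i := by omega
        rw [hd]; dsimp only; rw [hc]; dsimp only
        rw [e4]
        linarith
      have hWge : W (n + 1 - i) ≤ W i :=
        hWmono i (n + 1 - i) (by omega) (by omega)
      exact mul_nonneg (by linarith) hdnn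
    · have : n + 1 - i = i := by omega
      rw [this, sub_self, zero_mul]
    · -- d i ≤ 0, W i ≤ W (n+1-i)
      have hdnp : d i ≤ 0 := by
        have hpq : n + 1 - i ≤ i := by omega
        have hk := key (n + 1 - i) i hpq
        have e1 : n + 1 - i + 1 = n + 2 - i := by omega
        rw [e1] at hk
        have e4 : n + 2 - (i + 1) = n + 1 - i := by omega
        rw [hd]; dsimp only; rw [hc]; dsimp only
        rw [e4]
        linarith
      have hWle : W i ≤ W (n + 1 - i) :=
        hWmono (n + 1 - i) i (by omega) (by omega)
      have h9 : 0 ≤ (-(W i - W (n + 1 - i))) * (-d i) :=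
        mul_nonneg (by linarith) (by linarith)
      nlinarith [h9]
  set S : ℝ := ∑ i ∈ Finset.range (n + 2), W i * d i with hS
  have hrefl : ∑ i ∈ Finset.range (n + 2), W (n + 1 - i) * d i = -S := by
    have := Finset.sum_range_reflect (fun i => W (n + 1 - i) * d i) (n + 2)
    rw [← this]
    have : ∀ j ∈ Finset.range (n + 2),
        W (n + 1 - (n + 2 - 1 - j)) * d (n + 2 - 1 - j) = -(W j * d j) := by
      intro j hj
      rw [Finset.mem_range] at hj
      have e1 : n + 2 - 1 - j = n + 1 - j := by omega
      have e2 : n + 1 - (n + 1 - j) = j := by omega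
      rw [e1, e2, hdrefl j (by omega)]
      ring
    rw [Finset.sum_congr rfl this, hS, ← Finset.sum_neg_distrib]
  have hSS : S + S = ∑ i ∈ Finset.range (n + 2), (W i - W (n + 1 - i)) * d i := by
    have : ∑ i ∈ Finset.range (n + 2), (W i - W (n + 1 - i)) * d i
        = ∑ i ∈ Finset.range (n + 2), (W i * d i - W (n + 1 - i) * d i) := by
      refine Finset.sum_congr rfl fun i _ => by ring
    rw [this, Finset.sum_sub_distrib, hrefl, hS]
    ring
  have hSnn : 0 ≤ S := by
    have h1 : 0 ≤ S + S := hSS ▸ Finset.sum_nonneg htermwise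
    linarith
  -- now relate S to the original difference
  have hL : ∑ i ∈ Finset.range (n + 1),
      a i * a (n + 2 - i) / ((i.factorial : ℝ) * ((n - i).factorial : ℝ))
      = ∑ i ∈ Finset.range (n + 1), W i * c i := by
    refine Finset.sum_congr rfl fun i hi => ?_
    rw [Finset.mem_range] at hi
    rw [hW]; dsimp only; rw [if_pos (by omega : i ≤ n)]
    rw [hc]; dsimp only
    rw [div_eq_mul_inv, mul_comm]
  have hR : ∑ i ∈ Finset.range (n + 1),
      a (i + 1) * a (n + 1 - i) / ((i.factorial : ℝ) * ((n - i).factorial : ℝ))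
      = ∑ i ∈ Finset.range (n + 1), W i * c (i + 1) := by
    refine Finset.sum_congr rfl fun i hi => ?_
    rw [Finset.mem_range] at hi
    rw [hW]; dsimp only; rw [if_pos (by omega : i ≤ n)]
    rw [hc]; dsimp only
    have e4 : n + 2 - (i + 1) = n + 1 - i := by omega
    rw [e4, div_eq_mul_inv, mul_comm]
  have hdiff : ∑ i ∈ Finset.range (n + 1), W i * c (i + 1)
      - ∑ i ∈ Finset.range (n + 1), W i * c i = S := by
    rw [← Finset.sum_sub_distrib]
    have h1 : ∀ i ∈ Finset.range (n + 1), W i * c (i + 1) - W i * c i = W i * d i := by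
      intro i _
      rw [hd]; dsimp only
      ring
    rw [Finset.sum_congr rfl h1, hS]
    have hW1 : W (n + 1) = 0 := by
      rw [hW]; dsimp only; rw [if_neg (by omega)]
    conv_rhs => rw [Finset.sum_range_succ]
    rw [hW1, zero_mul, add_zero]
  rw [hL, hR]
  linarith

/-- Gurvits' theorem: if `(a n)` is a nonnegative log-concave sequence, then
`f t = ∑ a n / n! * t ^ n` converges for every real `t` and `f` is log-concave
on `[0, ∞)`: `f'(t)^2 ≥ f(t) f''(t)` for `t ≥ 0`. -/
theorem stmt5 (a : ℕ → ℝ) (hnonneg : ∀ n, 0 ≤ a n)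
    (hsupp : ∀ m n k : ℕ, m ≤ n → n ≤ k → 0 < a m → 0 < a k → 0 < a n)
    (hlc : ∀ n : ℕ, 1 ≤ n → a (n - 1) * a (n + 1) ≤ a n ^ 2)
    (f : ℝ → ℝ) (hf : ∀ t : ℝ, f t = ∑' n : ℕ, a n / (n.factorial : ℝ) * t ^ n) :
    (∀ t : ℝ, Summable (fun n : ℕ => a n / (n.factorial : ℝ) * t ^ n)) ∧
      ∀ t : ℝ, 0 ≤ t → f t * iteratedDeriv 2 f t ≤ (deriv f t) ^ 2 := by
  have key := gur_key a hnonneg hsupp hlc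
  obtain ⟨C, r, hC, hr, hb⟩ := gur_bound a hnonneg key
  have hb1 : ∀ n, a (n + 1) ≤ C * r * r ^ n := by
    intro n
    calc a (n + 1) ≤ C * r ^ (n + 1) := hb (n + 1)
      _ = C * r * r ^ n := by rw [pow_succ]; ring
  have hb2 : ∀ n, a (n + 2) ≤ C * r * r * r ^ n := by
    intro n
    calc a (n + 2) ≤ C * r ^ (n + 2) := hb (n + 2)
      _ = C * r * r * r ^ n := by rw [pow_succ, pow_succ]; ring
  have hnn1 : ∀ n, 0 ≤ a (n + 1) := fun n => hnonneg (n + 1)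
  have hnn2 : ∀ n, 0 ≤ a (n + 2) := fun n => hnonneg (n + 2)
  have hCr : 0 ≤ C * r := mul_nonneg hC hr
  have hCrr : 0 ≤ C * r * r := mul_nonneg hCr hr
  have hfe : f = fun t : ℝ => ∑' n : ℕ, a n / (n.factorial : ℝ) * t ^ n := funext hf
  subst hfe
  constructor
  · intro t
    exact (gur_summable_norm a hnonneg C r hC hr hb t).of_norm
  · intro t ht
    have hderiv1 : deriv (fun t : ℝ => ∑' n : ℕ, a n / (n.factorial : ℝ) * t ^ n)
        = fun t : ℝ => ∑' n : ℕ, a (n + 1) / (n.factorial : ℝ) * t ^ n :=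
      funext fun x => (gur_deriv a hnonneg C r hC hr hb x).deriv
    have hderiv2 : deriv (fun t : ℝ => ∑' n : ℕ, a (n + 1) / (n.factorial : ℝ) * t ^ n)
        = fun t : ℝ => ∑' n : ℕ, a (n + 2) / (n.factorial : ℝ) * t ^ n :=
      funext fun x =>
        (gur_deriv (fun n => a (n + 1)) hnn1 (C * r) r hCr hr hb1 x).deriv
    have hiter : iteratedDeriv 2 (fun t : ℝ => ∑' n : ℕ, a n / (n.factorial : ℝ) * t ^ n) t
        = ∑' n : ℕ, a (n + 2) / (n.factorial : ℝ) * t ^ n := by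
      rw [show (2 : ℕ) = 0 + 1 + 1 from rfl, iteratedDeriv_succ, iteratedDeriv_succ,
        iteratedDeriv_zero, hderiv1, hderiv2]
    rw [hiter, hderiv1]
    -- Cauchy products
    have hA : Summable fun n : ℕ => ‖a n / (n.factorial : ℝ) * t ^ n‖ :=
      gur_summable_norm a hnonneg C r hC hr hb t
    have hA1 : Summable fun n : ℕ => ‖a (n + 1) / (n.factorial : ℝ) * t ^ n‖ :=
      gur_summable_norm (fun n => a (n + 1)) hnn1 (C * r) r hCr hr hb1 t
    have hA2 : Summable fun n : ℕ => ‖a (n + 2) / (n.factorial : ℝ) * t ^ n‖ :=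
      gur_summable_norm (fun n => a (n + 2)) hnn2 (C * r * r) r hCrr hr hb2 t
    rw [sq]
    rw [tsum_mul_tsum_eq_tsum_sum_range_of_summable_norm hA hA2,
      tsum_mul_tsum_eq_tsum_sum_range_of_summable_norm hA1 hA1]
    refine Summable.tsum_le_tsum (fun n => ?_)
      (summable_norm_sum_mul_range_of_summable_norm hA hA2).of_norm
      (summable_norm_sum_mul_range_of_summable_norm hA1 hA1).of_norm
    -- per-n inequality
    have hLn : ∑ k ∈ Finset.range (n + 1),
        (a k / (k.factorial : ℝ) * t ^ k) * (a (n - k + 2) / ((n - k).factorial : ℝ) * t ^ (n - k))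
        = (∑ k ∈ Finset.range (n + 1),
            a k * a (n + 2 - k) / ((k.factorial : ℝ) * ((n - k).factorial : ℝ))) * t ^ n := by
      rw [Finset.sum_mul]
      refine Finset.sum_congr rfl fun k hk => ?_
      rw [Finset.mem_range] at hk
      have hkn : k ≤ n := by omega
      have e1 : n - k + 2 = n + 2 - k := by omega
      have e2 : t ^ n = t ^ k * t ^ (n - k) := by
        rw [← pow_add, Nat.add_sub_cancel' hkn]
      rw [e1, e2]
      ring
    have hRn : ∑ k ∈ Finset.range (n + 1),
        (a (k + 1) / (k.factorial : ℝ) * t ^ k) *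
          (a (n - k + 1) / ((n - k).factorial : ℝ) * t ^ (n - k))
        = (∑ k ∈ Finset.range (n + 1),
            a (k + 1) * a (n + 1 - k) / ((k.factorial : ℝ) * ((n - k).factorial : ℝ))) * t ^ n := by
      rw [Finset.sum_mul]
      refine Finset.sum_congr rfl fun k hk => ?_
      rw [Finset.mem_range] at hk
      have hkn : k ≤ n := by omega
      have e1 : n - k + 1 = n + 1 - k := by omega
      have e2 : t ^ n = t ^ k * t ^ (n - k) := by
        rw [← pow_add, Nat.add_sub_cancel' hkn]
      rw [e1, e2]
      ring
    calc ∑ k ∈ Finset.range (n + 1),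
          (a k / (k.factorial : ℝ) * t ^ k) *
            (a (n - k + 2) / ((n - k).factorial : ℝ) * t ^ (n - k))
        = (∑ k ∈ Finset.range (n + 1),
            a k * a (n + 2 - k) / ((k.factorial : ℝ) * ((n - k).factorial : ℝ))) * t ^ n := hLn
      _ ≤ (∑ k ∈ Finset.range (n + 1),
            a (k + 1) * a (n + 1 - k) / ((k.factorial : ℝ) * ((n - k).factorial : ℝ))) * t ^ n :=
          mul_le_mul_of_nonneg_right (gur_core a hnonneg key n) (pow_nonneg ht n)
      _ = ∑ k ∈ Finset.range (n + 1),
          (a (k + 1) / (k.factorial : ℝ) * t ^ k) *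
            (a (n - k + 1) / ((n - k).factorial : ℝ) * t ^ (n - k)) := hRn.symm
end

section
/- Let (a_n)_{n≥0} be a log-concave sequence of nonnegative reals. Then for every n ≥ 0, the coefficient inequality Σ_{k∈ℤ} [C(n,k-1) − C(n,k)] a_k a_{n-k+2} ≥ 0 holds, where C(n,k) = 0 for k < 0 or k > n and a_k = 0 for k < 0. -/
/-!
Write `b k = a k * a (n + 2 - k)`; the sum becomes `∑ⱼ C(n,j) (b (j+1) - b j)`. Since `b` is
symmetric under `k ↦ n + 2 - k`, the differences `X j = b (j+1) - b j` are antisymmetric under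
`j ↦ n + 1 - j`, so pairing `j` with `n + 1 - j` turns twice the sum into
`∑ⱼ (C(n,j) - C(n,n+1-j)) X j`. For `2 j ≤ n + 1` both factors are nonnegative: the binomial
coefficients increase towards the middle, and log-concavity without internal zeros makes the
ratios `a (i+1) / a i` nonincreasing, so `b` increases towards the middle as well.
-/

open Finset

section LogConcave

variable {R : Type*} [CommRing R] [LinearOrder R] [IsStrictOrderedRing R] {a : ℕ → R}

theorem mul_le_mul_of_logConcave_of_pos (hlc : ∀ n : ℕ, 1 ≤ n → a (n - 1) * a (n + 1) ≤ a n ^ 2)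
    {i j : ℕ} (hij : i ≤ j) (hpos : ∀ m, i ≤ m → m ≤ j → 0 < a m) :
    a i * a (j + 1) ≤ a (i + 1) * a j := by
  induction j, hij using Nat.le_induction with
  | base => rw [mul_comm]
  | succ j hij ih =>
    have hj : 0 < a j := hpos j hij (by omega)
    have hlc_succ : a j * a (j + 2) ≤ a (j + 1) ^ 2 := by simpa using hlc (j + 1) (by omega)
    refine le_of_mul_le_mul_left ?_ hj
    calc a j * (a i * a (j + 1 + 1)) = a i * (a j * a (j + 2)) := by ring
      _ ≤ a i * a (j + 1) ^ 2 :=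
        mul_le_mul_of_nonneg_left hlc_succ (hpos i le_rfl (by omega)).le
      _ = a i * a (j + 1) * a (j + 1) := by ring
      _ ≤ a (i + 1) * a j * a (j + 1) :=
        mul_le_mul_of_nonneg_right (ih fun m him hmj => hpos m him (by omega))
          (hpos (j + 1) (by omega) le_rfl).le
      _ = a j * (a (i + 1) * a (j + 1)) := by ring

variable (hnonneg : ∀ n, 0 ≤ a n)
  (hsupp : ∀ m n k : ℕ, m ≤ n → n ≤ k → 0 < a m → 0 < a k → 0 < a n)
  (hlc : ∀ n : ℕ, 1 ≤ n → a (n - 1) * a (n + 1) ≤ a n ^ 2)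
include hnonneg hsupp hlc

theorem mul_le_mul_of_logConcave {i j : ℕ} (hij : i ≤ j) :
    a i * a (j + 1) ≤ a (i + 1) * a j := by
  rcases (hnonneg i).eq_or_lt with hi | hi
  · rw [← hi, zero_mul]
    exact mul_nonneg (hnonneg _) (hnonneg _)
  rcases (hnonneg (j + 1)).eq_or_lt with hj | hj
  · rw [← hj, mul_zero]
    exact mul_nonneg (hnonneg _) (hnonneg _)
  exact mul_le_mul_of_logConcave_of_pos hlc hij fun m him hmj =>
    hsupp i m (j + 1) him (by omega) hi hj

theorem mul_sub_le_mul_sub_of_logConcave {m k : ℕ} (hk : 2 * k < m) :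
    a k * a (m - k) ≤ a (k + 1) * a (m - (k + 1)) := by
  have h := mul_le_mul_of_logConcave hnonneg hsupp hlc (i := k) (j := m - (k + 1)) (by omega)
  rwa [show m - (k + 1) + 1 = m - k by omega] at h

end LogConcave

theorem Nat.choose_add_one_sub_le_choose {n j : ℕ} (hj : 2 * j ≤ n + 1) :
    n.choose (n + 1 - j) ≤ n.choose j := by
  rcases j with _ | i
  · simp
  · rw [show n + 1 - (i + 1) = n - i by omega, Nat.choose_symm (by omega)]
    rcases (show i < n / 2 ∨ n = 2 * i + 1 by omega) with hi | rfl
    · exact Nat.choose_le_succ_of_lt_half_left hi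
    · exact (Nat.choose_symm_half i).ge

theorem sum_range_choose_pred_sub_choose_mul {R : Type*} [CommRing R] (n : ℕ) (b : ℕ → R) :
    ∑ k ∈ range (n + 3), ((if 1 ≤ k then (n.choose (k - 1) : R) else 0) - n.choose k) * b k
      = ∑ j ∈ range (n + 2), n.choose j * (b (j + 1) - b j) := by
  simp only [sub_mul, mul_sub, sum_sub_distrib]
  congr 1
  · rw [sum_range_succ']
    simp
  · rw [sum_range_succ, Nat.choose_eq_zero_of_lt (by omega : n < n + 2)]
    simp

theorem sum_range_mul_nonneg_of_antisymm {R : Type*} [CommRing R] [LinearOrder R]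
    [IsStrictOrderedRing R] (N : ℕ) (w X : ℕ → R)
    (hX : ∀ j ≤ N, X (N - j) = -X j)
    (hhalf : ∀ j, 2 * j ≤ N → 0 ≤ (w j - w (N - j)) * X j) :
    0 ≤ ∑ j ∈ range (N + 1), w j * X j := by
  have hpair : ∀ j ∈ range (N + 1), 0 ≤ (w j - w (N - j)) * X j := by
    intro j hj
    have hjN : j ≤ N := Nat.lt_succ_iff.mp (mem_range.mp hj)
    rcases le_total (2 * j) N with hle | hge
    · exact hhalf j hle
    · convert hhalf (N - j) (by omega) using 1
      rw [Nat.sub_sub_self hjN, hX j hjN]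
      ring
  have hrefl : ∑ j ∈ range (N + 1), w (N - j) * X (N - j) = ∑ j ∈ range (N + 1), w j * X j := by
    simpa using sum_range_reflect (fun j => w j * X j) (N + 1)
  have htwice : ∑ j ∈ range (N + 1), (w j - w (N - j)) * X j
      = 2 * ∑ j ∈ range (N + 1), w j * X j := by
    calc ∑ j ∈ range (N + 1), (w j - w (N - j)) * X j
        = ∑ j ∈ range (N + 1), (w j * X j + w (N - j) * X (N - j)) := by
          refine sum_congr rfl fun j hj => ?_
          rw [hX j (Nat.lt_succ_iff.mp (mem_range.mp hj))]
          ring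
      _ = 2 * ∑ j ∈ range (N + 1), w j * X j := by rw [sum_add_distrib, hrefl, two_mul]
  linarith [sum_nonneg hpair]

/-- For a nonnegative log-concave sequence `(a n)`,
`∑_k (C(n,k-1) - C(n,k)) a_k a_{n-k+2} ≥ 0`, where `C(n,k) = 0` for `k < 0` or
`k > n` and `a_k = 0` for `k < 0` (the sum effectively runs over `0 ≤ k ≤ n+2`). -/
theorem stmt6 (a : ℕ → ℝ) (hnonneg : ∀ n, 0 ≤ a n)
    (hsupp : ∀ m n k : ℕ, m ≤ n → n ≤ k → 0 < a m → 0 < a k → 0 < a n)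
    (hlc : ∀ n : ℕ, 1 ≤ n → a (n - 1) * a (n + 1) ≤ a n ^ 2) (n : ℕ) :
    0 ≤ ∑ k ∈ Finset.range (n + 3),
      ((if 1 ≤ k then (n.choose (k - 1) : ℝ) else 0) - (n.choose k : ℝ))
        * a k * a (n + 2 - k) := by
  set b : ℕ → ℝ := fun k => a k * a (n + 2 - k) with hb_def
  have hb : ∀ k ≤ n + 2, b (n + 2 - k) = b k := fun k hk => by
    simp only [hb_def, Nat.sub_sub_self hk, mul_comm]
  simp only [mul_assoc]
  rw [sum_range_choose_pred_sub_choose_mul n b]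
  refine sum_range_mul_nonneg_of_antisymm (n + 1) _ (fun j => b (j + 1) - b j) ?_ ?_
  · intro j hj
    rw [show n + 1 - j + 1 = n + 2 - j by omega, hb j (by omega),
      show n + 1 - j = n + 2 - (j + 1) by omega, hb (j + 1) (by omega)]
    ring
  · intro j hj
    refine mul_nonneg (sub_nonneg.mpr (by exact_mod_cast Nat.choose_add_one_sub_le_choose hj)) ?_
    exact sub_nonneg.mpr (mul_sub_le_mul_sub_of_logConcave hnonneg hsupp hlc (by omega))
end

section
/- Let X be a random variable such that the sequence r_n = E[X^{2n}]/E[G^{2n}] (with G standard Gaussian, r_0 = 1) is log-concave. Then for all even integers 2 ≤ p ≤ q, (E|X|^q)^{1/q} ≤ (‖G‖_q/‖G‖_p) · (E|X|^p)^{1/p}, where ‖G‖_r = (E|G|^r)^{1/r}. -/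
open MeasureTheory ProbabilityTheory Real Filter
open scoped Nat ENNReal NNReal

lemma intg (k : ℕ) : Integrable (fun x : ℝ => x ^ k * Real.exp (-(2⁻¹:ℝ) * x ^ 2)) := by
  have h := integrable_rpow_mul_exp_neg_mul_sq (b := (2⁻¹:ℝ)) (by norm_num)
    (s := (k:ℝ)) (lt_of_lt_of_le neg_one_lt_zero (Nat.cast_nonneg k))
  simpa [Real.rpow_natCast] using h

lemma Mrec (n : ℕ) :
    ∫ x : ℝ, x ^ (2*n+2) * Real.exp (-(2⁻¹:ℝ) * x ^ 2) =
      (2*n+1 : ℝ) * ∫ x : ℝ, x ^ (2*n) * Real.exp (-(2⁻¹:ℝ) * x ^ 2) := by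
  set f : ℝ → ℝ := fun x => -(x ^ (2*n+1) * Real.exp (-(2⁻¹:ℝ) * x ^ 2)) with hf
  set f' : ℝ → ℝ := fun x =>
      x ^ (2*n+2) * Real.exp (-(2⁻¹:ℝ) * x ^ 2)
        - (2*n+1 : ℝ) * (x ^ (2*n) * Real.exp (-(2⁻¹:ℝ) * x ^ 2)) with hf'
  have hderiv : ∀ x : ℝ, HasDerivAt f (f' x) x := by
    intro x
    have h1 : HasDerivAt (fun x : ℝ => x ^ (2*n+1)) ((2*n+1 : ℝ) * x ^ (2*n)) x := by
      simpa using hasDerivAt_pow (2*n+1) x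
    have h2 : HasDerivAt (fun x : ℝ => Real.exp (-(2⁻¹:ℝ) * x ^ 2))
        (Real.exp (-(2⁻¹:ℝ) * x ^ 2) * (-(2⁻¹:ℝ) * (2 * x))) x := by
      have hx : HasDerivAt (fun x : ℝ => -(2⁻¹:ℝ) * x ^ 2) (-(2⁻¹:ℝ) * (2 * x)) x := by
        simpa using ((hasDerivAt_pow 2 x).const_mul (-(2⁻¹:ℝ)))
      exact hx.exp
    have := (h1.mul h2).neg
    refine this.congr_deriv ?_
    simp only [hf']
    ring
  have hint' : Integrable f' := (intg (2*n+2)).sub ((intg (2*n)).const_mul _)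
  have hintf : Integrable f := ((intg (2*n+1)).neg)
  have h0 := integral_eq_zero_of_hasDerivAt_of_integrable hderiv hint' hintf
  rw [integral_sub (intg (2*n+2)) ((intg (2*n)).const_mul _), integral_const_mul] at h0
  linarith

lemma Mval (n : ℕ) :
    ∫ x : ℝ, x ^ (2*n) * Real.exp (-(2⁻¹:ℝ) * x ^ 2) = ((2*n-1)‼ : ℝ) * Real.sqrt (2*π) := by
  induction n with
  | zero =>
    simp only [Nat.mul_zero, pow_zero, one_mul]
    rw [integral_gaussian]
    have h1 : π / (2⁻¹:ℝ) = 2 * π := by ring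
    rw [h1]
    norm_num [Nat.doubleFactorial]
  | succ n ih =>
    have h := Mrec n
    have : 2*(n+1) = 2*n+2 := by ring
    rw [this, h, ih]
    have hd : ((2*n+2-1)‼ : ℕ) = (2*n+1) * (2*n-1)‼ := by
      have h2 : 2*n+2-1 = 2*n+1 := by omega
      rw [h2]
      rcases n with _ | n
      · simp [Nat.doubleFactorial]
      · have : 2*(n+1)+1 = (2*n+1) + 2 := by ring
        rw [this, Nat.doubleFactorial_add_two]
        congr 1 <;> omega
    rw [hd]
    push_cast
    ring

lemma gauss_moment (n : ℕ) :
    ∫ x : ℝ, |x| ^ (2*n) ∂(gaussianReal 0 1) = ((2*n-1)‼ : ℝ) := by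
  have habs : ∀ x : ℝ, |x| ^ (2*n) = x ^ (2*n) := fun x => (Even.pow_abs ⟨n, by ring⟩ x)
  simp only [habs]
  rw [gaussianReal_of_var_ne_zero 0 one_ne_zero]
  have hpdf : gaussianPDF 0 1 = fun x => ((Real.toNNReal (gaussianPDFReal 0 1 x) : ℝ≥0) : ℝ≥0∞) := by
    ext x; rfl
  rw [hpdf, integral_withDensity_eq_integral_smul
      (f := fun x => Real.toNNReal (gaussianPDFReal 0 1 x))
      (measurable_real_toNNReal.comp (measurable_gaussianPDFReal 0 1)) (fun x => x ^ (2*n))]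
  have : ∀ x : ℝ, (Real.toNNReal (gaussianPDFReal 0 1 x) : ℝ≥0) • (x ^ (2*n))
      = (Real.sqrt (2*π))⁻¹ * (x ^ (2*n) * Real.exp (-(2⁻¹:ℝ) * x ^ 2)) := by
    intro x
    rw [NNReal.smul_def, smul_eq_mul, Real.coe_toNNReal _ (gaussianPDFReal_nonneg 0 1 x)]
    unfold gaussianPDFReal
    push_cast
    rw [mul_one, sub_zero]
    ring_nf
  simp only [this]
  rw [integral_const_mul, Mval n]
  have hs : Real.sqrt (2*π) ≠ 0 := by positivity
  field_simp

lemma lc_step {r : ℕ → ℝ} (hpos : ∀ k, 0 < r k) (h0 : r 0 = 1)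
    (hlc : ∀ n : ℕ, 1 ≤ n → r (n - 1) * r (n + 1) ≤ r n ^ 2) :
    ∀ n : ℕ, r (n+1) ^ n ≤ r n ^ (n+1) := by
  intro n
  induction n with
  | zero => simp [h0]
  | succ n ih =>
    have h := hlc (n+1) (by omega)
    simp only [Nat.add_sub_cancel] at h
    have h1 : (r n * r (n+2)) ^ (n+1) ≤ (r (n+1) ^ 2) ^ (n+1) :=
      pow_le_pow_left₀ (mul_pos (hpos _) (hpos _)).le h _
    have h2 : (r (n+1) ^ 2) ^ (n+1) = r (n+1) ^ (n+2) * r (n+1) ^ n := by ring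
    have h3 : r (n+1) ^ (n+2) * r (n+1) ^ n ≤ r (n+1) ^ (n+2) * r n ^ (n+1) :=
      mul_le_mul_of_nonneg_left ih (pow_nonneg (hpos _).le _)
    have h4 : r (n+2) ^ (n+1) * r n ^ (n+1) ≤ r (n+1) ^ (n+2) * r n ^ (n+1) := by
      calc r (n+2) ^ (n+1) * r n ^ (n+1) = (r n * r (n+2)) ^ (n+1) := by rw [mul_pow]; ring
        _ ≤ r (n+1) ^ (n+2) * r (n+1) ^ n := by rw [← h2]; exact h1
        _ ≤ _ := h3
    exact le_of_mul_le_mul_right h4 (pow_pos (hpos _) _)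

lemma lc_chain {r : ℕ → ℝ} (hpos : ∀ k, 0 < r k) (h0 : r 0 = 1)
    (hlc : ∀ n : ℕ, 1 ≤ n → r (n - 1) * r (n + 1) ≤ r n ^ 2)
    (m n : ℕ) (hmn : m ≤ n) : r n ^ m ≤ r m ^ n := by
  induction n, hmn using Nat.le_induction with
  | base => exact le_refl _
  | succ n hmn ih =>
    rcases Nat.eq_zero_or_pos n with hn | hn
    · have hm0 : m = 0 := by omega
      subst hm0; subst hn; simp [h0]
    · refine (pow_le_pow_iff_left₀ (pow_nonneg (hpos _).le _) (pow_nonneg (hpos _).le _) hn.ne').mp ?_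
      calc (r (n+1) ^ m) ^ n = (r (n+1) ^ n) ^ m := by ring
        _ ≤ (r n ^ (n+1)) ^ m := pow_le_pow_left₀ (pow_nonneg (hpos _).le _) (lc_step hpos h0 hlc n) _
        _ = (r n ^ m) ^ (n+1) := by ring
        _ ≤ (r m ^ n) ^ (n+1) := pow_le_pow_left₀ (pow_nonneg (hpos _).le _) ih _
        _ = (r m ^ (n+1)) ^ n := by ring

/-- If the normalised moment sequence `r n = E X^(2n) / E G^(2n)` (with
`E G^(2n) = (2n-1)!!`) of a random variable `X` is log-concave, then for even
integers `2 ≤ p ≤ q`, `‖X‖_q ≤ (‖G‖_q / ‖G‖_p) ‖X‖_p`. -/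
theorem stmt10 {Ω : Type*} [MeasureSpace Ω] (μ : Measure Ω) [IsProbabilityMeasure μ]
    (X : Ω → ℝ) (hX : Measurable X)
    (hint : ∀ n : ℕ, Integrable (fun ω => X ω ^ n) μ)
    (r : ℕ → ℝ)
    (hr : ∀ n : ℕ, r n = (∫ ω, X ω ^ (2 * n) ∂μ) / ((2 * n - 1)‼ : ℝ))
    (hlc : ∀ n : ℕ, 1 ≤ n → r (n - 1) * r (n + 1) ≤ r n ^ 2)
    (p q : ℕ) (hp2 : 2 ≤ p) (hpq : p ≤ q) (hpe : Even p) (hqe : Even q) :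
    (∫ ω, |X ω| ^ q ∂μ) ^ ((1 : ℝ) / q) ≤
      ((∫ x : ℝ, |x| ^ q ∂(gaussianReal 0 1)) ^ ((1 : ℝ) / q) /
        (∫ x : ℝ, |x| ^ p ∂(gaussianReal 0 1)) ^ ((1 : ℝ) / p)) *
        (∫ ω, |X ω| ^ p ∂μ) ^ ((1 : ℝ) / p) := by
  obtain ⟨m, hm⟩ := hpe
  obtain ⟨n, hn⟩ := hqe
  have hp' : p = 2 * m := by omega
  have hq' : q = 2 * n := by omega
  subst hp'
  subst hq'
  have hm1 : 1 ≤ m := by omega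
  have hmn : m ≤ n := by omega
  clear hm hn hp2 hpq
  -- notation
  set Dq : ℝ := ((2 * n - 1)‼ : ℝ) with hDq
  set Dp : ℝ := ((2 * m - 1)‼ : ℝ) with hDp
  have hDqpos : 0 < Dq := Nat.cast_pos.mpr (Nat.doubleFactorial_pos _)
  have hDppos : 0 < Dp := Nat.cast_pos.mpr (Nat.doubleFactorial_pos _)
  -- gaussian moments
  rw [gauss_moment n, gauss_moment m]
  -- |X|^even = X^even
  have habsq : (fun ω => |X ω| ^ (2 * n)) = fun ω => X ω ^ (2 * n) := by
    funext ω; exact Even.pow_abs ⟨n, by ring⟩ _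
  have habsp : (fun ω => |X ω| ^ (2 * m)) = fun ω => X ω ^ (2 * m) := by
    funext ω; exact Even.pow_abs ⟨m, by ring⟩ _
  rw [show (∫ ω, |X ω| ^ (2 * n) ∂μ) = ∫ ω, X ω ^ (2 * n) ∂μ by rw [habsq],
    show (∫ ω, |X ω| ^ (2 * m) ∂μ) = ∫ ω, X ω ^ (2 * m) ∂μ by rw [habsp]]
  set A : ℝ := ∫ ω, X ω ^ (2 * n) ∂μ with hA
  set B : ℝ := ∫ ω, X ω ^ (2 * m) ∂μ with hB
  have hAnn : 0 ≤ A := integral_nonneg fun ω => Even.pow_nonneg ⟨n, by ring⟩ _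
  have hBnn : 0 ≤ B := integral_nonneg fun ω => Even.pow_nonneg ⟨m, by ring⟩ _
  -- key polynomial inequality
  have key : A ^ (2 * m) * Dp ^ (2 * n) ≤ Dq ^ (2 * m) * B ^ (2 * n) := by
    by_cases hB0 : B = 0
    · -- X = 0 a.e., hence A = 0
      have hae : (fun ω => X ω ^ (2 * m)) =ᵐ[μ] 0 := by
        rw [← integral_eq_zero_iff_of_nonneg
          (fun ω => Even.pow_nonneg ⟨m, by ring⟩ _) (hint (2 * m))]
        exact hB0
      have hXae : X =ᵐ[μ] 0 := by
        filter_upwards [hae] with ω hω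
        have : X ω ^ (2 * m) = 0 := hω
        have := pow_eq_zero_iff (n := 2 * m) (by omega) |>.mp this
        simpa using this
      have hA0 : A = 0 := by
        rw [hA]
        rw [integral_eq_zero_iff_of_nonneg
          (fun ω => Even.pow_nonneg ⟨n, by ring⟩ _) (hint (2 * n))]
        filter_upwards [hXae] with ω hω
        simp only [Pi.zero_apply] at hω ⊢
        rw [hω]
        exact zero_pow (by omega)
      rw [hA0, hB0]
      rw [zero_pow (by omega : 2 * m ≠ 0), zero_pow (by omega : 2 * n ≠ 0)]
      simp
    · have hBpos : 0 < B := lt_of_le_of_ne hBnn (Ne.symm hB0)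
      have hXne : ¬ X =ᵐ[μ] 0 := by
        intro h
        apply hB0
        rw [hB]
        rw [integral_eq_zero_iff_of_nonneg
          (fun ω => Even.pow_nonneg ⟨m, by ring⟩ _) (hint (2 * m))]
        filter_upwards [h] with ω hω
        simp only [Pi.zero_apply] at hω ⊢
        rw [hω]
        exact zero_pow (by omega)
      have hmom : ∀ k : ℕ, 1 ≤ k → 0 < ∫ ω, X ω ^ (2 * k) ∂μ := by
        intro k hk
        rcases lt_or_eq_of_le (integral_nonneg (μ := μ) (f := fun ω => X ω ^ (2 * k))
          (fun ω => Even.pow_nonneg ⟨k, by ring⟩ _)) with h | h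
        · exact h
        · exfalso
          apply hXne
          have h0 : (fun ω => X ω ^ (2 * k)) =ᵐ[μ] 0 := by
            rw [← integral_eq_zero_iff_of_nonneg
              (fun ω => Even.pow_nonneg ⟨k, by ring⟩ _) (hint (2 * k))]
            exact h.symm
          filter_upwards [h0] with ω hω
          have : X ω ^ (2 * k) = 0 := hω
          have := pow_eq_zero_iff (n := 2 * k) (by omega) |>.mp this
          simpa using this
      have hr0 : r 0 = 1 := by
        rw [hr 0]
        simp
      have hrpos : ∀ k, 0 < r k := by
        intro k
        rcases Nat.eq_zero_or_pos k with hk | hk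
        · rw [hk, hr0]; norm_num
        · rw [hr k]
          exact div_pos (hmom k hk) (by exact_mod_cast Nat.doubleFactorial_pos _)
      have hchain : r n ^ m ≤ r m ^ n := lc_chain hrpos hr0 hlc m n hmn
      have hsq : r n ^ (2 * m) ≤ r m ^ (2 * n) := by
        calc r n ^ (2 * m) = (r n ^ m) ^ 2 := by ring
          _ ≤ (r m ^ n) ^ 2 := pow_le_pow_left₀ (pow_nonneg (hrpos _).le _) hchain 2
          _ = r m ^ (2 * n) := by ring
      have hAeq : A = r n * Dq := by
        rw [hr n]; field_simp; rfl
      have hBeq : B = r m * Dp := by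
        rw [hr m]; field_simp; rfl
      calc A ^ (2 * m) * Dp ^ (2 * n)
          = r n ^ (2 * m) * (Dq ^ (2 * m) * Dp ^ (2 * n)) := by rw [hAeq, mul_pow]; ring
        _ ≤ r m ^ (2 * n) * (Dq ^ (2 * m) * Dp ^ (2 * n)) :=
            mul_le_mul_of_nonneg_right hsq (by positivity)
        _ = Dq ^ (2 * m) * B ^ (2 * n) := by rw [hBeq, mul_pow]; ring
  -- now convert to rpow inequality
  have hqR : ((2 * n : ℕ) : ℝ) ≠ 0 := Nat.cast_ne_zero.mpr (by omega)
  have hpR : ((2 * m : ℕ) : ℝ) ≠ 0 := Nat.cast_ne_zero.mpr (by omega)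
  have hRHSnn : 0 ≤ Dq ^ ((1:ℝ) / (2 * n : ℕ)) / Dp ^ ((1:ℝ) / (2 * m : ℕ))
      * B ^ ((1:ℝ) / (2 * m : ℕ)) := by positivity
  have hLHSnn : 0 ≤ A ^ ((1:ℝ) / (2 * n : ℕ)) := Real.rpow_nonneg hAnn _
  have hN : (2 * m) * (2 * n) ≠ 0 := Nat.mul_ne_zero (by omega) (by omega)
  refine (pow_le_pow_iff_left₀ hLHSnn hRHSnn hN).mp ?_
  have expandq : ∀ x : ℝ, 0 ≤ x →
      (x ^ ((1:ℝ) / ((2 * n : ℕ) : ℝ))) ^ ((2 * m) * (2 * n)) = x ^ (2 * m) := by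
    intro x hx
    rw [← Real.rpow_natCast (x ^ ((1:ℝ) / ((2 * n : ℕ) : ℝ))) _, ← Real.rpow_mul hx]
    have hexp : (1:ℝ) / ((2 * n : ℕ) : ℝ) * (((2 * m) * (2 * n) : ℕ) : ℝ)
        = ((2 * m : ℕ) : ℝ) := by
      have hn0 : ((n:ℕ):ℝ) ≠ 0 := Nat.cast_ne_zero.mpr (by omega)
      push_cast
      field_simp
    rw [hexp, Real.rpow_natCast]
  have expandp : ∀ x : ℝ, 0 ≤ x →
      (x ^ ((1:ℝ) / ((2 * m : ℕ) : ℝ))) ^ ((2 * m) * (2 * n)) = x ^ (2 * n) := by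
    intro x hx
    rw [← Real.rpow_natCast (x ^ ((1:ℝ) / ((2 * m : ℕ) : ℝ))) _, ← Real.rpow_mul hx]
    have hexp : (1:ℝ) / ((2 * m : ℕ) : ℝ) * (((2 * m) * (2 * n) : ℕ) : ℝ)
        = ((2 * n : ℕ) : ℝ) := by
      have hm0 : ((m:ℕ):ℝ) ≠ 0 := Nat.cast_ne_zero.mpr (by omega)
      push_cast
      field_simp
    rw [hexp, Real.rpow_natCast]
  rw [mul_pow, div_pow, expandq A hAnn, expandq Dq hDqpos.le, expandp Dp hDppos.le,
    expandp B hBnn]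
  rw [div_mul_eq_mul_div, le_div_iff₀ (pow_pos hDppos _)]
  exact key
end

section
/- Let X₁, X₂ be independent random variables each with density (2π)^{−1/2} x² e^{−x²/2}, and for λ ∈ (0,1) let g_λ be the density of √λ X₁ + √(1−λ) X₂. Then g_λ(x) = (x² + λ(1−λ)(3 − 6x² + x⁴)) e^{−x²/2}/√(2π). -/
open MeasureTheory Real

lemma myIntJ {b : ℝ} (hb : 0 < b) (n : ℕ) :
    Integrable (fun x : ℝ => x ^ n * Real.exp (-b * x ^ 2)) := by
  have h := integrable_rpow_mul_exp_neg_mul_sq hb (s := n)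
    (by exact neg_one_lt_zero.trans_le (Nat.cast_nonneg n))
  simpa [Real.rpow_natCast] using h

lemma myJ1 {b : ℝ} (hb : 0 < b) : ∫ x : ℝ, x ^ 1 * Real.exp (-b * x ^ 2) = 0 := by
  have hderiv : ∀ v : ℝ, HasDerivAt (fun y : ℝ => (-1/(2*b)) * Real.exp (-b * y ^ 2))
      (v ^ 1 * Real.exp (-b * v ^ 2)) v := by
    intro v
    have h1 : HasDerivAt (fun y : ℝ => -b * y ^ 2) (-b * (2 * v ^ 1)) v :=
      ((hasDerivAt_pow 2 v).const_mul (-b))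
    have := (h1.exp).const_mul (-1/(2*b))
    refine this.congr_deriv ?_
    field_simp
  exact integral_eq_zero_of_hasDerivAt_of_integrable hderiv (myIntJ hb 1)
    ((integrable_exp_neg_mul_sq hb).const_mul _)

lemma myJrec {b : ℝ} (hb : 0 < b) (k : ℕ) :
    ∫ x : ℝ, x ^ (k+2) * Real.exp (-b * x ^ 2) =
      ((k:ℝ)+1)/(2*b) * ∫ x : ℝ, x ^ k * Real.exp (-b * x ^ 2) := by
  have hderiv : ∀ v : ℝ, HasDerivAt (fun y : ℝ => y ^ (k+1) * Real.exp (-b * y ^ 2))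
      (((k:ℝ)+1) * (v ^ k * Real.exp (-b * v ^ 2)) - 2*b*(v ^ (k+2) * Real.exp (-b * v ^ 2))) v := by
    intro v
    have h1 : HasDerivAt (fun y : ℝ => -b * y ^ 2) (-b * (2 * v ^ 1)) v :=
      ((hasDerivAt_pow 2 v).const_mul (-b))
    have := (hasDerivAt_pow (k+1) v).mul h1.exp
    refine this.congr_deriv ?_
    push_cast
    ring
  have hint : Integrable (fun v : ℝ => ((k:ℝ)+1) * (v ^ k * Real.exp (-b * v ^ 2)) -
      2*b*(v ^ (k+2) * Real.exp (-b * v ^ 2))) :=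
    ((myIntJ hb k).const_mul _).sub ((myIntJ hb (k+2)).const_mul _)
  have hz := integral_eq_zero_of_hasDerivAt_of_integrable hderiv hint (myIntJ hb (k+1))
  rw [integral_sub ((myIntJ hb k).const_mul _) ((myIntJ hb (k+2)).const_mul _),
    integral_const_mul, integral_const_mul] at hz
  have hb' : (2:ℝ)*b ≠ 0 := by positivity
  rw [div_mul_eq_mul_div, eq_div_iff hb']
  linarith

/-- The density `g_λ` of `√λ X₁ + √(1-λ) X₂`, where `X₁, X₂` are independent with
density `f(x) = (2π)^{-1/2} x² e^{-x²/2}`, given by the convolution formula, equals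
`(x² + λ(1-λ)(3 - 6x² + x⁴)) e^{-x²/2}/√(2π)`. -/
theorem stmt13 (lam : ℝ) (hlam : lam ∈ Set.Ioo (0 : ℝ) 1) (f : ℝ → ℝ)
    (hf : ∀ x, f x = x ^ 2 * Real.exp (-x ^ 2 / 2) / Real.sqrt (2 * π)) (x : ℝ) :
    (∫ u : ℝ, (1 / Real.sqrt (lam * (1 - lam))) * f (u / Real.sqrt lam) *
        f ((x - u) / Real.sqrt (1 - lam))) =
      (x ^ 2 + lam * (1 - lam) * (3 - 6 * x ^ 2 + x ^ 4)) *
        Real.exp (-x ^ 2 / 2) / Real.sqrt (2 * π) := by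
  obtain ⟨hl0, hl1⟩ := hlam
  have h1 : 0 < 1 - lam := by linarith
  have hl0' : lam ≠ 0 := ne_of_gt hl0
  have h1' : (1:ℝ) - lam ≠ 0 := ne_of_gt h1
  have hs0 : 0 < lam * (1 - lam) := mul_pos hl0 h1
  have h2π : (0:ℝ) < 2 * π := by positivity
  have hc0 : 0 < 1 / (2 * (lam * (1 - lam))) := by positivity
  set c : ℝ := 1 / (2 * (lam * (1 - lam))) with hc
  set K : ℝ := Real.exp (-x ^ 2 / 2) /
    (2 * π * (lam * (1 - lam)) * Real.sqrt (lam * (1 - lam))) with hK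
  have key : ∀ u : ℝ, (1 / Real.sqrt (lam * (1 - lam))) * f (u / Real.sqrt lam) *
      f ((x - u) / Real.sqrt (1 - lam)) =
      K * (u ^ 2 * (x - u) ^ 2 * Real.exp (-c * (u - lam * x) ^ 2)) := by
    intro u
    rw [hf, hf]
    have e1 : (u / Real.sqrt lam) ^ 2 = u ^ 2 / lam := by
      rw [div_pow, Real.sq_sqrt hl0.le]
    have e2 : ((x - u) / Real.sqrt (1 - lam)) ^ 2 = (x - u) ^ 2 / (1 - lam) := by
      rw [div_pow, Real.sq_sqrt h1.le]
    rw [e1, e2]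
    have eexp : Real.exp (-(u ^ 2 / lam) / 2) * Real.exp (-((x - u) ^ 2 / (1 - lam)) / 2) =
        Real.exp (-x ^ 2 / 2) * Real.exp (-c * (u - lam * x) ^ 2) := by
      rw [← Real.exp_add, ← Real.exp_add]
      congr 1
      rw [hc]
      field_simp
      ring
    have e2π : Real.sqrt (2 * π) * Real.sqrt (2 * π) = 2 * π :=
      Real.mul_self_sqrt h2π.le
    calc (1 / Real.sqrt (lam * (1 - lam))) *
          (u ^ 2 / lam * Real.exp (-(u ^ 2 / lam) / 2) / Real.sqrt (2 * π)) *
          ((x - u) ^ 2 / (1 - lam) * Real.exp (-((x - u) ^ 2 / (1 - lam)) / 2) / Real.sqrt (2 * π))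
        = (u ^ 2 * (x - u) ^ 2) *
            (Real.exp (-(u ^ 2 / lam) / 2) * Real.exp (-((x - u) ^ 2 / (1 - lam)) / 2)) /
            (Real.sqrt (lam * (1 - lam)) * (lam * (1 - lam)) *
              (Real.sqrt (2 * π) * Real.sqrt (2 * π))) := by
          field_simp
      _ = _ := by
          rw [eexp, e2π, hK]
          field_simp
  simp only [key]
  rw [integral_const_mul]
  have hshift : (∫ u : ℝ, u ^ 2 * (x - u) ^ 2 * Real.exp (-c * (u - lam * x) ^ 2)) =
      ∫ v : ℝ, (v + lam * x) ^ 2 * (x - (v + lam * x)) ^ 2 * Real.exp (-c * v ^ 2) := by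
    rw [← integral_add_right_eq_self
        (fun u : ℝ => u ^ 2 * (x - u) ^ 2 * Real.exp (-c * (u - lam * x) ^ 2)) (lam * x)]
    simp only [add_sub_cancel_right]
  rw [hshift]
  have hexp : ∀ v : ℝ, (v + lam * x) ^ 2 * (x - (v + lam * x)) ^ 2 * Real.exp (-c * v ^ 2) =
      (lam * (1 - lam) * x ^ 2) ^ 2 * Real.exp (-c * v ^ 2)
      + (2 * (lam * (1 - lam) * x ^ 2) * ((1 - 2 * lam) * x)) * (v ^ 1 * Real.exp (-c * v ^ 2))
      + ((1 - 6 * (lam * (1 - lam))) * x ^ 2) * (v ^ 2 * Real.exp (-c * v ^ 2))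
      + (-2 * ((1 - 2 * lam) * x)) * (v ^ 3 * Real.exp (-c * v ^ 2))
      + v ^ 4 * Real.exp (-c * v ^ 2) := by
    intro v; ring
  simp only [hexp]
  have i0 : Integrable (fun v : ℝ => Real.exp (-c * v ^ 2)) := integrable_exp_neg_mul_sq hc0
  have I0 : Integrable (fun v : ℝ => (lam * (1 - lam) * x ^ 2) ^ 2 * Real.exp (-c * v ^ 2)) :=
    i0.const_mul _
  have I1 := ((myIntJ hc0 1).const_mul (2 * (lam * (1 - lam) * x ^ 2) * ((1 - 2 * lam) * x)))
  have I2 := ((myIntJ hc0 2).const_mul ((1 - 6 * (lam * (1 - lam))) * x ^ 2))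
  have I3 := ((myIntJ hc0 3).const_mul (-2 * ((1 - 2 * lam) * x)))
  have I4 := myIntJ hc0 4
  have I01 : Integrable (fun v : ℝ => (lam * (1 - lam) * x ^ 2) ^ 2 * Real.exp (-c * v ^ 2)
      + (2 * (lam * (1 - lam) * x ^ 2) * ((1 - 2 * lam) * x)) * (v ^ 1 * Real.exp (-c * v ^ 2))) :=
    I0.add I1
  have I012 : Integrable (fun v : ℝ => (lam * (1 - lam) * x ^ 2) ^ 2 * Real.exp (-c * v ^ 2)
      + (2 * (lam * (1 - lam) * x ^ 2) * ((1 - 2 * lam) * x)) * (v ^ 1 * Real.exp (-c * v ^ 2))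
      + ((1 - 6 * (lam * (1 - lam))) * x ^ 2) * (v ^ 2 * Real.exp (-c * v ^ 2))) :=
    I01.add I2
  have I0123 : Integrable (fun v : ℝ => (lam * (1 - lam) * x ^ 2) ^ 2 * Real.exp (-c * v ^ 2)
      + (2 * (lam * (1 - lam) * x ^ 2) * ((1 - 2 * lam) * x)) * (v ^ 1 * Real.exp (-c * v ^ 2))
      + ((1 - 6 * (lam * (1 - lam))) * x ^ 2) * (v ^ 2 * Real.exp (-c * v ^ 2))
      + (-2 * ((1 - 2 * lam) * x)) * (v ^ 3 * Real.exp (-c * v ^ 2))) :=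
    I012.add I3
  rw [integral_add I0123 I4, integral_add I012 I3, integral_add I01 I2, integral_add I0 I1,
    integral_const_mul, integral_const_mul, integral_const_mul, integral_const_mul]
  have hJ0 : (∫ v : ℝ, Real.exp (-c * v ^ 2)) = Real.sqrt (π / c) := integral_gaussian c
  have hJ0' : (∫ v : ℝ, v ^ 0 * Real.exp (-c * v ^ 2)) = Real.sqrt (π / c) := by
    simpa using hJ0
  have hJ1 := myJ1 hc0
  have hJ2 : (∫ v : ℝ, v ^ 2 * Real.exp (-c * v ^ 2)) =
      1 / (2 * c) * Real.sqrt (π / c) := by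
    have h := myJrec hc0 0
    rw [hJ0'] at h
    simpa using h
  have hJ3 : (∫ v : ℝ, v ^ 3 * Real.exp (-c * v ^ 2)) = 0 := by
    have h := myJrec hc0 1
    rw [hJ1] at h
    simpa using h
  have hJ4 : (∫ v : ℝ, v ^ 4 * Real.exp (-c * v ^ 2)) =
      3 / (2 * c) * (1 / (2 * c) * Real.sqrt (π / c)) := by
    have h := myJrec hc0 2
    rw [hJ2] at h
    convert h using 2
    norm_num
  rw [hJ0, hJ1, hJ2, hJ3, hJ4]
  have h2c : 1 / (2 * c) = lam * (1 - lam) := by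
    rw [hc]
    field_simp
  have hsq : Real.sqrt (π / c) = Real.sqrt (2 * π) * Real.sqrt (lam * (1 - lam)) := by
    rw [← Real.sqrt_mul h2π.le]
    congr 1
    rw [hc]
    field_simp
  have h2c' : 3 / (2 * c) = 3 * (lam * (1 - lam)) := by
    rw [hc]; field_simp
  rw [h2c', h2c, hsq, hK]
  have hP0 : Real.sqrt (2 * π) ≠ 0 := by positivity
  have hS0 : Real.sqrt (lam * (1 - lam)) ≠ 0 := by positivity
  have e2π : Real.sqrt (2 * π) ^ 2 = 2 * π := Real.sq_sqrt h2π.le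
  have hss : Real.sqrt (lam * (1 - lam)) ^ 2 = lam * (1 - lam) := Real.sq_sqrt hs0.le
  set P := Real.sqrt (2 * π) with hPdef
  set S := Real.sqrt (lam * (1 - lam)) with hSdef
  rw [← e2π, ← hss]
  field_simp
  ring
end

section
/- For p ≥ 3, the function x ↦ |√x + 1|^p + |√x − 1|^p + αx + β is convex on (0, ∞) for any reals α, β; equivalently, x ↦ (x+1)^p + |x−1|^p is convex as a function of x² on (0,∞), i.e., h(√x) is convex on (0,∞) where h(x) = |x+1|^p + |x−1|^p. -/
open Real Set

private lemma keyA15 {r : ℝ} (hr : 1 ≤ r) {t : ℝ} (ht : t ∈ Ico (0:ℝ) 1) :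
    (1+t)^r * (1 - r*t) ≤ (1-t)^r * (1 + r*t) := by
  set D : ℝ → ℝ := fun t => (1-t)^r * (1 + r*t) - (1+t)^r * (1 - r*t) with hDdef
  have hderiv : ∀ u ∈ Set.Ioo (0:ℝ) 1, HasDerivAt D
      (r*(r+1)*u*((1+u)^(r-1) - (1-u)^(r-1))) u := by
    intro u hu
    have h1 : (1:ℝ) - u ≠ 0 := by nlinarith [hu.2]
    have h2 : (1:ℝ) + u ≠ 0 := by nlinarith [hu.1]
    have d1 : HasDerivAt (fun t : ℝ => (1-t)^r) ((-1) * r * (1-u)^(r-1)) u :=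
      ((hasDerivAt_id u).const_sub 1).rpow_const (Or.inl h1)
    have d2 : HasDerivAt (fun t : ℝ => (1+t)^r) ((1:ℝ) * r * (1+u)^(r-1)) u :=
      ((hasDerivAt_id u).const_add 1).rpow_const (Or.inl h2)
    have d3 : HasDerivAt (fun t : ℝ => 1 + r*t) r u := by
      simpa using ((hasDerivAt_id u).const_mul r).const_add 1
    have d4 : HasDerivAt (fun t : ℝ => 1 - r*t) (-r) u := by
      simpa using ((hasDerivAt_id u).const_mul r).const_sub 1
    have := ((d1.mul d3).sub (d2.mul d4))
    refine this.congr_deriv ?_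
    have e1 : (1-u)^r = (1-u)^(r-1) * (1-u) := by
      rw [← Real.rpow_add_one h1]; ring_nf
    have e2 : (1+u)^r = (1+u)^(r-1) * (1+u) := by
      rw [← Real.rpow_add_one h2]; ring_nf
    rw [e1, e2]; ring
  have hcont : ContinuousOn D (Set.Ico (0:ℝ) 1) := by
    have : ∀ x ∈ Set.Ico (0:ℝ) 1, ContinuousAt D x := by
      intro x hx
      have h1 : (1:ℝ) - x ≠ 0 := by nlinarith [hx.2]
      have h2 : (1:ℝ) + x ≠ 0 := by nlinarith [hx.1]
      exact (((continuous_const.sub continuous_id).continuousAt.rpow_const (Or.inl h1)).mul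
        (by fun_prop)).sub
        (((continuous_const.add continuous_id).continuousAt.rpow_const (Or.inl h2)).mul
        (by fun_prop))
    exact fun x hx => (this x hx).continuousWithinAt
  have hmono : MonotoneOn D (Set.Ico (0:ℝ) 1) := by
    apply monotoneOn_of_deriv_nonneg (convex_Ico 0 1) hcont
    · intro x hx
      rw [interior_Ico] at hx
      exact (hderiv x hx).differentiableAt.differentiableWithinAt
    · intro x hx
      rw [interior_Ico] at hx
      rw [(hderiv x hx).deriv]
      have h1 : (0:ℝ) ≤ 1 - x := by linarith [hx.2]
      have hle : (1-x)^(r-1) ≤ (1+x)^(r-1) :=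
        Real.rpow_le_rpow h1 (by linarith [hx.1]) (by linarith)
      have : (0:ℝ) ≤ r*(r+1)*x := mul_nonneg (mul_nonneg (by linarith) (by linarith)) hx.1.le
      nlinarith
  have h0 : D 0 = 0 := by simp [hDdef]
  have := hmono (Set.left_mem_Ico.2 one_pos) ht ht.1
  rw [h0] at this
  simpa [hDdef, sub_nonneg] using this

private lemma keyB15 {p t : ℝ} (hp : 3 ≤ p) (ht : 0 < t) :
    0 ≤ (t+1)^(p-2) * ((p-2)*t - 1) + |t-1|^(p-2) * ((p-2)*t + 1) := by
  have hr : 1 ≤ p - 2 := by linarith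
  rcases le_or_gt 1 ((p-2)*t) with h | h
  · have h1 : (0:ℝ) ≤ (t+1)^(p-2) := Real.rpow_nonneg (by linarith) _
    have h2 : (0:ℝ) ≤ |t-1|^(p-2) := Real.rpow_nonneg (abs_nonneg _) _
    nlinarith
  · have htlt : t < 1 := by nlinarith
    have hA := keyA15 hr (t := t) ⟨ht.le, htlt⟩
    rw [abs_of_nonpos (by linarith), show -(t-1) = 1 - t by ring,
      show t + 1 = 1 + t by ring]
    linarith

/-- the second-derivative expression, in terms of `t = √x`. -/
private lemma psi_nonneg {p t : ℝ} (hp : 3 ≤ p) (ht : 0 < t) (ht1 : t ≠ 1) :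
    0 ≤ p/2 * ((1 + 2*(1/(2*t))) * (p/2-1) * (t^2+2*t+1)^(p/2-1-1) * (1 + t⁻¹)
        + (t^2+2*t+1)^(p/2-1) * (-(1/(2*t)) / t^2)
        + ((1 - 2*(1/(2*t))) * (p/2-1) * (t^2-2*t+1)^(p/2-1-1) * (1 - t⁻¹)
        + (t^2-2*t+1)^(p/2-1) * (1/(2*t) / t^2))) := by
  have hb1 : t^2+2*t+1 = (t+1)^2 := by ring
  have hb2 : t^2-2*t+1 = (t-1)^2 := by ring
  have ht1' : t - 1 ≠ 0 := sub_ne_zero.2 ht1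
  have htp : (0:ℝ) < t + 1 := by linarith
  have hA1 : ((t+1)^2)^(p/2-1) = (t+1)^(p-2) := by
    rw [← Real.rpow_natCast (t+1) 2, ← Real.rpow_mul htp.le]
    congr 1; push_cast; ring
  have hB1 : ((t-1)^2)^(p/2-1) = |t-1|^(p-2) := by
    rw [← sq_abs, ← Real.rpow_natCast |t-1| 2, ← Real.rpow_mul (abs_nonneg _)]
    congr 1; push_cast; ring
  have hA2 : ((t+1)^2)^(p/2-1-1) = (t+1)^(p-2) / (t+1)^2 := by
    rw [eq_div_iff (by positivity), ← hA1, ← Real.rpow_add_one (by positivity)]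
    congr 1; ring
  have hB2 : ((t-1)^2)^(p/2-1-1) = |t-1|^(p-2) / (t-1)^2 := by
    rw [eq_div_iff (pow_ne_zero 2 ht1'), ← hB1,
      ← Real.rpow_add_one (pow_ne_zero 2 ht1')]
    congr 1; ring
  rw [hb1, hb2, hA1, hB1, hA2, hB2]
  have key := keyB15 hp ht
  have hEq : p/2 * ((1 + 2*(1/(2*t))) * (p/2-1) * ((t+1)^(p-2)/(t+1)^2) * (1 + t⁻¹)
        + (t+1)^(p-2) * (-(1/(2*t)) / t^2)
        + ((1 - 2*(1/(2*t))) * (p/2-1) * (|t-1|^(p-2)/(t-1)^2) * (1 - t⁻¹)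
        + |t-1|^(p-2) * (1/(2*t) / t^2)))
      = p/(4*t^3) * ((t+1)^(p-2) * ((p-2)*t - 1) + |t-1|^(p-2) * ((p-2)*t + 1)) := by
    field_simp
    ring
  rw [hEq]
  have hp4 : 0 ≤ p/(4*t^3) := by positivity
  exact mul_nonneg hp4 key

private noncomputable def F15 (p α β : ℝ) (x : ℝ) : ℝ :=
  (x + 2*Real.sqrt x + 1)^(p/2) + (x - 2*Real.sqrt x + 1)^(p/2) + α*x + β

private noncomputable def phi15 (p α : ℝ) (x : ℝ) : ℝ :=
  p/2 * ((x + 2*Real.sqrt x + 1)^(p/2-1) * (1 + (Real.sqrt x)⁻¹)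
       + (x - 2*Real.sqrt x + 1)^(p/2-1) * (1 - (Real.sqrt x)⁻¹)) + α

private lemma sqrt_facts {x : ℝ} (hx : 0 < x) :
    Real.sqrt x ≠ 0 ∧ (Real.sqrt x)^2 = x ∧ 0 < x + 2*Real.sqrt x + 1 ∧
      0 ≤ x - 2*Real.sqrt x + 1 := by
  have h0 : 0 < Real.sqrt x := Real.sqrt_pos.2 hx
  have h1 : (Real.sqrt x)^2 = x := Real.sq_sqrt hx.le
  refine ⟨h0.ne', h1, by positivity, ?_⟩
  nlinarith [h0, sq_nonneg (Real.sqrt x - 1), h1]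

private lemma derivF15 {p α β x : ℝ} (hp : 3 ≤ p) (hx : 0 < x) :
    HasDerivAt (F15 p α β) (phi15 p α x) x := by
  obtain ⟨hs0, hs2, hu1, hu2⟩ := sqrt_facts hx
  have hsq : HasDerivAt Real.sqrt (1/(2*Real.sqrt x)) x := Real.hasDerivAt_sqrt hx.ne'
  have hp2 : (1:ℝ) ≤ p/2 := by linarith
  have d1 : HasDerivAt (fun y : ℝ => y + 2*Real.sqrt y + 1)
      (1 + 2*(1/(2*Real.sqrt x))) x :=
    ((hasDerivAt_id' (x := x)).add (hsq.const_mul 2)).add_const 1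
  have d2 : HasDerivAt (fun y : ℝ => y - 2*Real.sqrt y + 1)
      (1 - 2*(1/(2*Real.sqrt x))) x :=
    ((hasDerivAt_id' (x := x)).sub (hsq.const_mul 2)).add_const 1
  have D1 := d1.rpow_const (p := p/2) (Or.inr hp2)
  have D2 := d2.rpow_const (p := p/2) (Or.inr hp2)
  have Dl : HasDerivAt (fun y : ℝ => α * y) α x := by
    simpa using (hasDerivAt_id' (x := x)).const_mul α
  have raw := ((D1.add D2).add Dl).add_const β
  refine raw.congr_deriv ?_
  rw [phi15]
  have h0 : 0 < Real.sqrt x := Real.sqrt_pos.2 hx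
  field_simp

private lemma derivPhi15 {p α x : ℝ} (hp : 3 ≤ p) (hx : 0 < x) (hx1 : x ≠ 1) :
    HasDerivAt (phi15 p α)
      (p/2 * ((1 + 2*(1/(2*Real.sqrt x))) * (p/2-1) * (x+2*Real.sqrt x+1)^(p/2-1-1) * (1 + (Real.sqrt x)⁻¹)
        + (x+2*Real.sqrt x+1)^(p/2-1) * (-(1/(2*Real.sqrt x)) / Real.sqrt x^2)
        + ((1 - 2*(1/(2*Real.sqrt x))) * (p/2-1) * (x-2*Real.sqrt x+1)^(p/2-1-1) * (1 - (Real.sqrt x)⁻¹)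
        + (x-2*Real.sqrt x+1)^(p/2-1) * (1/(2*Real.sqrt x) / Real.sqrt x^2)))) x := by
  obtain ⟨hs0, hs2, hu1, hu2⟩ := sqrt_facts hx
  have hsne1 : Real.sqrt x ≠ 1 := fun h => hx1 (by rw [← hs2, h]; norm_num)
  have hu2' : x - 2*Real.sqrt x + 1 ≠ 0 := by
    have : x - 2*Real.sqrt x + 1 = (Real.sqrt x - 1)^2 := by nlinarith
    rw [this]
    exact pow_ne_zero 2 (sub_ne_zero.2 hsne1)
  have hsq : HasDerivAt Real.sqrt (1/(2*Real.sqrt x)) x := Real.hasDerivAt_sqrt hx.ne'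
  have d1 : HasDerivAt (fun y : ℝ => y + 2*Real.sqrt y + 1)
      (1 + 2*(1/(2*Real.sqrt x))) x :=
    ((hasDerivAt_id' (x := x)).add (hsq.const_mul 2)).add_const 1
  have d2 : HasDerivAt (fun y : ℝ => y - 2*Real.sqrt y + 1)
      (1 - 2*(1/(2*Real.sqrt x))) x :=
    ((hasDerivAt_id' (x := x)).sub (hsq.const_mul 2)).add_const 1
  have dinv : HasDerivAt (fun y : ℝ => (Real.sqrt y)⁻¹)
      (-(1/(2*Real.sqrt x)) / Real.sqrt x ^ 2) x := hsq.inv hs0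
  have D1 := (d1.rpow_const (p := p/2-1) (Or.inl hu1.ne')).mul (dinv.const_add 1)
  have D2 := (d2.rpow_const (p := p/2-1) (Or.inl hu2')).mul (dinv.const_sub 1)
  have raw := ((D1.add D2).const_mul (p/2)).add_const α
  refine raw.congr_deriv ?_
  ring

private lemma phi15_contAt {p α x : ℝ} (hp : 3 ≤ p) (hx : 0 < x) :
    ContinuousAt (phi15 p α) x := by
  obtain ⟨hs0, hs2, hu1, hu2⟩ := sqrt_facts hx
  have hcs : ContinuousAt Real.sqrt x := Real.continuous_sqrt.continuousAt
  have hc1 : ContinuousAt (fun y : ℝ => y + 2*Real.sqrt y + 1) x := by fun_prop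
  have hc2 : ContinuousAt (fun y : ℝ => y - 2*Real.sqrt y + 1) x := by fun_prop
  have he : (0:ℝ) ≤ p/2 - 1 := by linarith
  exact (((((hc1.rpow_const (Or.inr he)).mul
    ((hcs.inv₀ hs0).const_add 1)).add ((hc2.rpow_const (Or.inr he)).mul
    ((hcs.inv₀ hs0).const_sub 1))).const_mul (p/2)).add continuousAt_const)

private lemma phi15_mono {p α : ℝ} (hp : 3 ≤ p) :
    MonotoneOn (phi15 p α) (Set.Ioi 0) := by
  have hnonneg : ∀ x : ℝ, 0 < x → x ≠ 1 → 0 ≤ deriv (phi15 p α) x := by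
    intro x hx hx1
    rw [(derivPhi15 hp hx hx1).deriv]
    obtain ⟨hs0, hs2, hu1, hu2⟩ := sqrt_facts hx
    have ht : 0 < Real.sqrt x := Real.sqrt_pos.2 hx
    have hsne1 : Real.sqrt x ≠ 1 := fun h => hx1 (by rw [← hs2, h]; norm_num)
    rw [hs2]
    have := psi_nonneg hp ht hsne1
    rw [hs2] at this
    exact this
  have m1 : MonotoneOn (phi15 p α) (Set.Ioc 0 1) := by
    apply monotoneOn_of_deriv_nonneg (convex_Ioc 0 1)
    · exact fun x hx => (phi15_contAt hp hx.1).continuousWithinAt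
    · intro x hx
      rw [interior_Ioc] at hx
      exact (derivPhi15 hp hx.1 hx.2.ne).differentiableAt.differentiableWithinAt
    · intro x hx
      rw [interior_Ioc] at hx
      exact hnonneg x hx.1 hx.2.ne
  have m2 : MonotoneOn (phi15 p α) (Set.Ici 1) := by
    apply monotoneOn_of_deriv_nonneg (convex_Ici 1)
    · exact fun x hx => (phi15_contAt hp (lt_of_lt_of_le one_pos hx)).continuousWithinAt
    · intro x hx
      rw [interior_Ici] at hx
      exact (derivPhi15 hp (lt_trans one_pos hx) hx.ne').differentiableAt.differentiableWithinAt
    · intro x hx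
      rw [interior_Ici] at hx
      exact hnonneg x (lt_trans one_pos hx) hx.ne'
  intro a ha b hb hab
  rcases le_total b 1 with h | h
  · exact m1 ⟨ha, hab.trans h⟩ ⟨hb, h⟩ hab
  · rcases le_total a 1 with h' | h'
    · exact le_trans (m1 ⟨ha, h'⟩ ⟨one_pos, le_refl 1⟩ h') (m2 (self_mem_Ici) h h)
    · exact m2 h' h hab

private lemma F15_convex {p α β : ℝ} (hp : 3 ≤ p) :
    ConvexOn ℝ (Set.Ioi 0) (F15 p α β) := by
  apply MonotoneOn.convexOn_of_deriv (convex_Ioi 0)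
  · exact fun x hx => (derivF15 hp hx).continuousAt.continuousWithinAt
  · rw [interior_Ioi]
    exact fun x hx => (derivF15 hp hx).differentiableAt.differentiableWithinAt
  · rw [interior_Ioi]
    intro a ha b hb hab
    rw [(derivF15 (α := α) (β := β) hp ha).deriv, (derivF15 (α := α) (β := β) hp hb).deriv]
    exact phi15_mono hp ha hb hab

private lemma eqF15 {p α β x : ℝ} (hx : 0 < x) :
    |Real.sqrt x + 1| ^ p + |Real.sqrt x - 1| ^ p + α * x + β = F15 p α β x := by
  have habs : ∀ a : ℝ, |a|^p = (a^2)^(p/2) := by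
    intro a
    rw [← sq_abs a, ← Real.rpow_natCast |a| 2, ← Real.rpow_mul (abs_nonneg a)]
    congr 1
    push_cast; ring
  have hs2 : (Real.sqrt x)^2 = x := Real.sq_sqrt hx.le
  have e1 : (Real.sqrt x+1)^2 = x + 2*Real.sqrt x + 1 := by nlinarith
  have e2 : (Real.sqrt x-1)^2 = x - 2*Real.sqrt x + 1 := by nlinarith
  rw [F15, habs, habs, e1, e2]

/-- For `p ≥ 3` and any reals `α, β`, the function
`x ↦ |√x + 1|^p + |√x - 1|^p + αx + β` is convex on `(0, ∞)`; i.e. `h(√·)` is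
convex on `(0,∞)` where `h(x) = |x+1|^p + |x-1|^p`. -/
theorem stmt15 (p : ℝ) (hp : 3 ≤ p) (α β : ℝ) :
    ConvexOn ℝ (Set.Ioi (0 : ℝ))
      (fun x : ℝ =>
        |Real.sqrt x + 1| ^ p + |Real.sqrt x - 1| ^ p + α * x + β) := by
  have hF := F15_convex (α := α) (β := β) hp
  refine ⟨convex_Ioi 0, fun x hx y hy a b ha hb hab => ?_⟩
  have hxy : a • x + b • y ∈ Set.Ioi (0:ℝ) := (convex_Ioi 0) hx hy ha hb hab
  simp only
  rw [eqF15 (Set.mem_Ioi.1 hx), eqF15 (Set.mem_Ioi.1 hy), eqF15 (Set.mem_Ioi.1 hxy)]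
  exact hF.2 hx hy ha hb hab
end

section
/- For p ≥ 3 and b ∈ [0,1], E|(1+2b)^{−1/2} Z_b|^p = (2^{p/2} Γ((p+1)/2)/√π) · (1 + p b)/(1 + 2b)^{p/2}, where Z_b has density (1 − b + b x²) e^{−x²/2}/√(2π); moreover this expression is decreasing in b on [0,1] for fixed p ≥ 3. -/
open MeasureTheory Real Set

lemma integrable_comp_abs' {f : ℝ → ℝ} (hf : IntegrableOn f (Ioi 0)) :
    Integrable fun x : ℝ => f |x| := by
  have hIoi : IntegrableOn (fun x : ℝ => f |x|) (Ioi 0) := by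
    apply (integrableOn_congr_fun (fun x hx => ?_) measurableSet_Ioi).mpr hf
    rw [abs_of_pos hx]
  have hIic : IntegrableOn (fun x : ℝ => f |x|) (Iic 0) := by
    rw [← Measure.map_neg_eq_self (volume : Measure ℝ)]
    have m : MeasurableEmbedding fun x : ℝ => -x := (Homeomorph.neg ℝ).measurableEmbedding
    rw [m.integrableOn_map_iff]
    simp_rw [Function.comp_def, abs_neg, neg_preimage, neg_Iic, neg_zero]
    exact (integrableOn_Ici_iff_integrableOn_Ioi (f := fun x : ℝ => f |x|) (b := 0) (hb := enorm_ne_top)).mpr hIoi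
  rw [← integrableOn_univ, ← Iic_union_Ioi (a := (0:ℝ)), integrableOn_union]
  exact ⟨hIic, hIoi⟩

lemma moment_int (s : ℝ) (hs : -1 < s) :
    Integrable (fun x : ℝ => |x| ^ s * Real.exp (-x ^ 2 / 2)) := by
  have h : (fun x : ℝ => |x| ^ s * Real.exp (-x ^ 2 / 2))
      = fun x : ℝ => (fun y : ℝ => y ^ s * Real.exp (-(1/2) * y ^ 2)) |x| := by
    funext x
    simp only [sq_abs]
    ring_nf
  rw [h]
  exact integrable_comp_abs' (integrableOn_rpow_mul_exp_neg_mul_sq (by norm_num) hs)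

lemma moment_eq (s : ℝ) (hs : -1 < s) :
    (∫ x : ℝ, |x| ^ s * Real.exp (-x ^ 2 / 2))
      = 2 ^ ((s + 1) / 2) * Real.Gamma ((s + 1) / 2) := by
  have h : (fun x : ℝ => |x| ^ s * Real.exp (-x ^ 2 / 2))
      = fun x : ℝ => (fun y : ℝ => y ^ s * Real.exp (-(1/2) * y ^ 2)) |x| := by
    funext x
    simp only [sq_abs]
    ring_nf
  rw [h, integral_comp_abs (f := fun y : ℝ => y ^ s * Real.exp (-(1/2) * y ^ 2))]
  have h2 : (∫ x in Ioi (0:ℝ), x ^ s * Real.exp (-(1/2) * x ^ 2))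
      = ((1:ℝ)/2) ^ (-(s+1)/2) * (1/2) * Real.Gamma ((s+1)/2) := by
    simp_rw [← rpow_two]
    exact integral_rpow_mul_exp_neg_mul_rpow (by norm_num) hs (by norm_num : (0:ℝ) < 1/2)
  rw [h2]
  have h12 : ((1:ℝ)/2) ^ (-(s+1)/2) = 2 ^ ((s+1)/2) := by
    rw [one_div, inv_rpow (by norm_num : (0:ℝ) ≤ 2),
      ← rpow_neg (by norm_num : (0:ℝ) ≤ 2)]
    congr 1
    ring
  rw [h12]
  ring

/-- For `p ≥ 3` and `b ∈ [0,1]`, the `p`-th absolute moment of `(1+2b)^{-1/2} Z_b`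
equals `(2^{p/2} Γ((p+1)/2)/√π) · (1 + p b)/(1 + 2b)^{p/2}`, and this expression is
decreasing in `b` on `[0,1]`. -/
theorem stmt16 (p : ℝ) (hp : 3 ≤ p) :
    (∀ b ∈ Set.Icc (0 : ℝ) 1,
      (∫ x : ℝ, ((1 + 2 * b) ^ (-(1 : ℝ) / 2) * |x|) ^ p *
          ((1 - b + b * x ^ 2) * Real.exp (-x ^ 2 / 2) / Real.sqrt (2 * π))) =
        2 ^ (p / 2) * Real.Gamma ((p + 1) / 2) / Real.sqrt π *
          ((1 + p * b) / (1 + 2 * b) ^ (p / 2))) ∧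
    StrictAntiOn
      (fun b : ℝ => 2 ^ (p / 2) * Real.Gamma ((p + 1) / 2) / Real.sqrt π *
        ((1 + p * b) / (1 + 2 * b) ^ (p / 2)))
      (Set.Icc (0 : ℝ) 1) := by
  have habs : ∀ x : ℝ, |x| ^ p * x ^ 2 = |x| ^ (p + 2) := by
    intro x
    rcases eq_or_ne x 0 with rfl | hx
    · rw [abs_zero, Real.zero_rpow (by linarith), Real.zero_rpow (by linarith)]
      ring
    · rw [rpow_add (abs_pos.mpr hx), rpow_two, sq_abs]
  constructor
  · intro b hb
    have h2b : (0:ℝ) < 1 + 2 * b := by linarith [hb.1]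
    have hpt : (fun x : ℝ => ((1 + 2 * b) ^ (-(1 : ℝ) / 2) * |x|) ^ p *
          ((1 - b + b * x ^ 2) * Real.exp (-x ^ 2 / 2) / Real.sqrt (2 * π)))
        = fun x : ℝ => (1 + 2 * b) ^ (-(1:ℝ)/2 * p) / Real.sqrt (2 * π) *
            ((1 - b) * (|x| ^ p * Real.exp (-x ^ 2 / 2))
              + b * (|x| ^ (p + 2) * Real.exp (-x ^ 2 / 2))) := by
      funext x
      rw [mul_rpow (rpow_nonneg h2b.le _) (abs_nonneg x), ← rpow_mul h2b.le, ← habs x]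
      ring
    rw [hpt, integral_const_mul, integral_add
        ((moment_int p (by linarith)).const_mul _)
        ((moment_int (p+2) (by linarith)).const_mul _),
      integral_const_mul, integral_const_mul,
      moment_eq p (by linarith), moment_eq (p+2) (by linarith)]
    have hG : Real.Gamma ((p + 2 + 1) / 2) = (p + 1) / 2 * Real.Gamma ((p + 1) / 2) := by
      rw [show (p + 2 + 1) / 2 = (p + 1) / 2 + 1 by ring,
        Real.Gamma_add_one (by positivity)]
    have h2e : (2:ℝ) ^ ((p + 2 + 1) / 2) = 2 * 2 ^ ((p + 1) / 2) := by
      rw [show (p + 2 + 1) / 2 = 1 + (p + 1) / 2 by ring, rpow_add two_pos, rpow_one]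
    have h2e2 : (2:ℝ) ^ ((p + 1) / 2) = 2 ^ ((1:ℝ)/2) * 2 ^ (p / 2) := by
      rw [← rpow_add two_pos]
      congr 1
      ring
    have hS : Real.sqrt (2 * π) = 2 ^ ((1:ℝ)/2) * Real.sqrt π := by
      rw [sqrt_mul (by norm_num) π, sqrt_eq_rpow]
    have hinv : (1 + 2 * b) ^ (-(1:ℝ)/2 * p) = ((1 + 2 * b) ^ (p / 2))⁻¹ := by
      rw [show -(1:ℝ)/2 * p = -(p/2) by ring, rpow_neg h2b.le]
    have hnx : ((1 + 2 * b) ^ (p / 2)) ≠ 0 := (rpow_pos_of_pos h2b _).ne'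
    have h2h : ((2:ℝ) ^ ((1:ℝ)/2)) ≠ 0 := (rpow_pos_of_pos two_pos _).ne'
    have hπ : Real.sqrt π ≠ 0 := (sqrt_pos.mpr pi_pos).ne'
    rw [hG, h2e, h2e2, hS, hinv]
    field_simp
    ring
  · have hC : 0 < 2 ^ (p / 2) * Real.Gamma ((p + 1) / 2) / Real.sqrt π :=
      div_pos (mul_pos (rpow_pos_of_pos two_pos _)
        (Real.Gamma_pos_of_pos (by linarith))) (sqrt_pos.mpr pi_pos)
    have hg : StrictAntiOn (fun b : ℝ => (1 + p * b) / (1 + 2 * b) ^ (p / 2))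
        (Set.Icc (0 : ℝ) 1) := by
      apply strictAntiOn_of_deriv_neg (convex_Icc 0 1)
      · apply ContinuousOn.div
        · exact (continuous_const.add (continuous_const.mul continuous_id)).continuousOn
        · exact ((continuous_const.add
            (continuous_const.mul continuous_id)).continuousOn).rpow_const
            (fun x _ => Or.inr (by linarith))
        · intro x hx
          have : (0:ℝ) < 1 + 2 * x := by nlinarith [hx.1]
          exact (rpow_pos_of_pos this _).ne'
      · intro x hx
        rw [interior_Icc] at hx
        have hx1 : (0:ℝ) < 1 + 2 * x := by linarith [hx.1]
        have hd1 : HasDerivAt (fun b : ℝ => 1 + p * b) p x := by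
          simpa using ((hasDerivAt_id x).const_mul p).const_add 1
        have hd0 : HasDerivAt (fun b : ℝ => 1 + 2 * b) 2 x := by
          simpa using ((hasDerivAt_id x).const_mul 2).const_add 1
        have hd2 : HasDerivAt (fun b : ℝ => (1 + 2 * b) ^ (p / 2))
            (p / 2 * (1 + 2 * x) ^ (p / 2 - 1) * 2) x :=
          by have := (Real.hasDerivAt_rpow_const (x := 1 + 2 * x) (p := p / 2) (Or.inl hx1.ne')).comp x hd0; exact this
        have hne : ((1 + 2 * x) ^ (p / 2)) ≠ 0 := (rpow_pos_of_pos hx1 _).ne'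
        have hd : HasDerivAt (fun b : ℝ => (1 + p * b) / (1 + 2 * b) ^ (p / 2))
            ((p * (1 + 2 * x) ^ (p / 2) - (1 + p * x) * (p / 2 * (1 + 2 * x) ^ (p / 2 - 1) * 2))
              / ((1 + 2 * x) ^ (p / 2)) ^ 2) x := hd1.div hd2 hne
        rw [hd.deriv]
        apply div_neg_of_neg_of_pos
        · have key : (1 + 2 * x) ^ (p / 2) = (1 + 2 * x) ^ (p / 2 - 1) * (1 + 2 * x) := by
            rw [← rpow_add_one hx1.ne' (p / 2 - 1)]
            congr 1
            ring
          rw [key]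
          have hP : (0:ℝ) < (1 + 2 * x) ^ (p / 2 - 1) := rpow_pos_of_pos hx1 _
          have hexp : p * ((1 + 2 * x) ^ (p / 2 - 1) * (1 + 2 * x))
              - (1 + p * x) * (p / 2 * (1 + 2 * x) ^ (p / 2 - 1) * 2)
              = -(p * ((1 + 2 * x) ^ (p / 2 - 1) * (x * (p - 2)))) := by ring
          rw [hexp, neg_lt_zero]
          exact mul_pos (by linarith) (mul_pos hP (mul_pos hx.1 (by linarith)))
        · exact pow_pos (rpow_pos_of_pos hx1 _) 2
    intro a ha b hb hab
    exact (mul_lt_mul_iff_right₀ hC).mpr (hg ha hb hab)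
end

section
/- Enestrom–Kakeya type result: let p_0, p_1, …, p_n be nonnegative reals with p_0 + 2Σ_{k=1}^n p_k = 1 and (1/2)p_0 ≤ p_1 ≤ … ≤ p_n. Then the trigonometric polynomial t ↦ p_0 + Σ_{k=1}^n 2p_k cos(kt), which is the characteristic function of the symmetric integer-valued random variable X with P(X=0)=p_0, P(X=±k)=p_k, extends to an entire function of z ∈ ℂ having only real zeros. -/
open scoped BigOperators
open Finset Polynomial Complex

noncomputable def fr (n : ℕ) (q : ℕ → ℝ) (t : ℝ) : ℝ :=
  q 0 + ∑ k ∈ Finset.Icc 1 n, 2 * q k * Real.cos (k * t)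

lemma fr_cont (n : ℕ) (q : ℕ → ℝ) : Continuous (fr n q) := by
  unfold fr; fun_prop

lemma fr_neg (n : ℕ) (q : ℕ → ℝ) (t : ℝ) : fr n q (-t) = fr n q t := by
  simp [fr, mul_neg, Real.cos_neg]

lemma abel (q u : ℕ → ℝ) : ∀ m : ℕ,
    ∑ k ∈ Icc 1 (m+1), q k * (u k - u (k-1))
      = q (m+1) * u (m+1) - q 1 * u 0 - ∑ k ∈ Icc 1 m, (q (k+1) - q k) * u k := by
  intro m
  induction m with
  | zero => simp [mul_sub]
  | succ m ih =>
    rw [Finset.sum_Icc_succ_top (by omega), ih, Finset.sum_Icc_succ_top (by omega)]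
    simp only [Nat.add_sub_cancel]
    ring

lemma telescope (q : ℕ → ℝ) : ∀ m : ℕ, ∑ k ∈ Icc 1 m, (q (k+1) - q k) = q (m+1) - q 1 := by
  intro m
  induction m with
  | zero => simp [mul_sub]
  | succ m ih => rw [Finset.sum_Icc_succ_top (by omega), ih]; ring

set_option maxHeartbeats 2000000 in
lemma sign_at (n : ℕ) (q : ℕ → ℝ) (hn : 1 ≤ n)
    (h1 : |q 0 - q 1| < q 1)
    (hmono : ∀ k, 1 ≤ k → k < n → q k ≤ q (k+1))
    (j : ℕ) (hj : j ≤ n) :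
    0 < (-1 : ℝ)^j * fr n q ((2*j+1) * Real.pi / (2*n+1)) := by
  have hpi := Real.pi_pos
  obtain ⟨m, rfl⟩ : ∃ m, n = m + 1 := ⟨n-1, by omega⟩
  set n : ℕ := m + 1 with hn
  set t : ℝ := (2*j+1) * Real.pi / (2*n+1) with ht
  have hNpos : (0:ℝ) < 2*n+1 := by positivity
  have htpos : 0 < t := by positivity
  have htle : t ≤ Real.pi := by
    rw [ht, div_le_iff₀ hNpos]
    have : (2*(j:ℝ)+1) ≤ 2*n+1 := by
      have : (j:ℝ) ≤ n := by exact_mod_cast hj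
      linarith
    nlinarith
  have hS : 0 < Real.sin (t/2) :=
    Real.sin_pos_of_pos_of_lt_pi (by positivity) (by linarith)
  set u : ℕ → ℝ := fun k => Real.sin (((k:ℝ) + 1/2) * t) with hu
  have hu0 : u 0 = Real.sin (t/2) := by simp [hu]; ring_nf
  have hub : ∀ k, -1 ≤ u k ∧ u k ≤ 1 := fun k => ⟨Real.neg_one_le_sin _, Real.sin_le_one _⟩
  have hun : u n = (-1:ℝ)^j := by
    have hc : ((n:ℝ) + 1/2) * t = j * Real.pi + Real.pi/2 := by
      rw [ht]; field_simp
    have : u n = Real.cos (j * Real.pi) := by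
      rw [hu]; dsimp only; rw [hc, Real.sin_add_pi_div_two]
    rw [this]
    simpa using Real.cos_nat_mul_pi_sub 0 j
  -- product-to-sum identity
  have hid : Real.sin (t/2) * fr n q t
      = q 0 * u 0 + ∑ k ∈ Icc 1 n, q k * (u k - u (k-1)) := by
    rw [fr, mul_add, Finset.mul_sum, hu0]
    congr 1
    · ring
    refine Finset.sum_congr rfl fun k hk => ?_
    obtain ⟨hk1, hk2⟩ := Finset.mem_Icc.mp hk
    have hcast : ((k-1:ℕ):ℝ) = (k:ℝ) - 1 := by
      have : (1:ℕ) ≤ k := hk1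
      push_cast [this]; ring
    have key : 2 * Real.sin (t/2) * Real.cos ((k:ℝ) * t) = u k - u (k-1) := by
      rw [hu]; dsimp only
      rw [hcast]
      have e1 : Real.sin (t/2 + (k:ℝ)*t) + Real.sin (t/2 - (k:ℝ)*t)
          = 2 * Real.sin (t/2) * Real.cos ((k:ℝ)*t) := by
        rw [Real.sin_add, Real.sin_sub]; ring
      have e2 : Real.sin (t/2 - (k:ℝ)*t) = - Real.sin ((((k:ℝ)-1) + 1/2) * t) := by
        rw [← Real.sin_neg]; ring_nf
      have e3 : Real.sin (t/2 + (k:ℝ)*t) = Real.sin (((k:ℝ) + 1/2) * t) := by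
        ring_nf
      rw [← e1, e2, e3]; ring
    rw [← key]; ring
  rw [abel q u m] at hid
  -- bounds
  have hb1 : (q 0 - q 1) * ((-1:ℝ)^j * u 0) ≥ -|q 0 - q 1| := by
    have h2 : -1 ≤ (-1:ℝ)^j * u 0 ∧ (-1:ℝ)^j * u 0 ≤ 1 := by
      rcases Nat.even_or_odd j with hj2 | hj2
      · rw [hj2.neg_one_pow]; simpa using hub 0
      · rw [hj2.neg_one_pow]; constructor <;> nlinarith [(hub 0).1, (hub 0).2]
    nlinarith [le_abs_self (q 0 - q 1), neg_abs_le (q 0 - q 1), h2.1, h2.2]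
  have hb2 : ∑ k ∈ Icc 1 m, (q (k+1) - q k) * ((-1:ℝ)^j * u k)
      ≤ q (m+1) - q 1 := by
    rw [← telescope q m]
    refine Finset.sum_le_sum fun k hk => ?_
    obtain ⟨hk1, hk2⟩ := Finset.mem_Icc.mp hk
    have hq : 0 ≤ q (k+1) - q k := by linarith [hmono k hk1 (by omega)]
    have h2 : (-1:ℝ)^j * u k ≤ 1 := by
      rcases Nat.even_or_odd j with hj2 | hj2
      · rw [hj2.neg_one_pow]; simpa using (hub k).2
      · rw [hj2.neg_one_pow]; nlinarith [(hub k).1]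
    nlinarith
  have hvsq : (-1:ℝ)^j * (-1:ℝ)^j = 1 := by
    rw [← pow_add]; exact Even.neg_one_pow ⟨j, rfl⟩
  have hsum : (-1:ℝ)^j * ∑ k ∈ Icc 1 m, (q (k+1) - q k) * u k
      = ∑ k ∈ Icc 1 m, (q (k+1) - q k) * ((-1:ℝ)^j * u k) := by
    rw [Finset.mul_sum]; exact Finset.sum_congr rfl fun k _ => by ring
  have hfinal : (-1:ℝ)^j * (Real.sin (t/2) * fr n q t)
      = q (m+1) + (q 0 - q 1) * ((-1:ℝ)^j * u 0)
        - ∑ k ∈ Icc 1 m, (q (k+1) - q k) * ((-1:ℝ)^j * u k) := by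
    rw [hid, hun]
    linear_combination (q (m+1)) * hvsq - hsum
  have h3 : 0 < Real.sin (t/2) * ((-1:ℝ)^j * fr n q t) := by
    nlinarith [hfinal, hb1, hb2, h1]
  rcases mul_pos_iff.mp h3 with ⟨_, h⟩ | ⟨h, _⟩
  · exact h
  · linarith

lemma exists_zero_between (n : ℕ) (q : ℕ → ℝ) (hn : 1 ≤ n) (h1 : |q 0 - q 1| < q 1)
    (hmono : ∀ k, 1 ≤ k → k < n → q k ≤ q (k+1)) (j : ℕ) (hj : j < n) :
    ∃ x ∈ Set.Ioo ((2*(j:ℝ)+1) * Real.pi / (2*(n:ℝ)+1)) ((2*(j:ℝ)+3) * Real.pi / (2*(n:ℝ)+1)),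
      fr n q x = 0 := by
  have hpi := Real.pi_pos
  have hA := sign_at n q hn h1 hmono j (le_of_lt hj)
  have hB := sign_at n q hn h1 hmono (j+1) (by omega)
  have hc1 : ((2*((j:ℕ)+1:ℕ)+1 : ℕ) : ℝ) = 2*(j:ℝ)+3 := by push_cast; ring
  have hc2 : (2*(((j:ℕ)+1:ℕ)):ℝ)+1 = 2*(j:ℝ)+3 := by push_cast; ring
  rw [show (2*((j+1:ℕ)):ℝ)+1 = 2*(j:ℝ)+3 from by push_cast; ring] at hB
  set a := (2*(j:ℝ)+1) * Real.pi / (2*(n:ℝ)+1) with ha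
  set b := (2*(j:ℝ)+3) * Real.pi / (2*(n:ℝ)+1) with hb
  have hNpos : (0:ℝ) < 2*(n:ℝ)+1 := by positivity
  have hab : a < b := by
    rw [ha, hb, div_lt_div_iff₀ hNpos hNpos]
    nlinarith
  have hcont : ContinuousOn (fr n q) (Set.Icc a b) := (fr_cont n q).continuousOn
  rcases Nat.even_or_odd j with he | ho
  · have eA : ((-1:ℝ))^j = 1 := he.neg_one_pow
    have eB : ((-1:ℝ))^(j+1) = -1 := (Even.add_one he).neg_one_pow
    rw [eA, one_mul] at hA
    rw [eB] at hB
    have hB' : fr n q b < 0 := by linarith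
    have := intermediate_value_Ioo' (le_of_lt hab) hcont (Set.mem_Ioo.mpr ⟨hB', hA⟩)
    obtain ⟨x, hx, hfx⟩ := this
    exact ⟨x, hx, hfx⟩
  · have eA : ((-1:ℝ))^j = -1 := ho.neg_one_pow
    have eB : ((-1:ℝ))^(j+1) = 1 := (Odd.add_one ho).neg_one_pow
    rw [eA] at hA
    rw [eB, one_mul] at hB
    have hA' : fr n q a < 0 := by linarith
    have := intermediate_value_Ioo (le_of_lt hab) hcont (Set.mem_Ioo.mpr ⟨hA', hB⟩)
    obtain ⟨x, hx, hfx⟩ := this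
    exact ⟨x, hx, hfx⟩

lemma exists_zeros (n : ℕ) (q : ℕ → ℝ) (hn : 1 ≤ n) (h1 : |q 0 - q 1| < q 1)
    (hmono : ∀ k, 1 ≤ k → k < n → q k ≤ q (k+1)) :
    ∃ s : ℕ → ℝ, ∀ j, j < n →
      (s j ∈ Set.Ioo ((2*(j:ℝ)+1) * Real.pi / (2*(n:ℝ)+1)) ((2*(j:ℝ)+3) * Real.pi / (2*(n:ℝ)+1))
        ∧ fr n q (s j) = 0) := by
  have H : ∀ j : ℕ, ∃ x : ℝ, j < n →
      (x ∈ Set.Ioo ((2*(j:ℝ)+1) * Real.pi / (2*(n:ℝ)+1)) ((2*(j:ℝ)+3) * Real.pi / (2*(n:ℝ)+1))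
        ∧ fr n q x = 0) := by
    intro j
    by_cases hj : j < n
    · obtain ⟨x, hx, hfx⟩ := exists_zero_between n q hn h1 hmono j hj
      exact ⟨x, fun _ => ⟨hx, hfx⟩⟩
    · exact ⟨0, fun h => absurd h hj⟩
  choose s hs using H
  exact ⟨s, hs⟩

noncomputable def Qp (n : ℕ) (q : ℕ → ℝ) : Polynomial ℂ :=
  Polynomial.C (q 0 : ℂ) * Polynomial.X ^ n
    + ∑ k ∈ Finset.Icc 1 n, Polynomial.C (q k : ℂ) * (Polynomial.X ^ (n+k) + Polynomial.X ^ (n-k))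

lemma Qp_eval (n : ℕ) (q : ℕ → ℝ) (w : ℂ) :
    (Qp n q).eval w = (q 0 : ℂ) * w ^ n + ∑ k ∈ Finset.Icc 1 n, (q k : ℂ) * (w ^ (n+k) + w ^ (n-k)) := by
  simp [Qp, eval_finset_sum]

lemma Qp_coeff_top (n : ℕ) (q : ℕ → ℝ) (hn : 1 ≤ n) : (Qp n q).coeff (2*n) = (q n : ℂ) := by
  rw [Qp]
  rw [coeff_add, finset_sum_coeff]
  have h1 : (Polynomial.C (q 0 : ℂ) * Polynomial.X ^ n).coeff (2*n) = 0 := by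
    rw [coeff_C_mul, coeff_X_pow, if_neg (by omega)]
    simp
  rw [h1, zero_add]
  have h2 : ∀ k ∈ Finset.Icc 1 n,
      (Polynomial.C (q k : ℂ) * (Polynomial.X ^ (n+k) + Polynomial.X ^ (n-k))).coeff (2*n)
        = if k = n then (q n : ℂ) else 0 := by
    intro k hk
    obtain ⟨hk1, hk2⟩ := Finset.mem_Icc.mp hk
    rw [coeff_C_mul, coeff_add, coeff_X_pow, coeff_X_pow]
    by_cases h : k = n
    · subst h; rw [if_pos (by omega), if_neg (by omega)]; simp
    · rw [if_neg (by omega), if_neg (by omega), if_neg h]; simp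
  rw [Finset.sum_congr rfl h2, Finset.sum_ite_eq' (Finset.Icc 1 n) n (fun _ => (q n : ℂ))]
  rw [if_pos (Finset.mem_Icc.mpr ⟨hn, le_refl n⟩)]

lemma Qp_natDegree_le (n : ℕ) (q : ℕ → ℝ) : (Qp n q).natDegree ≤ 2*n := by
  apply Polynomial.natDegree_add_le_of_degree_le
  · apply le_trans (natDegree_mul_le)
    simp [natDegree_X_pow]
    omega
  · apply le_trans (Polynomial.natDegree_sum_le_of_forall_le _ _ ?_) (le_refl _)
    intro k hk
    obtain ⟨hk1, hk2⟩ := Finset.mem_Icc.mp hk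
    apply le_trans (natDegree_mul_le)
    have : (Polynomial.X ^ (n+k) + Polynomial.X ^ (n-k) : Polynomial ℂ).natDegree ≤ 2*n := by
      apply le_trans (natDegree_add_le _ _)
      simp [natDegree_X_pow]
      omega
    simp [natDegree_C]
    omega

lemma Qp_natDegree (n : ℕ) (q : ℕ → ℝ) (hn : 1 ≤ n) (hq : q n ≠ 0) :
    (Qp n q).natDegree = 2*n := by
  have h1 : (Qp n q).coeff (2*n) ≠ 0 := by
    rw [Qp_coeff_top n q hn]; exact_mod_cast hq
  exact le_antisymm (Qp_natDegree_le n q) (le_natDegree_of_ne_zero h1)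

lemma Qp_ne_zero (n : ℕ) (q : ℕ → ℝ) (hn : 1 ≤ n) (hq : q n ≠ 0) : Qp n q ≠ 0 := by
  intro h
  have := Qp_coeff_top n q hn
  rw [h] at this
  simp at this
  exact hq (by exact_mod_cast this.symm)

lemma Qp_leadingCoeff (n : ℕ) (q : ℕ → ℝ) (hn : 1 ≤ n) (hq : q n ≠ 0) :
    (Qp n q).leadingCoeff = (q n : ℂ) := by
  rw [leadingCoeff, Qp_natDegree n q hn hq, Qp_coeff_top n q hn]

lemma twoCos (θ : ℂ) : Complex.exp (θ * I) + Complex.exp (-(θ * I)) = 2 * Complex.cos θ := by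
  rw [Complex.exp_mul_I, ← neg_mul, Complex.exp_mul_I, Complex.cos_neg, Complex.sin_neg]
  ring

lemma Qp_eval_expC (n : ℕ) (q : ℕ → ℝ) (z : ℂ) :
    (Qp n q).eval (Complex.exp (z * I))
      = Complex.exp ((n:ℂ) * z * I)
        * ((q 0 : ℂ) + ∑ k ∈ Finset.Icc 1 n, 2 * (q k : ℂ) * Complex.cos ((k:ℂ) * z)) := by
  have hpow : ∀ j : ℕ, (Complex.exp (z * I))^j = Complex.exp ((j:ℂ) * z * I) := by
    intro j; rw [← Complex.exp_nat_mul]; congr 1; ring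
  rw [Qp_eval]
  rw [mul_add, Finset.mul_sum]
  congr 1
  · rw [hpow]; ring
  refine Finset.sum_congr rfl fun k hk => ?_
  obtain ⟨hk1, hk2⟩ := Finset.mem_Icc.mp hk
  rw [hpow, hpow]
  have e1 : Complex.exp (((n+k:ℕ):ℂ) * z * I)
      = Complex.exp ((n:ℂ)*z*I) * Complex.exp (((k:ℂ)*z) * I) := by
    rw [← Complex.exp_add]; congr 1; push_cast; ring
  have e2 : Complex.exp (((n-k:ℕ):ℂ) * z * I)
      = Complex.exp ((n:ℂ)*z*I) * Complex.exp (-(((k:ℂ)*z) * I)) := by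
    rw [← Complex.exp_add]; congr 1
    have : ((n-k:ℕ):ℂ) = (n:ℂ) - (k:ℂ) := by
      push_cast [hk2]; ring
    rw [this]; ring
  rw [e1, e2]
  have := twoCos ((k:ℂ) * z)
  calc (q k : ℂ) * (Complex.exp ((n:ℂ)*z*I) * Complex.exp (((k:ℂ)*z) * I)
          + Complex.exp ((n:ℂ)*z*I) * Complex.exp (-(((k:ℂ)*z) * I)))
      = (q k : ℂ) * Complex.exp ((n:ℂ)*z*I)
        * (Complex.exp (((k:ℂ)*z) * I) + Complex.exp (-(((k:ℂ)*z) * I))) := by ring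
    _ = Complex.exp ((n:ℂ)*z*I) * (2 * (q k:ℂ) * Complex.cos ((k:ℂ)*z)) := by rw [this]; ring

lemma Qp_eval_expR (n : ℕ) (q : ℕ → ℝ) (x : ℝ) :
    (Qp n q).eval (Complex.exp ((x:ℂ) * I))
      = Complex.exp ((n:ℂ) * (x:ℂ) * I) * ((fr n q x : ℝ) : ℂ) := by
  rw [Qp_eval_expC]
  congr 1
  rw [fr]
  push_cast
  rfl

lemma prodLB (w : ℂ) (hw : ‖w‖ ≤ 1) :
    ∀ (s : Multiset ℂ), (∀ r ∈ s, ‖r‖ = 1) →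
      (1 - ‖w‖)^(Multiset.card s)
        ≤ ‖(Multiset.map (fun r => w - r) s).prod‖ := by
  intro s
  induction s using Multiset.induction with
  | empty => simp
  | cons a t ih =>
    intro h
    have ha : ‖a‖ = 1 := h a (Multiset.mem_cons_self a t)
    have ht : ∀ r ∈ t, ‖r‖ = 1 := fun r hr => h r (Multiset.mem_cons_of_mem hr)
    rw [Multiset.map_cons, Multiset.prod_cons, Multiset.card_cons, norm_mul]
    have h1 : 1 - ‖w‖ ≤ ‖(w - a)‖ := by
      have := abs_norm_sub_norm_le a w
      have h2 : ‖(a - w)‖ = ‖(w - a)‖ := by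
        rw [← norm_neg]; congr 1; ring
      rw [h2] at this
      have := neg_abs_le (‖a‖ - ‖w‖)
      have := le_abs_self (‖a‖ - ‖w‖)
      linarith [abs_le.mp (le_refl |‖a‖ - ‖w‖|)]
    rw [pow_succ]
    have hnn : (0:ℝ) ≤ 1 - ‖w‖ := by linarith
    calc (1 - ‖w‖)^(Multiset.card t) * (1 - ‖w‖)
        ≤ ‖(Multiset.map (fun r => w - r) t).prod‖ * ‖(w - a)‖ := by
          apply mul_le_mul (ih ht) h1 hnn (norm_nonneg _)
      _ = ‖(w - a)‖ * ‖(Multiset.map (fun r => w - r) t).prod‖ := by ring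

lemma eval_lower (n : ℕ) (q : ℕ → ℝ) (hn : 1 ≤ n) (hq : 0 < q n)
    (honcircle : ∀ r ∈ (Qp n q).roots, ‖r‖ = 1)
    (w : ℂ) (hw : ‖w‖ ≤ 1) :
    q n * (1 - ‖w‖)^(2*n) ≤ ‖((Qp n q).eval w)‖ := by
  have hq' : q n ≠ 0 := ne_of_gt hq
  have hsplit : (Qp n q) = Polynomial.C (Qp n q).leadingCoeff
      * (Multiset.map (fun a => Polynomial.X - Polynomial.C a) (Qp n q).roots).prod :=
    (IsAlgClosed.splits _).eq_prod_roots
  have hcard : Multiset.card (Qp n q).roots = 2*n := by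
    rw [← Qp_natDegree n q hn hq']
    exact (Polynomial.splits_iff_card_roots.mp (IsAlgClosed.splits _))
  calc q n * (1 - ‖w‖)^(2*n)
      = ‖((Qp n q).leadingCoeff)‖ * (1 - ‖w‖)^(Multiset.card (Qp n q).roots) := by
        rw [hcard, Qp_leadingCoeff n q hn hq']
        rw [Complex.norm_real, Real.norm_eq_abs, abs_of_pos hq]
    _ ≤ ‖((Qp n q).leadingCoeff)‖
          * ‖(Multiset.map (fun r => w - r) (Qp n q).roots).prod‖ := by
        apply mul_le_mul_of_nonneg_left (prodLB w hw _ honcircle) (norm_nonneg _)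
    _ = ‖((Qp n q).eval w)‖ := by
        conv_rhs => rw [hsplit]
        rw [eval_mul, norm_mul, eval_C]
        congr 1
        rw [eval_multiset_prod, Multiset.map_map]
        have hfun : (eval w ∘ fun a : ℂ => Polynomial.X - Polynomial.C a) = fun r => w - r := by
          funext r; simp
        rw [hfun]

lemma roots_on_circle (n : ℕ) (q : ℕ → ℝ) (hn : 1 ≤ n) (h1 : |q 0 - q 1| < q 1)
    (hmono : ∀ k, 1 ≤ k → k < n → q k ≤ q (k+1)) (hqn : 0 < q n) :
    ∀ r ∈ (Qp n q).roots, ‖r‖ = 1 := by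
  have hq' : q n ≠ 0 := ne_of_gt hqn
  obtain ⟨s, hs⟩ := exists_zeros n q hn h1 hmono
  have hpi := Real.pi_pos
  have hNpos : (0:ℝ) < 2*(n:ℝ)+1 := by positivity
  have hs_pos : ∀ j, j < n → 0 < s j := by
    intro j hj
    have := (hs j hj).1.1
    have h0 : (0:ℝ) < (2*(j:ℝ)+1) * Real.pi / (2*(n:ℝ)+1) := by positivity
    linarith
  have hs_lt_pi : ∀ j, j < n → s j < Real.pi := by
    intro j hj
    have h2 := (hs j hj).1.2
    have hjn : (j:ℝ) + 1 ≤ n := by exact_mod_cast hj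
    have : (2*(j:ℝ)+3) * Real.pi / (2*(n:ℝ)+1) ≤ Real.pi := by
      rw [div_le_iff₀ hNpos]; nlinarith
    linarith
  have hs_mono : ∀ j j', j < j' → j' < n → s j < s j' := by
    intro j j' hjj hj'
    have h2 := (hs j (lt_trans hjj hj')).1.2
    have h3 := (hs j' hj').1.1
    have hjj' : (j:ℝ) + 1 ≤ (j':ℝ) := by exact_mod_cast hjj
    have : (2*(j:ℝ)+3) * Real.pi / (2*(n:ℝ)+1) ≤ (2*(j':ℝ)+1) * Real.pi / (2*(n:ℝ)+1) := by
      rw [div_le_div_iff₀ hNpos hNpos]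
      nlinarith [mul_nonneg (by linarith : (0:ℝ) ≤ 2*(j':ℝ) - 2*(j:ℝ) - 2)
        (by positivity : (0:ℝ) ≤ Real.pi * (2*(n:ℝ)+1))]
    linarith
  set f : ℕ → ℂ := fun j => Complex.exp ((s j : ℂ) * I) with hf
  set g : ℕ → ℂ := fun j => Complex.exp (((-(s j) : ℝ) : ℂ) * I) with hg
  have hfre : ∀ j, (f j).re = Real.cos (s j) := fun j => Complex.exp_ofReal_mul_I_re _
  have hfim : ∀ j, (f j).im = Real.sin (s j) := fun j => Complex.exp_ofReal_mul_I_im _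
  have hgre : ∀ j, (g j).re = Real.cos (s j) := by
    intro j; rw [hg]; simpa [Real.cos_neg] using Complex.exp_ofReal_mul_I_re (-(s j))
  have hgim : ∀ j, (g j).im = - Real.sin (s j) := by
    intro j; rw [hg]; simpa [Real.sin_neg] using Complex.exp_ofReal_mul_I_im (-(s j))
  have habsf : ∀ j, ‖(f j)‖ = 1 := by
    intro j; rw [hf]; simp [Complex.norm_exp]
  have habsg : ∀ j, ‖(g j)‖ = 1 := by
    intro j; rw [hg]; simp [Complex.norm_exp]
  have hsinpos : ∀ j, j < n → 0 < Real.sin (s j) := fun j hj =>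
    Real.sin_pos_of_pos_of_lt_pi (hs_pos j hj) (hs_lt_pi j hj)
  have hsicc : ∀ j, j < n → s j ∈ Set.Icc 0 Real.pi := fun j hj =>
    ⟨le_of_lt (hs_pos j hj), le_of_lt (hs_lt_pi j hj)⟩
  have hinj : ∀ j ∈ Multiset.range n, ∀ j' ∈ Multiset.range n, s j = s j' → j = j' := by
    intro j hj j' hj' hss
    rw [Multiset.mem_range] at hj hj'
    by_contra hne
    rcases Nat.lt_or_ge j j' with h | h
    · exact absurd hss (ne_of_lt (hs_mono j j' h hj'))
    · have : j' < j := by omega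
      exact absurd hss.symm (ne_of_lt (hs_mono j' j this hj))
  have hrootf : ∀ j, j < n → f j ∈ (Qp n q).roots := by
    intro j hj
    rw [Polynomial.mem_roots']
    refine ⟨Qp_ne_zero n q hn hq', ?_⟩
    show (Qp n q).eval (f j) = 0
    rw [hf]
    show (Qp n q).eval (Complex.exp (((s j : ℝ):ℂ) * I)) = 0
    rw [Qp_eval_expR, (hs j hj).2]
    simp
  have hrootg : ∀ j, j < n → g j ∈ (Qp n q).roots := by
    intro j hj
    rw [Polynomial.mem_roots']
    refine ⟨Qp_ne_zero n q hn hq', ?_⟩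
    show (Qp n q).eval (g j) = 0
    rw [hg]
    show (Qp n q).eval (Complex.exp (((-(s j) : ℝ):ℂ) * I)) = 0
    rw [Qp_eval_expR, fr_neg, (hs j hj).2]
    simp
  intro r hr
  by_contra habs
  set M : Multiset ℂ := (Multiset.range n).map f + (Multiset.range n).map g with hM
  have hMnodup : M.Nodup := by
    rw [hM, Multiset.nodup_add]
    refine ⟨?_, ?_, ?_⟩
    · apply Multiset.Nodup.map_on ?_ (Multiset.nodup_range n)
      intro j hj j' hj' hfj
      apply hinj j hj j' hj'
      have : Real.cos (s j) = Real.cos (s j') := by rw [← hfre, ← hfre, hfj]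
      exact Real.injOn_cos (hsicc j (Multiset.mem_range.mp hj))
        (hsicc j' (Multiset.mem_range.mp hj')) this
    · apply Multiset.Nodup.map_on ?_ (Multiset.nodup_range n)
      intro j hj j' hj' hgj
      apply hinj j hj j' hj'
      have : Real.cos (s j) = Real.cos (s j') := by rw [← hgre, ← hgre, hgj]
      exact Real.injOn_cos (hsicc j (Multiset.mem_range.mp hj))
        (hsicc j' (Multiset.mem_range.mp hj')) this
    · rw [Multiset.disjoint_left]
      intro a haf hag
      obtain ⟨j, hj, rfl⟩ := Multiset.mem_map.mp haf
      obtain ⟨j', hj', hgj⟩ := Multiset.mem_map.mp hag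
      have h1 : 0 < (f j).im := by rw [hfim]; exact hsinpos j (Multiset.mem_range.mp hj)
      have h2 : (f j).im < 0 := by
        rw [← hgj, hgim]
        have := hsinpos j' (Multiset.mem_range.mp hj')
        linarith
      linarith
  have hMsub : ∀ a ∈ M, a ∈ (Qp n q).roots := by
    intro a ha
    rw [hM, Multiset.mem_add] at ha
    rcases ha with ha | ha
    · obtain ⟨j, hj, rfl⟩ := Multiset.mem_map.mp ha
      exact hrootf j (Multiset.mem_range.mp hj)
    · obtain ⟨j, hj, rfl⟩ := Multiset.mem_map.mp ha
      exact hrootg j (Multiset.mem_range.mp hj)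
  have hrM : r ∉ M := by
    intro hrM
    rcases Multiset.mem_add.mp hrM with ha | ha
    · obtain ⟨j, hj, rfl⟩ := Multiset.mem_map.mp ha
      exact habs (habsf j)
    · obtain ⟨j, hj, rfl⟩ := Multiset.mem_map.mp ha
      exact habs (habsg j)
  set M' : Multiset ℂ := r ::ₘ M with hM'
  have hM'nodup : M'.Nodup := Multiset.nodup_cons.mpr ⟨hrM, hMnodup⟩
  have hM'sub : ∀ a ∈ M', a ∈ (Qp n q).roots := by
    intro a ha
    rcases Multiset.mem_cons.mp ha with rfl | ha
    · exact hr
    · exact hMsub a ha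
  have hle : M' ≤ (Qp n q).roots := by
    rw [Multiset.le_iff_count]
    intro a
    by_cases ha : a ∈ M'
    · rw [Multiset.count_eq_one_of_mem hM'nodup ha]
      exact Multiset.count_pos.mpr (hM'sub a ha)
    · rw [Multiset.count_eq_zero_of_notMem ha]
      exact Nat.zero_le _
  have hcard : Multiset.card M' ≤ Multiset.card (Qp n q).roots :=
    Multiset.card_le_card hle
  have hcardM' : Multiset.card M' = 2*n+1 := by
    rw [hM', Multiset.card_cons, hM, Multiset.card_add]
    simp
    omega
  have hcardroots : Multiset.card (Qp n q).roots ≤ 2*n := by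
    rw [← Qp_natDegree n q hn hq']
    exact Polynomial.card_roots' _
  omega

lemma Qp_eval_perturb (n : ℕ) (p : ℕ → ℝ) (ε : ℝ) (w : ℂ) :
    (Qp n (fun k => p k + ε)).eval w
      = (Qp n p).eval w + (ε:ℂ) * (w^n + ∑ k ∈ Finset.Icc 1 n, (w^(n+k) + w^(n-k))) := by
  rw [Qp_eval, Qp_eval]
  have h : ∀ k ∈ Finset.Icc 1 n, (((fun k => p k + ε) k : ℝ):ℂ) * (w^(n+k)+w^(n-k))
      = (p k:ℂ)*(w^(n+k)+w^(n-k)) + (ε:ℂ)*(w^(n+k)+w^(n-k)) := by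
    intro k hk; push_cast; ring
  rw [Finset.sum_congr rfl h, Finset.sum_add_distrib, ← Finset.mul_sum]
  push_cast
  ring

lemma no_zero_upper (n : ℕ) (p : ℕ → ℝ) (hn : 1 ≤ n)
    (hnonneg : ∀ k, 0 ≤ p k) (h0 : p 0 ≤ 2 * p 1)
    (hmono : ∀ k l : ℕ, 1 ≤ k → k ≤ l → l ≤ n → p k ≤ p l) (hpn : 0 < p n)
    (z : ℂ) (hz : 0 < z.im) :
    ((p 0:ℂ) + ∑ k ∈ Finset.Icc 1 n, 2 * (p k:ℂ) * Complex.cos ((k:ℂ)*z)) ≠ 0 := by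
  intro hzero
  set w : ℂ := Complex.exp (z * I) with hw
  have habs : ‖w‖ = Real.exp (-z.im) := by
    rw [hw, Complex.norm_exp, Complex.mul_I_re]
  have habslt : ‖w‖ < 1 := by
    rw [habs]; exact Real.exp_lt_one_iff.mpr (by linarith)
  have hQ0 : (Qp n p).eval w = 0 := by
    rw [hw, Qp_eval_expC, hzero, mul_zero]
  have hdpos : 0 < 1 - ‖w‖ := by linarith
  set Rv : ℂ := w^n + ∑ k ∈ Finset.Icc 1 n, (w^(n+k) + w^(n-k)) with hRv
  have key : ∀ ε : ℝ, 0 < ε → p n * (1 - ‖w‖)^(2*n) ≤ ε * ‖Rv‖ := by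
    intro ε hε
    have hq1 : |(fun k => p k + ε) 0 - (fun k => p k + ε) 1| < (fun k => p k + ε) 1 := by
      simp only
      rw [abs_lt]
      constructor
      · nlinarith [hnonneg 0, hnonneg 1]
      · nlinarith [hnonneg 0, hnonneg 1]
    have hqmono : ∀ k, 1 ≤ k → k < n → (fun k => p k + ε) k ≤ (fun k => p k + ε) (k+1) := by
      intro k h1 h2; simp only
      have := hmono k (k+1) h1 (by omega) (by omega)
      linarith
    have hqn : 0 < (fun k => p k + ε) n := by simp only; linarith [hnonneg n]
    have honcircle := roots_on_circle n (fun k => p k + ε) hn hq1 hqmono hqn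
    have hlow := eval_lower n (fun k => p k + ε) hn hqn honcircle w (le_of_lt habslt)
    have heval : (Qp n (fun k => p k + ε)).eval w = (ε:ℂ) * Rv := by
      rw [Qp_eval_perturb, hQ0, zero_add, hRv]
    rw [heval] at hlow
    calc p n * (1 - ‖w‖)^(2*n)
        ≤ (p n + ε) * (1 - ‖w‖)^(2*n) := by
          apply mul_le_mul_of_nonneg_right (by linarith) (by positivity)
      _ ≤ ‖((ε:ℂ) * Rv)‖ := hlow
      _ = ε * ‖Rv‖ := by rw [norm_mul, Complex.norm_real, Real.norm_eq_abs, abs_of_pos hε]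
  have hRnn : 0 ≤ ‖Rv‖ := norm_nonneg _
  set c : ℝ := p n * (1 - ‖w‖)^(2*n) with hc
  have hcpos : 0 < c := by rw [hc]; positivity
  set ε : ℝ := c / (‖Rv‖ + 1) with hε
  have hεpos : 0 < ε := by rw [hε]; positivity
  have hB := key ε hεpos
  have hid : ε * (‖Rv‖ + 1) = c := by
    rw [hε]; field_simp
  linarith

/-- Eneström–Kakeya type result: if `p 0 + 2∑_{k=1}^n p k = 1`, the `p k` are
nonnegative and `(1/2) p 0 ≤ p 1 ≤ … ≤ p n`, then the entire function
`z ↦ p 0 + ∑_{k=1}^n 2 p k cos(kz)` has only real zeros. -/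
theorem stmt17 (n : ℕ) (p : ℕ → ℝ) (hnonneg : ∀ k, 0 ≤ p k)
    (hsum : p 0 + 2 * ∑ k ∈ Finset.Icc 1 n, p k = 1)
    (h0 : (1 / 2) * p 0 ≤ p 1)
    (hmono : ∀ k l : ℕ, 1 ≤ k → k ≤ l → l ≤ n → p k ≤ p l) :
    ∀ z : ℂ,
      ((p 0 : ℂ) + ∑ k ∈ Finset.Icc 1 n, 2 * (p k : ℂ) * Complex.cos (k * z)) = 0 →
        z.im = 0 := by
  intro z hz
  by_contra him
  rcases Nat.eq_zero_or_pos n with hn0 | hn1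
  · subst hn0
    simp at hz hsum
    rw [hsum] at hz
    simp at hz
  rcases le_or_gt (p n) 0 with hpn | hpn
  · have hpn0 : p n = 0 := le_antisymm hpn (hnonneg n)
    have hall : ∀ k ∈ Finset.Icc 1 n, p k = 0 := by
      intro k hk
      obtain ⟨hk1, hk2⟩ := Finset.mem_Icc.mp hk
      have := hmono k n hk1 hk2 le_rfl
      linarith [hnonneg k]
    have hsum0 : ∑ k ∈ Finset.Icc 1 n, p k = 0 := Finset.sum_eq_zero hall
    have hp01 : p 0 = 1 := by rw [hsum0] at hsum; linarith
    have hzz : ((p 0:ℂ)) = 0 := by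
      rw [← hz]
      rw [Finset.sum_eq_zero fun k hk => by rw [hall k hk]; simp]
      ring
    rw [hp01] at hzz
    simp at hzz
  · have h0' : p 0 ≤ 2 * p 1 := by linarith
    rcases lt_trichotomy z.im 0 with hlt | heq | hgt
    · apply no_zero_upper n p hn1 hnonneg h0' hmono hpn (-z) (by simp; linarith)
      calc (p 0:ℂ) + ∑ k ∈ Finset.Icc 1 n, 2*(p k:ℂ)*Complex.cos ((k:ℂ)*(-z))
          = (p 0:ℂ) + ∑ k ∈ Finset.Icc 1 n, 2*(p k:ℂ)*Complex.cos ((k:ℂ)*z) := by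
            congr 1
            exact Finset.sum_congr rfl fun k hk => by rw [mul_neg, Complex.cos_neg]
        _ = 0 := hz
    · exact him heq
    · exact no_zero_upper n p hn1 hnonneg h0' hmono hpn z hgt hz
end
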